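/- arXiv:math/0606541 — 11 statements merged into one kernel-verified Lean document; each statement's English description precedes it below -/
import Mathlib

section
/- Let M be a complex normed space, let L : M → M be a bounded linear map with ‖L‖ ≤ 1, and let (N, α, E) be a reversible lift of L. Then for every bounded linear functional ρ on M the sequence of norms ‖ρ ∘ L^k‖, k = 0, 1, 2, …, is nonincreasing (so its limit exists), and ‖ρ ∘ E‖ ≤ lim_{k→∞} ‖ρ ∘ L^k‖. -/
/-!
Iterating the intertwining relation gives `E ∘ α^k = L^k ∘ E`. As `α^k` is a surjective
isometry, every `y` equals `α^k x` with `‖x‖ = ‖y‖`, so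
`|ρ (E y)| = |ρ (L^k (E x))| ≤ ‖ρ ∘ L^k‖ ‖E‖ ‖y‖`.
-/

open Function ContinuousLinearMap

section

variable {𝕜 M N F : Type*} [NontriviallyNormedField 𝕜]
  [SeminormedAddCommGroup M] [NormedSpace 𝕜 M] [SeminormedAddCommGroup N] [NormedSpace 𝕜 N]
  [SeminormedAddCommGroup F] [NormedSpace 𝕜 F]

theorem antitone_opNorm_comp_pow {L : M →L[𝕜] M} (hL : ‖L‖ ≤ 1) (φ : M →L[𝕜] F) :
    Antitone fun k : ℕ => ‖φ.comp (L ^ k)‖ :=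
  antitone_nat_of_succ_le fun k => calc
    ‖φ.comp (L ^ (k + 1))‖ = ‖(φ.comp (L ^ k)).comp L‖ := by
      rw [pow_succ, mul_def, ContinuousLinearMap.comp_assoc]
    _ ≤ ‖φ.comp (L ^ k)‖ * ‖L‖ := opNorm_comp_le _ _
    _ ≤ ‖φ.comp (L ^ k)‖ := mul_le_of_le_one_right (norm_nonneg _) hL

theorem semiconj_pow_of_semiconj {α : N ≃ₗᵢ[𝕜] N} {E : N →L[𝕜] M} {L : M →L[𝕜] M}
    (h : Semiconj E α L) (k : ℕ) : Semiconj E ⇑(α ^ k) ⇑(L ^ k) := by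
  induction k with
  | zero => exact .id_right
  | succ k ih =>
    rw [pow_succ, pow_succ, LinearIsometryEquiv.coe_mul]
    exact ih.comp_right h

theorem opNorm_comp_le_of_semiconj (α : N ≃ₗᵢ[𝕜] N) {E : N →L[𝕜] M} {T : M →L[𝕜] M}
    (h : Semiconj E α T) (φ : M →L[𝕜] F) : ‖φ.comp E‖ ≤ ‖φ.comp T‖ * ‖E‖ :=
  opNorm_le_bound _ (by positivity) fun y => calc
    ‖φ (E y)‖ = ‖(φ.comp T) (E (α.symm y))‖ := by
      rw [ContinuousLinearMap.comp_apply, ← h, α.apply_symm_apply]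
    _ ≤ ‖φ.comp T‖ * ‖E (α.symm y)‖ := le_opNorm _ _
    _ ≤ ‖φ.comp T‖ * (‖E‖ * ‖α.symm y‖) := by gcongr; exact le_opNorm _ _
    _ = ‖φ.comp T‖ * ‖E‖ * ‖y‖ := by rw [α.symm.norm_map, mul_assoc]

end

/-- Let `M` be a complex normed space, `L : M → M` a bounded linear
map with `‖L‖ ≤ 1`, and `(N, α, E)` a reversible lift of `L` (i.e. `α` is a surjective
linear isometry of the normed space `N`, `E : N → M` is linear with `‖E‖ ≤ 1`, and
`E ∘ α = L ∘ E`).  Then for every bounded linear functional `ρ` on `M` the sequence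
`k ↦ ‖ρ ∘ L^k‖` is nonincreasing (hence converges, to its infimum), and
`‖ρ ∘ E‖ ≤ lim_k ‖ρ ∘ L^k‖`. -/
theorem stmt0 {M N : Type*} [NormedAddCommGroup M] [NormedSpace ℂ M]
    [NormedAddCommGroup N] [NormedSpace ℂ N]
    (L : M →L[ℂ] M) (hL : ‖L‖ ≤ 1)
    (α : N ≃ₗᵢ[ℂ] N) (E : N →L[ℂ] M) (hE : ‖E‖ ≤ 1)
    (hEq : ∀ y : N, E (α y) = L (E y))
    (ρ : M →L[ℂ] ℂ) :
    Antitone (fun k : ℕ => ‖ρ.comp (L ^ k)‖) ∧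
    Filter.Tendsto (fun k : ℕ => ‖ρ.comp (L ^ k)‖) Filter.atTop
      (nhds (⨅ k : ℕ, ‖ρ.comp (L ^ k)‖)) ∧
    ‖ρ.comp E‖ ≤ ⨅ k : ℕ, ‖ρ.comp (L ^ k)‖ := by
  have hanti := antitone_opNorm_comp_pow hL ρ
  have hbdd : BddBelow (Set.range fun k : ℕ => ‖ρ.comp (L ^ k)‖) :=
    ⟨0, Set.forall_mem_range.2 fun _ => norm_nonneg _⟩
  refine ⟨hanti, tendsto_atTop_ciInf hanti hbdd, le_ciInf fun k => ?_⟩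
  calc ‖ρ.comp E‖ ≤ ‖ρ.comp (L ^ k)‖ * ‖E‖ :=
        opNorm_comp_le_of_semiconj (α ^ k) (semiconj_pow_of_semiconj hEq k) ρ
    _ ≤ ‖ρ.comp (L ^ k)‖ := mul_le_of_le_one_right (norm_nonneg _) hE
end

section
/- Let M⋆ and N⋆ be complex Banach spaces with continuous duals M and N, let L : M → M and E : N → M be normal linear maps with ‖L‖ ≤ 1 and ‖E‖ ≤ 1, and let α : N → N be a surjective linear isometry satisfying E ∘ α = L ∘ E. Then the following are equivalent: (i) for every ρ ∈ M⋆, ‖ρ ∘ E‖ = lim_{n→∞} ‖ρ ∘ L^n‖; (ii) E(ball N) = ∩_{n≥0} L^n(ball M). -/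
/-!
Write `K n = Lⁿ(ball M)`. Since `α` maps `ball N` onto itself and `E ∘ α = L ∘ E`, the set
`E(ball N)` is mapped onto itself by `L`, so it lies in every `K n`; as `‖L‖ ≤ 1` the `K n`
decrease. For `ρ ∈ M⋆`, `‖ρ ∘ Lⁿ‖` and `‖ρ ∘ E‖` are the suprema of `|x ρ|` over `K n` and
over `E(ball N)`, hence `‖ρ ∘ E‖ ≤ lim ‖ρ ∘ Lⁿ‖` always.

(i) ⇒ (ii): if `x ∈ ⋂ K n` then `|x ρ| ≤ ‖ρ ∘ E‖ ≤ ‖Eₚ ρ‖` for all `ρ`, where `Eₚ` is the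
predual map of `E`; by Hahn–Banach the functional `Eₚ ρ ↦ x ρ` extends to some `y ∈ ball N`,
and then `E y = x`.

(ii) ⇒ (i): the `K n` are weak*-compact (Banach–Alaoglu and normality of `L`), so if
`r < ‖ρ ∘ Lⁿ‖` for all `n`, Cantor's intersection theorem yields `x ∈ ⋂ K n = E(ball N)` with
`r ≤ |x ρ| ≤ ‖ρ ∘ E‖`.
-/

open Filter Metric Set ContinuousLinearMap

section UnitBall

variable {𝕜 X Y F G : Type*} [RCLike 𝕜] [NormedAddCommGroup X] [NormedSpace 𝕜 X]
  [NormedAddCommGroup Y] [NormedSpace 𝕜 Y] [NormedAddCommGroup F] [NormedSpace 𝕜 F]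
  [NormedAddCommGroup G] [NormedSpace 𝕜 G]

theorem image_closedBall_subset_closedBall {T : X →L[𝕜] F} (hT : ‖T‖ ≤ 1) :
    T '' closedBall 0 1 ⊆ closedBall 0 1 := by
  rintro _ ⟨x, hx, rfl⟩
  rw [mem_closedBall_zero_iff] at hx ⊢
  simpa using T.le_of_opNorm_le_of_le hT hx

theorem norm_apply_le_norm_comp_of_mem_image_closedBall (φ : F →L[𝕜] G) {T : Y →L[𝕜] F}
    {x : F} (hx : x ∈ T '' closedBall 0 1) : ‖φ x‖ ≤ ‖φ.comp T‖ := by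
  obtain ⟨y, hy, rfl⟩ := hx
  simpa using (φ.comp T).le_opNorm_of_le (mem_closedBall_zero_iff.1 hy)

theorem norm_comp_le_of_image_closedBall_subset (φ : F →L[𝕜] G) {S : X →L[𝕜] F}
    {T : Y →L[𝕜] F} (h : S '' closedBall 0 1 ⊆ T '' closedBall 0 1) :
    ‖φ.comp S‖ ≤ ‖φ.comp T‖ :=
  opNorm_le_of_unit_norm (norm_nonneg _) fun x hx =>
    norm_apply_le_norm_comp_of_mem_image_closedBall φ (h ⟨x, by simp [hx], rfl⟩)

theorem antitone_pow_image_closedBall {L : G →L[𝕜] G} (hL : ‖L‖ ≤ 1) :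
    Antitone fun n : ℕ => (L ^ n) '' closedBall (0 : G) 1 := by
  simpa only [FunLike.coe_pow_eq_iterate, image_iterate_eq] using
    monotone_image.antitone_iterate_of_map_le (image_closedBall_subset_closedBall hL)

theorem image_closedBall_subset_pow_image_closedBall {E : Y →L[𝕜] G} {L : G →L[𝕜] G}
    (α : Y ≃ₗᵢ[𝕜] Y) (hE : ‖E‖ ≤ 1) (hEL : ∀ y, E (α y) = L (E y)) (n : ℕ) :
    E '' closedBall 0 1 ⊆ (L ^ n) '' closedBall 0 1 := by
  have hsurj : SurjOn L (E '' closedBall 0 1) (E '' closedBall 0 1) := by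
    rintro _ ⟨y, hy, rfl⟩
    refine ⟨E (α.symm y), mem_image_of_mem E (by simpa using hy), ?_⟩
    rw [← hEL, α.apply_symm_apply]
  rw [FunLike.coe_pow_eq_iterate]
  exact (hsurj.iterate n).trans (image_mono (image_closedBall_subset_closedBall hE))

end UnitBall

theorem nonempty_iInter_inter_of_antitone_isCompact {Z : Type*} [TopologicalSpace Z]
    [T2Space Z] {K : ℕ → Set Z} (hK : Antitone K) (hKc : ∀ n, IsCompact (K n)) {C : Set Z}
    (hC : IsClosed C) (hne : ∀ n, (K n ∩ C).Nonempty) : ((⋂ n, K n) ∩ C).Nonempty := by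
  rw [iInter_inter]
  exact IsCompact.nonempty_iInter_of_sequence_nonempty_isCompact_isClosed _
    (fun n => inter_subset_inter_left _ (hK n.le_succ)) hne ((hKc 0).inter_right hC)
    fun n => (hKc n).isClosed.inter hC

section Normal

variable {𝕜 X Y : Type*} [RCLike 𝕜] [NormedAddCommGroup X] [NormedSpace 𝕜 X]
  [NormedAddCommGroup Y] [NormedSpace 𝕜 Y]

theorem pow_apply_apply_eq_apply_pow {L : StrongDual 𝕜 X →L[𝕜] StrongDual 𝕜 X}
    {Lp : X →L[𝕜] X} (hL : ∀ x ρ, L x ρ = x (Lp ρ)) (n : ℕ) (x : StrongDual 𝕜 X) (ρ : X) :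
    (L ^ n) x ρ = x ((Lp ^ n) ρ) := by
  induction n generalizing x ρ with
  | zero => rfl
  | succ n ih => rw [pow_succ', mul_apply_eq_comp, hL, ih, pow_succ, mul_apply_eq_comp]

theorem continuous_toWeakDual_comp_toStrongDual {T : StrongDual 𝕜 Y →L[𝕜] StrongDual 𝕜 X}
    {Tp : X →L[𝕜] Y} (hT : ∀ y ρ, T y ρ = y (Tp ρ)) :
    Continuous fun y : WeakDual 𝕜 Y => StrongDual.toWeakDual (T (WeakDual.toStrongDual y)) :=
  WeakDual.continuous_of_continuous_eval fun ρ => by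
    simpa only [StrongDual.toWeakDual_apply, WeakDual.toStrongDual_apply, hT] using
      WeakDual.eval_continuous (Tp ρ)

theorem isCompact_toStrongDual_preimage_image_closedBall
    {T : StrongDual 𝕜 Y →L[𝕜] StrongDual 𝕜 X} {Tp : X →L[𝕜] Y}
    (hT : ∀ y ρ, T y ρ = y (Tp ρ)) :
    IsCompact (WeakDual.toStrongDual ⁻¹' (T '' closedBall 0 1)) := by
  -- `toWeakDual` and `toStrongDual` are the identity on the underlying functionals.
  have himage : WeakDual.toStrongDual ⁻¹' (T '' closedBall 0 1) =
      (fun y : WeakDual 𝕜 Y => StrongDual.toWeakDual (T (WeakDual.toStrongDual y))) ''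
        (WeakDual.toStrongDual ⁻¹' closedBall 0 1) := rfl
  rw [himage]
  exact (WeakDual.isCompact_closedBall 0 1).image (continuous_toWeakDual_comp_toStrongDual hT)

theorem exists_mem_iInter_pow_image_closedBall_le_norm_apply
    {L : StrongDual 𝕜 X →L[𝕜] StrongDual 𝕜 X} {Lp : X →L[𝕜] X}
    (hL : ∀ x ρ, L x ρ = x (Lp ρ)) (hLn : ‖L‖ ≤ 1) (ρ : X) {r : ℝ}
    (hr : ∀ n, r < ‖(apply 𝕜 𝕜 ρ).comp (L ^ n)‖) :
    ∃ x ∈ ⋂ n : ℕ, (L ^ n) '' closedBall 0 1, r ≤ ‖x ρ‖ := by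
  obtain ⟨x, hx, hxr⟩ := nonempty_iInter_inter_of_antitone_isCompact
    (K := fun n => WeakDual.toStrongDual ⁻¹' ((L ^ n) '' closedBall 0 1))
    (fun m n hmn => preimage_mono (antitone_pow_image_closedBall hLn hmn))
    (fun n => isCompact_toStrongDual_preimage_image_closedBall
      (pow_apply_apply_eq_apply_pow hL n))
    (C := {x | r ≤ ‖x ρ‖}) (isClosed_le continuous_const (WeakDual.eval_continuous ρ).norm)
    fun n => by
      obtain ⟨z, hz, hzr⟩ := exists_lt_apply_of_lt_opNorm _ (hr n)
      exact ⟨StrongDual.toWeakDual ((L ^ n) z), ⟨z, mem_closedBall_zero_iff.2 hz.le, rfl⟩,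
        hzr.le⟩
  exact ⟨WeakDual.toStrongDual x, by rwa [← preimage_iInter] at hx, hxr⟩

theorem exists_norm_le_one_comp_eq_of_norm_apply_le (f : X →L[𝕜] Y) (x : StrongDual 𝕜 X)
    (hx : ∀ ρ, ‖x ρ‖ ≤ ‖f ρ‖) : ∃ y : StrongDual 𝕜 Y, ‖y‖ ≤ 1 ∧ y.comp f = x := by
  let f' : X →ₗ[𝕜] Y := f
  have hker : LinearMap.ker f' ≤ LinearMap.ker (x : X →ₗ[𝕜] 𝕜) := fun ρ hρ => by
    have : f ρ = 0 := hρ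
    simpa [this] using hx ρ
  let g : LinearMap.range f' →ₗ[𝕜] 𝕜 :=
    (LinearMap.ker f').liftQ x hker ∘ₗ f'.quotKerEquivRange.symm.toLinearMap
  have hg : ∀ ρ, g ⟨f' ρ, LinearMap.mem_range_self f' ρ⟩ = x ρ := fun ρ => by
    simp only [g, LinearMap.comp_apply, LinearEquiv.coe_coe,
      LinearMap.quotKerEquivRange_symm_apply_image, Submodule.mkQ_apply, Submodule.liftQ_apply]
    rfl
  have hgb : ∀ v, ‖g v‖ ≤ 1 * ‖v‖ := by
    rintro ⟨_, ρ, rfl⟩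
    rw [one_mul, hg]
    exact hx ρ
  obtain ⟨y, hyg, hy⟩ := exists_extension_norm_eq _ (g.mkContinuous 1 hgb)
  refine ⟨y, hy ▸ LinearMap.mkContinuous_norm_le g zero_le_one hgb, ext fun ρ => ?_⟩
  exact (hyg ⟨f' ρ, LinearMap.mem_range_self f' ρ⟩).trans (hg ρ)

theorem mem_image_closedBall_of_forall_norm_apply_le
    {E : StrongDual 𝕜 Y →L[𝕜] StrongDual 𝕜 X} {Ep : X →L[𝕜] Y}
    (hE : ∀ y ρ, E y ρ = y (Ep ρ)) {x : StrongDual 𝕜 X}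
    (hx : ∀ ρ, ‖x ρ‖ ≤ ‖(apply 𝕜 𝕜 ρ).comp E‖) : x ∈ E '' closedBall 0 1 := by
  have hEp : ∀ ρ, ‖(apply 𝕜 𝕜 ρ).comp E‖ ≤ ‖Ep ρ‖ := fun ρ =>
    opNorm_le_bound _ (norm_nonneg _) fun y => by
      simpa [hE, mul_comm] using y.le_opNorm (Ep ρ)
  obtain ⟨y, hy, hyx⟩ :=
    exists_norm_le_one_comp_eq_of_norm_apply_le Ep x fun ρ => (hx ρ).trans (hEp ρ)
  exact ⟨y, mem_closedBall_zero_iff.2 hy, ext fun ρ => by rw [hE, ← hyx, comp_apply]⟩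

end Normal

theorem stmt2_general {Mstar Nstar : Type*}
    [NormedAddCommGroup Mstar] [NormedSpace ℂ Mstar]
    [NormedAddCommGroup Nstar] [NormedSpace ℂ Nstar]
    (L : (Mstar →L[ℂ] ℂ) →L[ℂ] (Mstar →L[ℂ] ℂ))
    (hLnormal : ∃ Lp : Mstar →L[ℂ] Mstar,
      ∀ (x : Mstar →L[ℂ] ℂ) (ρ : Mstar), L x ρ = x (Lp ρ))
    (hLnorm : ‖L‖ ≤ 1)
    (E : (Nstar →L[ℂ] ℂ) →L[ℂ] (Mstar →L[ℂ] ℂ))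
    (hEnormal : ∃ Ep : Mstar →L[ℂ] Nstar,
      ∀ (y : Nstar →L[ℂ] ℂ) (ρ : Mstar), E y ρ = y (Ep ρ))
    (hEnorm : ‖E‖ ≤ 1)
    (α : (Nstar →L[ℂ] ℂ) ≃ₗᵢ[ℂ] (Nstar →L[ℂ] ℂ))
    (hEq : ∀ y : Nstar →L[ℂ] ℂ, E (α y) = L (E y)) :
    (∀ ρ : Mstar,
        Filter.Tendsto
          (fun n : ℕ => ‖(ContinuousLinearMap.apply ℂ ℂ ρ).comp (L ^ n)‖)
          Filter.atTop
          (nhds ‖(ContinuousLinearMap.apply ℂ ℂ ρ).comp E‖))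
      ↔ (E '' Metric.closedBall 0 1 = ⋂ n : ℕ, (L ^ n) '' Metric.closedBall 0 1) := by
  obtain ⟨Lp, hLp⟩ := hLnormal
  obtain ⟨Ep, hEp⟩ := hEnormal
  have hsub := image_closedBall_subset_pow_image_closedBall α hEnorm hEq
  constructor
  · intro hlim
    refine Subset.antisymm (subset_iInter hsub) fun x hx =>
      mem_image_closedBall_of_forall_norm_apply_le hEp fun ρ =>
        ge_of_tendsto' (hlim ρ) fun n =>
          norm_apply_le_norm_comp_of_mem_image_closedBall (apply ℂ ℂ ρ) (mem_iInter.1 hx n)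
  · intro hset ρ
    have hanti : Antitone fun n => ‖(apply ℂ ℂ ρ).comp (L ^ n)‖ := fun _ _ hmn =>
      norm_comp_le_of_image_closedBall_subset _ (antitone_pow_image_closedBall hLnorm hmn)
    have hbdd : BddBelow (range fun n => ‖(apply ℂ ℂ ρ).comp (L ^ n)‖) :=
      ⟨0, forall_mem_range.2 fun _ => opNorm_nonneg _⟩
    convert tendsto_atTop_ciInf hanti hbdd using 2
    refine le_antisymm (le_ciInf fun n => norm_comp_le_of_image_closedBall_subset _ (hsub n))
      (le_of_forall_lt_imp_le_of_dense fun r hr => ?_)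
    obtain ⟨x, hx, hxr⟩ := exists_mem_iInter_pow_image_closedBall_le_norm_apply hLp hLnorm ρ
      fun n => hr.trans_le (ciInf_le hbdd n)
    rw [← hset] at hx
    exact hxr.trans (norm_apply_le_norm_comp_of_mem_image_closedBall (apply ℂ ℂ ρ) hx)

/-- Let `M⋆`, `N⋆` be complex Banach spaces with continuous duals
`M = M⋆ →L[ℂ] ℂ` and `N = N⋆ →L[ℂ] ℂ`.  Let `L : M → M`, `E : N → M` be normal
(= weak*-continuous, equivalently adjoints of bounded maps of the preduals) linear maps
with `‖L‖ ≤ 1`, `‖E‖ ≤ 1`, and let `α : N → N` be a surjective linear isometry with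
`E ∘ α = L ∘ E`.  Then the following are equivalent:
(i) for every `ρ ∈ M⋆`, `‖ρ ∘ E‖ = lim_n ‖ρ ∘ L^n‖` (the sequence `‖ρ ∘ L^n‖` is
nonincreasing, so this is expressed as a `Tendsto`);
(ii) `E(ball N) = ⋂_{n ≥ 0} L^n(ball M)`. -/
theorem stmt2 {Mstar Nstar : Type*}
    [NormedAddCommGroup Mstar] [NormedSpace ℂ Mstar] [CompleteSpace Mstar]
    [NormedAddCommGroup Nstar] [NormedSpace ℂ Nstar] [CompleteSpace Nstar]
    (L : (Mstar →L[ℂ] ℂ) →L[ℂ] (Mstar →L[ℂ] ℂ))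
    (hLnormal : ∃ Lp : Mstar →L[ℂ] Mstar,
      ∀ (x : Mstar →L[ℂ] ℂ) (ρ : Mstar), L x ρ = x (Lp ρ))
    (hLnorm : ‖L‖ ≤ 1)
    (E : (Nstar →L[ℂ] ℂ) →L[ℂ] (Mstar →L[ℂ] ℂ))
    (hEnormal : ∃ Ep : Mstar →L[ℂ] Nstar,
      ∀ (y : Nstar →L[ℂ] ℂ) (ρ : Mstar), E y ρ = y (Ep ρ))
    (hEnorm : ‖E‖ ≤ 1)
    (α : (Nstar →L[ℂ] ℂ) ≃ₗᵢ[ℂ] (Nstar →L[ℂ] ℂ))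
    (hEq : ∀ y : Nstar →L[ℂ] ℂ, E (α y) = L (E y)) :
    (∀ ρ : Mstar,
        Filter.Tendsto
          (fun n : ℕ => ‖(ContinuousLinearMap.apply ℂ ℂ ρ).comp (L ^ n)‖)
          Filter.atTop
          (nhds ‖(ContinuousLinearMap.apply ℂ ℂ ρ).comp E‖))
      ↔ (E '' Metric.closedBall 0 1 = ⋂ n : ℕ, (L ^ n) '' Metric.closedBall 0 1) :=
  stmt2_general L hLnormal hLnorm E hEnormal hEnorm α hEq
end

section
/- Let M⋆ and N⋆ be complex Banach spaces with continuous duals M and N, let L : M → M and E : N → M be normal linear maps with ‖L‖ ≤ 1 and ‖E‖ ≤ 1, and let α : N → N be a surjective linear isometry such that both α and α⁻¹ are normal and E ∘ α = L ∘ E. Suppose that ‖ρ ∘ E‖ = lim_{n→∞} ‖ρ ∘ L^n‖ for every ρ ∈ M⋆. Let K = {z ∈ N : E(α^k(z)) = 0 for all k ∈ ℤ}. Then for every y ∈ N, sup_{k∈ℤ} ‖E(α^k(y))‖ = inf_{z∈K} ‖y + z‖. -/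
/-!
Everything is transported to the preduals: `α`, `L`, `E` are the adjoints of an isometric
automorphism `A` of `N⋆` and of maps `Lp`, `Ep` with `A ∘ Ep = Ep ∘ Lp`, and the asymptotic
hypothesis reads `‖Ep τ‖ = lim ‖Lp^m τ‖`. Let `p` be the supremum of `‖E (α^k y)‖`, i.e. the best
constant in `|y (A^k (Ep ρ))| ≤ p ‖ρ‖`. Every vector `x` of the span of the orbit vectors
`A^k (Ep ρ)` satisfies `A^n x = Ep τ` for some `n ≥ 0`, hence `x = A^(-n-m) (Ep (Lp^m τ))` for all
`m`, so `|y x| ≤ p ‖Lp^m τ‖ → p ‖Ep τ‖ = p ‖x‖`. By Hahn–Banach, `y` restricted to this span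
extends to a functional `g` with `‖g‖ ≤ p`, and `g - y` lies in `K`. The opposite inequality
holds because `E ∘ α^k` has norm at most one and vanishes on `K`.
-/

open Filter Topology

section Preadjoint

variable {𝕜 E F : Type*} [RCLike 𝕜] [NormedAddCommGroup E] [NormedSpace 𝕜 E]
  [NormedAddCommGroup F] [NormedSpace 𝕜 F]

theorem norm_apply_comp_of_preadjoint {T : StrongDual 𝕜 F →L[𝕜] StrongDual 𝕜 E} {t : E →L[𝕜] F}
    (h : ∀ y ρ, T y ρ = y (t ρ)) (ρ : E) :
    ‖(ContinuousLinearMap.apply 𝕜 𝕜 ρ).comp T‖ = ‖t ρ‖ := by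
  have : (ContinuousLinearMap.apply 𝕜 𝕜 ρ).comp T = NormedSpace.inclusionInDoubleDualLi 𝕜 (t ρ) :=
    ContinuousLinearMap.ext fun y => h y ρ
  rw [this, LinearIsometry.norm_map]

theorem norm_apply_le_of_preadjoint {T : StrongDual 𝕜 F →L[𝕜] StrongDual 𝕜 E} {t : E →L[𝕜] F}
    (h : ∀ y ρ, T y ρ = y (t ρ)) (ρ : E) : ‖t ρ‖ ≤ ‖T‖ * ‖ρ‖ := by
  refine NormedSpace.norm_le_dual_bound 𝕜 _ (by positivity) fun f => ?_
  rw [← h]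
  calc ‖T f ρ‖ ≤ ‖T f‖ * ‖ρ‖ := (T f).le_opNorm ρ
    _ ≤ ‖T‖ * ‖f‖ * ‖ρ‖ := by gcongr; exact T.le_opNorm f
    _ = ‖T‖ * ‖ρ‖ * ‖f‖ := by ring

theorem pow_apply_apply_of_preadjoint {T : StrongDual 𝕜 E →L[𝕜] StrongDual 𝕜 E} {t : E →L[𝕜] E}
    (h : ∀ y ρ, T y ρ = y (t ρ)) (n : ℕ) (y : StrongDual 𝕜 E) (ρ : E) :
    (T ^ n) y ρ = y ((t ^ n) ρ) := by
  induction n generalizing y with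
  | zero => rfl
  | succ n ih =>
    rw [pow_succ, mul_apply_eq_comp, ih, h, pow_succ', mul_apply_eq_comp]

theorem norm_apply_le_of_isometric_preadjoint (α : StrongDual 𝕜 F ≃ₗᵢ[𝕜] StrongDual 𝕜 E)
    {a : E →L[𝕜] F} (ha : ∀ y ρ, α y ρ = y (a ρ)) (ρ : E) : ‖a ρ‖ ≤ ‖ρ‖ :=
  (norm_apply_le_of_preadjoint (T := α.toLinearIsometry.toContinuousLinearMap) ha ρ).trans
    (mul_le_of_le_one_left (norm_nonneg ρ) α.toLinearIsometry.norm_toContinuousLinearMap_le)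

theorem exists_linearIsometryEquiv_preadjoint (α : StrongDual 𝕜 F ≃ₗᵢ[𝕜] StrongDual 𝕜 E)
    {a : E →L[𝕜] F} {b : F →L[𝕜] E} (ha : ∀ y ρ, α y ρ = y (a ρ))
    (hb : ∀ y ρ, α.symm y ρ = y (b ρ)) : ∃ A : E ≃ₗᵢ[𝕜] F, ∀ y ρ, α y ρ = y (A ρ) := by
  have hba : ∀ ρ, b (a ρ) = ρ := fun ρ =>
    SeparatingDual.eq_iff_forall_dual_eq.mpr fun f => by rw [← hb, ← ha, α.apply_symm_apply]
  have hab : ∀ ρ, a (b ρ) = ρ := fun ρ =>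
    SeparatingDual.eq_iff_forall_dual_eq.mpr fun f => by rw [← ha, ← hb, α.symm_apply_apply]
  have hanorm (ρ : E) : ‖a ρ‖ = ‖ρ‖ := by
    refine le_antisymm (norm_apply_le_of_isometric_preadjoint α ha ρ) ?_
    calc ‖ρ‖ = ‖b (a ρ)‖ := by rw [hba]
      _ ≤ ‖a ρ‖ := norm_apply_le_of_isometric_preadjoint α.symm hb (a ρ)
  exact ⟨⟨(ContinuousLinearEquiv.equivOfInverse a b hba hab).toLinearEquiv, hanorm⟩, ha⟩

variable {α : StrongDual 𝕜 E ≃ₗᵢ[𝕜] StrongDual 𝕜 E} {A : E ≃ₗᵢ[𝕜] E}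

theorem inv_apply_apply_of_preadjoint (h : ∀ y ρ, α y ρ = y (A ρ)) (y : StrongDual 𝕜 E) (ρ : E) :
    α⁻¹ y ρ = y (A⁻¹ ρ) := by
  conv_rhs => rw [← α.apply_symm_apply y, h, LinearIsometryEquiv.coe_inv, A.apply_symm_apply]
  rfl

theorem zpow_apply_apply_of_preadjoint (h : ∀ y ρ, α y ρ = y (A ρ)) (k : ℤ)
    (y : StrongDual 𝕜 E) (ρ : E) : (α ^ k) y ρ = y ((A ^ k) ρ) := by
  have hpow (n : ℕ) : ∀ y ρ, (α ^ n) y ρ = y ((A ^ n) ρ) := by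
    induction n with
    | zero => exact fun _ _ => rfl
    | succ n ih =>
      intro y ρ
      rw [pow_succ, LinearIsometryEquiv.coe_mul, Function.comp_apply, ih, h, pow_succ',
        LinearIsometryEquiv.coe_mul, Function.comp_apply]
  cases k with
  | ofNat n => exact hpow n y ρ
  | negSucc n => exact inv_apply_apply_of_preadjoint (hpow (n + 1)) y ρ

end Preadjoint

section Orbit

variable {𝕜 E F : Type*} [RCLike 𝕜] [NormedAddCommGroup E] [NormedSpace 𝕜 E]
  [NormedAddCommGroup F] [NormedSpace 𝕜 F] (A : F ≃ₗᵢ[𝕜] F) {Ep : E →L[𝕜] F} {Lp : E →L[𝕜] E}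

theorem pow_apply_of_semiconj (hsemi : Function.Semiconj Ep Lp A) (n : ℕ) (τ : E) :
    (A ^ n) (Ep τ) = Ep ((Lp ^ n) τ) := by
  induction n with
  | zero => rfl
  | succ n ih =>
    rw [pow_succ', LinearIsometryEquiv.coe_mul, Function.comp_apply, ih, ← hsemi, pow_succ',
      mul_apply_eq_comp]

def orbitSpan (Ep : E →L[𝕜] F) : Submodule 𝕜 F :=
  Submodule.span 𝕜 (Set.range fun p : ℤ × E => (A ^ p.1) (Ep p.2))

theorem zpow_apply_mem_orbitSpan (k : ℤ) (ρ : E) : (A ^ k) (Ep ρ) ∈ orbitSpan A Ep :=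
  Submodule.subset_span ⟨(k, ρ), rfl⟩

theorem exists_pow_apply_eq_of_mem_orbitSpan (hsemi : Function.Semiconj Ep Lp A) {x : F}
    (hx : x ∈ orbitSpan A Ep) :
    ∃ (n : ℕ) (τ : E), (A ^ n) x = Ep τ := by
  have hcomp (n : ℕ) (k : ℤ) (v : F) : (A ^ n) ((A ^ k) v) = (A ^ (n + k)) v := by
    rw [zpow_add, zpow_natCast]; rfl
  induction hx using Submodule.span_induction with
  | mem x hx =>
    obtain ⟨⟨k, ρ⟩, rfl⟩ := hx
    refine ⟨(-k).toNat, (Lp ^ k.toNat) ρ, ?_⟩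
    rw [hcomp, show ((-k).toNat + k : ℤ) = k.toNat by omega, zpow_natCast,
      pow_apply_of_semiconj A hsemi]
  | zero => exact ⟨0, 0, by simp⟩
  | add u v _ _ hu hv =>
    obtain ⟨n, τ, hn⟩ := hu
    obtain ⟨m, σ, hm⟩ := hv
    refine ⟨m + n, (Lp ^ m) τ + (Lp ^ n) σ, ?_⟩
    rw [map_add, map_add, ← pow_apply_of_semiconj A hsemi, ← pow_apply_of_semiconj A hsemi, ← hn,
      ← hm, pow_add]
    nth_rw 2 [pow_mul_comm]
    rfl
  | smul c u _ hu =>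
    obtain ⟨n, τ, hn⟩ := hu
    exact ⟨n, c • τ, by rw [map_smul, hn, map_smul]⟩

theorem norm_apply_le_of_mem_orbitSpan (hsemi : Function.Semiconj Ep Lp A)
    (hlim : ∀ τ, Tendsto (fun m : ℕ => ‖(Lp ^ m) τ‖) atTop (𝓝 ‖Ep τ‖))
    {y : StrongDual 𝕜 F} {p : ℝ} (hy : ∀ (k : ℤ) ρ, ‖y ((A ^ k) (Ep ρ))‖ ≤ p * ‖ρ‖) {x : F}
    (hx : x ∈ orbitSpan A Ep) : ‖y x‖ ≤ p * ‖x‖ := by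
  obtain ⟨n, τ, hn⟩ := exists_pow_apply_eq_of_mem_orbitSpan A hsemi hx
  have hx_eq (m : ℕ) : x = (A ^ (-((m + n : ℕ) : ℤ))) (Ep ((Lp ^ m) τ)) := by
    rw [zpow_neg, zpow_natCast, LinearIsometryEquiv.coe_inv, LinearIsometryEquiv.eq_symm_apply,
      pow_add, LinearIsometryEquiv.coe_mul, Function.comp_apply, hn, pow_apply_of_semiconj A hsemi]
  have hbound (m : ℕ) : ‖y x‖ ≤ p * ‖(Lp ^ m) τ‖ := by
    rw [hx_eq m]
    exact hy _ _
  have := ge_of_tendsto' ((hlim τ).const_mul p) hbound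
  rwa [← hn, LinearIsometryEquiv.norm_map] at this

theorem exists_extension_norm_le_of_orbit (hsemi : Function.Semiconj Ep Lp A)
    (hlim : ∀ τ, Tendsto (fun m : ℕ => ‖(Lp ^ m) τ‖) atTop (𝓝 ‖Ep τ‖))
    (y : StrongDual 𝕜 F) {p : ℝ} (hp : 0 ≤ p)
    (hy : ∀ (k : ℤ) ρ, ‖y ((A ^ k) (Ep ρ))‖ ≤ p * ‖ρ‖) :
    ∃ g : StrongDual 𝕜 F, ‖g‖ ≤ p ∧ ∀ (k : ℤ) ρ, g ((A ^ k) (Ep ρ)) = y ((A ^ k) (Ep ρ)) := by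
  obtain ⟨g, hg, hgn⟩ :=
    exists_extension_norm_eq (orbitSpan A Ep) (y.comp (orbitSpan A Ep).subtypeL)
  refine ⟨g, hgn.trans_le (ContinuousLinearMap.opNorm_le_bound _ hp fun x => ?_),
    fun k ρ => hg ⟨_, zpow_apply_mem_orbitSpan A k ρ⟩⟩
  exact norm_apply_le_of_mem_orbitSpan A hsemi hlim hy x.2

end Orbit

theorem stmt3_general {Mstar Nstar : Type*}
    [NormedAddCommGroup Mstar] [NormedSpace ℂ Mstar]
    [NormedAddCommGroup Nstar] [NormedSpace ℂ Nstar]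
    (L : (Mstar →L[ℂ] ℂ) →L[ℂ] (Mstar →L[ℂ] ℂ))
    (hLnormal : ∃ Lp : Mstar →L[ℂ] Mstar,
      ∀ (x : Mstar →L[ℂ] ℂ) (ρ : Mstar), L x ρ = x (Lp ρ))
    (E : (Nstar →L[ℂ] ℂ) →L[ℂ] (Mstar →L[ℂ] ℂ))
    (hEnormal : ∃ Ep : Mstar →L[ℂ] Nstar,
      ∀ (y : Nstar →L[ℂ] ℂ) (ρ : Mstar), E y ρ = y (Ep ρ))
    (hEnorm : ‖E‖ ≤ 1)
    (α : (Nstar →L[ℂ] ℂ) ≃ₗᵢ[ℂ] (Nstar →L[ℂ] ℂ))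
    (hαnormal : ∃ a : Nstar →L[ℂ] Nstar,
      ∀ (y : Nstar →L[ℂ] ℂ) (ρ : Nstar), α y ρ = y (a ρ))
    (hαinvnormal : ∃ b : Nstar →L[ℂ] Nstar,
      ∀ (y : Nstar →L[ℂ] ℂ) (ρ : Nstar), α.symm y ρ = y (b ρ))
    (hEq : ∀ y : Nstar →L[ℂ] ℂ, E (α y) = L (E y))
    (hAsym : ∀ ρ : Mstar,
      Filter.Tendsto
        (fun n : ℕ => ‖(ContinuousLinearMap.apply ℂ ℂ ρ).comp (L ^ n)‖)
        Filter.atTop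
        (nhds ‖(ContinuousLinearMap.apply ℂ ℂ ρ).comp E‖))
    (y : Nstar →L[ℂ] ℂ) :
    (⨆ k : ℤ, ‖E ((α ^ k) y)‖) =
      ⨅ z : {z : Nstar →L[ℂ] ℂ // ∀ k : ℤ, E ((α ^ k) z) = 0}, ‖y + (z : Nstar →L[ℂ] ℂ)‖ := by
  obtain ⟨Lp, hLp⟩ := hLnormal
  obtain ⟨Ep, hEp⟩ := hEnormal
  obtain ⟨A, hA⟩ := exists_linearIsometryEquiv_preadjoint α hαnormal.choose_spec
    hαinvnormal.choose_spec
  have hαA := zpow_apply_apply_of_preadjoint hA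
  have hsemi : Function.Semiconj Ep Lp A := fun ρ =>
    SeparatingDual.eq_iff_forall_dual_eq.mpr fun f => by rw [← hEp, ← hLp, ← hEq, hEp, hA]
  have hlim (τ : Mstar) : Tendsto (fun m : ℕ => ‖(Lp ^ m) τ‖) atTop (𝓝 ‖Ep τ‖) := by
    simpa only [norm_apply_comp_of_preadjoint hEp,
      norm_apply_comp_of_preadjoint (pow_apply_apply_of_preadjoint hLp _)] using hAsym τ
  have hEα (k : ℤ) (w : Nstar →L[ℂ] ℂ) : ‖E ((α ^ k) w)‖ ≤ ‖w‖ :=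
    (E.le_of_opNorm_le hEnorm _).trans_eq (by rw [one_mul, LinearIsometryEquiv.norm_map])
  have hbdd : BddAbove (Set.range fun k : ℤ => ‖E ((α ^ k) y)‖) :=
    ⟨‖y‖, Set.forall_mem_range.2 fun k => hEα k y⟩
  have : Nonempty {z : Nstar →L[ℂ] ℂ // ∀ k : ℤ, E ((α ^ k) z) = 0} := ⟨⟨0, by simp⟩⟩
  refine le_antisymm (ciSup_le fun k => le_ciInf fun z => ?_) ?_
  · simpa [z.2 k] using hEα k (y + z)
  obtain ⟨g, hg, hgy⟩ := exists_extension_norm_le_of_orbit A hsemi hlim y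
    (le_ciSup_of_le hbdd 0 (norm_nonneg _)) fun k ρ => by
      rw [← hαA, ← hEp]
      exact ((E _).le_opNorm ρ).trans (by gcongr; exact le_ciSup hbdd k)
  have hK (k : ℤ) : E ((α ^ k) (g - y)) = 0 := by
    ext ρ
    simp [hEp, hαA, hgy]
  exact (ciInf_le ⟨0, Set.forall_mem_range.2 fun _ => norm_nonneg _⟩ ⟨g - y, hK⟩).trans
    (by simpa using hg)

/-- With `M`, `N` duals of complex Banach spaces `M⋆`, `N⋆`, let
`L : M → M`, `E : N → M` be normal linear maps with `‖L‖ ≤ 1`, `‖E‖ ≤ 1`, and let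
`α : N → N` be a surjective linear isometry such that `α` and `α⁻¹` are normal and
`E ∘ α = L ∘ E`.  Assume `‖ρ ∘ E‖ = lim_n ‖ρ ∘ L^n‖` for every `ρ ∈ M⋆`.  Let
`K = {z ∈ N : E(α^k z) = 0 for all k ∈ ℤ}`.  Then for every `y ∈ N`,
`sup_{k ∈ ℤ} ‖E(α^k y)‖ = inf_{z ∈ K} ‖y + z‖`. -/
theorem stmt3 {Mstar Nstar : Type*}
    [NormedAddCommGroup Mstar] [NormedSpace ℂ Mstar] [CompleteSpace Mstar]
    [NormedAddCommGroup Nstar] [NormedSpace ℂ Nstar] [CompleteSpace Nstar]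
    (L : (Mstar →L[ℂ] ℂ) →L[ℂ] (Mstar →L[ℂ] ℂ))
    (hLnormal : ∃ Lp : Mstar →L[ℂ] Mstar,
      ∀ (x : Mstar →L[ℂ] ℂ) (ρ : Mstar), L x ρ = x (Lp ρ))
    (hLnorm : ‖L‖ ≤ 1)
    (E : (Nstar →L[ℂ] ℂ) →L[ℂ] (Mstar →L[ℂ] ℂ))
    (hEnormal : ∃ Ep : Mstar →L[ℂ] Nstar,
      ∀ (y : Nstar →L[ℂ] ℂ) (ρ : Mstar), E y ρ = y (Ep ρ))
    (hEnorm : ‖E‖ ≤ 1)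
    (α : (Nstar →L[ℂ] ℂ) ≃ₗᵢ[ℂ] (Nstar →L[ℂ] ℂ))
    (hαnormal : ∃ a : Nstar →L[ℂ] Nstar,
      ∀ (y : Nstar →L[ℂ] ℂ) (ρ : Nstar), α y ρ = y (a ρ))
    (hαinvnormal : ∃ b : Nstar →L[ℂ] Nstar,
      ∀ (y : Nstar →L[ℂ] ℂ) (ρ : Nstar), α.symm y ρ = y (b ρ))
    (hEq : ∀ y : Nstar →L[ℂ] ℂ, E (α y) = L (E y))
    (hAsym : ∀ ρ : Mstar,
      Filter.Tendsto
        (fun n : ℕ => ‖(ContinuousLinearMap.apply ℂ ℂ ρ).comp (L ^ n)‖)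
        Filter.atTop
        (nhds ‖(ContinuousLinearMap.apply ℂ ℂ ρ).comp E‖))
    (y : Nstar →L[ℂ] ℂ) :
    (⨆ k : ℤ, ‖E ((α ^ k) y)‖) =
      ⨅ z : {z : Nstar →L[ℂ] ℂ // ∀ k : ℤ, E ((α ^ k) z) = 0}, ‖y + (z : Nstar →L[ℂ] ℂ)‖ :=
  stmt3_general L hLnormal E hEnormal hEnorm α hαnormal hαinvnormal hEq hAsym y
end

section
/- Let M⋆ be a complex Banach space with continuous dual M, and let L : M → M be a normal linear map with ‖L‖ ≤ 1. Then every x ∈ ∩_{n≥0} L^n(ball M) is the initial term of an inverse sequence lying in ball M: there exists a bilateral sequence (x_n)_{n∈ℤ} in M with ‖x_n‖ ≤ 1 for all n, x_0 = x, and x_n = L(x_{n+1}) for all n ∈ ℤ. Consequently E₀(ball S_L) = ∩_{n≥0} L^n(ball M). -/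
/-!
A point of `⋂ₙ Lⁿ(ball M)` has, for every `N`, a backward orbit of length `N` inside the ball.
Since `L` is normal, it is continuous for the weak-* topology, in which the ball is compact
(Banach–Alaoglu); the sets of finite backward orbits in the product of countably many copies of
the ball are then a decreasing sequence of nonempty compact sets, and any point of their
intersection is an infinite backward orbit. The forward part of the inverse sequence is the orbit
`Lᵐ x`, which stays in the ball since `‖L‖ ≤ 1`.
-/

open Function Set Metric

section BackwardOrbit

variable {X : Type*} {f : X → X} {K : Set X}

theorem exists_nat_backward_orbit [TopologicalSpace X] [T2Space X] (hf : Continuous f)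
    (hK : IsCompact K) (hfK : MapsTo f K K) {x : X} (hx : ∀ n, x ∈ f^[n] '' K) :
    ∃ y : ℕ → X, (∀ n, y n ∈ K) ∧ y 0 = x ∧ ∀ n, y n = f (y (n + 1)) := by
  let t : ℕ → Set (ℕ → X) := fun N =>
    univ.pi (fun _ => K) ∩ {y | y 0 = x} ∩ ⋂ n < N, {y | y n = f (y (n + 1))}
  have ht_closed : ∀ N, IsClosed (t N) := fun N =>
    ((isClosed_set_pi fun _ _ => hK.isClosed).inter
      (isClosed_eq (continuous_apply 0) continuous_const)).inter
      (isClosed_biInter fun n _ =>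
        isClosed_eq (continuous_apply n) (hf.comp (continuous_apply (n + 1))))
  have ht_nonempty : ∀ N, (t N).Nonempty := by
    intro N
    obtain ⟨z, hzK, rfl⟩ := hx N
    refine ⟨fun n => f^[N - n] z, ⟨fun n _ => hfK.iterate _ hzK, rfl⟩, ?_⟩
    refine mem_iInter₂.2 fun n hn => ?_
    change f^[N - n] z = f (f^[N - (n + 1)] z)
    rw [show N - n = N - (n + 1) + 1 by omega, iterate_succ_apply']
  obtain ⟨y, hy⟩ := IsCompact.nonempty_iInter_of_sequence_nonempty_isCompact_isClosed t
    (fun N y hy => ⟨hy.1, mem_iInter₂.2 fun n hn => mem_iInter₂.1 hy.2 n (by omega)⟩)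
    ht_nonempty
    ((isCompact_univ_pi fun _ => hK).of_isClosed_subset (ht_closed 0) fun y hy => hy.1.1)
    ht_closed
  simp only [mem_iInter] at hy
  exact ⟨y, fun n => (hy 0).1.1 n trivial, (hy 0).1.2,
    fun n => mem_iInter₂.1 (hy (n + 1)).2 n n.lt_succ_self⟩

theorem exists_int_backward_orbit_of_nat (hfK : MapsTo f K K) {y : ℕ → X} (hyK : ∀ n, y n ∈ K)
    (hy : ∀ n, y n = f (y (n + 1))) :
    ∃ xs : ℤ → X, (∀ n, xs n ∈ K) ∧ xs 0 = y 0 ∧ ∀ n, xs n = f (xs (n + 1)) := by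
  refine ⟨fun | .ofNat k => y k | .negSucc k => f^[k + 1] (y 0), ?_, rfl, ?_⟩
  · rintro (k | k)
    · exact hyK k
    · exact hfK.iterate _ (hyK 0)
  · rintro (k | _ | k)
    · exact hy k
    · rfl
    · exact iterate_succ_apply' f (k + 1) (y 0)

theorem exists_int_backward_orbit [TopologicalSpace X] [T2Space X] (hf : Continuous f)
    (hK : IsCompact K) (hfK : MapsTo f K K) {x : X} (hx : ∀ n, x ∈ f^[n] '' K) :
    ∃ xs : ℤ → X, (∀ n, xs n ∈ K) ∧ xs 0 = x ∧ ∀ n, xs n = f (xs (n + 1)) := by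
  obtain ⟨y, hyK, rfl, hy⟩ := exists_nat_backward_orbit hf hK hfK hx
  exact exists_int_backward_orbit_of_nat hfK hyK hy

theorem iterate_backward_orbit_natCast {xs : ℤ → X} (h : ∀ n, xs n = f (xs (n + 1))) (n : ℕ) :
    f^[n] (xs n) = xs 0 := by
  induction n with
  | zero => rfl
  | succ n ih => rw [iterate_succ_apply, ← ih, Nat.cast_succ, ← h]

end BackwardOrbit

section WeakStar

variable {𝕜 E : Type*} [NontriviallyNormedField 𝕜] [SeminormedAddCommGroup E] [NormedSpace 𝕜 E]

open WeakDual StrongDual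

theorem continuous_weakDual_of_eq_transpose {L : StrongDual 𝕜 E →L[𝕜] StrongDual 𝕜 E}
    {Lp : E →L[𝕜] E} (hL : ∀ x ρ, L x ρ = x (Lp ρ)) :
    Continuous fun x : WeakDual 𝕜 E => toWeakDual (L (toStrongDual x)) :=
  continuous_of_continuous_eval fun ρ => by
    simpa only [toWeakDual_apply, hL, toStrongDual_apply] using eval_continuous (Lp ρ)

theorem exists_inverse_sequence_of_mem_iInter_pow_image_closedBall [ProperSpace 𝕜]
    {L : StrongDual 𝕜 E →L[𝕜] StrongDual 𝕜 E}
    (hLnormal : ∃ Lp : E →L[𝕜] E, ∀ x ρ, L x ρ = x (Lp ρ)) (hLnorm : ‖L‖ ≤ 1) {r : ℝ}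
    {x : StrongDual 𝕜 E} (hx : x ∈ ⋂ n : ℕ, (L ^ n) '' closedBall 0 r) :
    ∃ xs : ℤ → StrongDual 𝕜 E, (∀ n, ‖xs n‖ ≤ r) ∧ xs 0 = x ∧ ∀ n, xs n = L (xs (n + 1)) := by
  obtain ⟨Lp, hLp⟩ := hLnormal
  let Lw : WeakDual 𝕜 E → WeakDual 𝕜 E := fun y => toWeakDual (L (toStrongDual y))
  have hsemiconj : Semiconj toWeakDual L Lw := fun _ => rfl
  have hmaps : MapsTo Lw (toStrongDual ⁻¹' closedBall 0 r) (toStrongDual ⁻¹' closedBall 0 r) :=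
    fun y hy => by
      simp only [mem_preimage, mem_closedBall_zero_iff] at hy ⊢
      exact (L.le_of_opNorm_le hLnorm _).trans (by simpa using hy)
  have hx' : ∀ n, toWeakDual x ∈ Lw^[n] '' (toStrongDual ⁻¹' closedBall 0 r) := by
    intro n
    obtain ⟨y, hy, hyx⟩ := mem_iInter.1 hx n
    refine ⟨toWeakDual y, hy, ?_⟩
    rw [← hsemiconj.iterate_right n, ← FunLike.coe_pow_eq_iterate, hyx]
  obtain ⟨xs, hK, h0, hrel⟩ := exists_int_backward_orbit (continuous_weakDual_of_eq_transpose hLp)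
    (isCompact_closedBall 0 r) hmaps hx'
  exact ⟨fun n => toStrongDual (xs n), fun n => mem_closedBall_zero_iff.1 (hK n),
    show toStrongDual (xs 0) = x by rw [h0, toStrongDual_toWeakDual], fun n => congrArg toStrongDual (hrel n)⟩

end WeakStar

set_option synthInstance.maxHeartbeats 400000 in
theorem stmt4_general {Mstar : Type*}
    [NormedAddCommGroup Mstar] [NormedSpace ℂ Mstar]
    (L : (Mstar →L[ℂ] ℂ) →L[ℂ] (Mstar →L[ℂ] ℂ))
    (hLnormal : ∃ Lp : Mstar →L[ℂ] Mstar,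
      ∀ (x : Mstar →L[ℂ] ℂ) (ρ : Mstar), L x ρ = x (Lp ρ))
    (hLnorm : ‖L‖ ≤ 1) :
    (∀ x ∈ ⋂ n : ℕ, (L ^ n) '' Metric.closedBall 0 1,
      ∃ xs : ℤ → (Mstar →L[ℂ] ℂ),
        (∀ n : ℤ, ‖xs n‖ ≤ 1) ∧ xs 0 = x ∧ ∀ n : ℤ, xs n = L (xs (n + 1))) ∧
    ((fun xs : ℤ → (Mstar →L[ℂ] ℂ) => xs 0) ''
        {xs | (∀ n : ℤ, xs n = L (xs (n + 1))) ∧ ∀ n : ℤ, ‖xs n‖ ≤ 1}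
      = ⋂ n : ℕ, (L ^ n) '' Metric.closedBall 0 1) := by
  have hexists := fun x (hx : x ∈ ⋂ n : ℕ, (L ^ n) '' closedBall 0 1) =>
    exists_inverse_sequence_of_mem_iInter_pow_image_closedBall hLnormal hLnorm hx
  refine ⟨hexists, Subset.antisymm ?_ fun x hx => ?_⟩
  · rintro _ ⟨xs, ⟨hrel, hnorm⟩, rfl⟩
    refine mem_iInter.2 fun n => ⟨xs n, mem_closedBall_zero_iff.2 (hnorm n), ?_⟩
    rw [FunLike.coe_pow_eq_iterate, iterate_backward_orbit_natCast hrel]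
  · obtain ⟨xs, hnorm, h0, hrel⟩ := hexists x hx
    exact ⟨xs, ⟨hrel, hnorm⟩, h0⟩

/-- Let `M` be the continuous dual of a complex Banach space `M⋆` and
`L : M → M` a normal linear map with `‖L‖ ≤ 1`.  Then every
`x ∈ ⋂_{n ≥ 0} L^n(ball M)` is the initial term of an inverse sequence lying in
`ball M`: there is a bilateral sequence `(x_n)_{n ∈ ℤ}` with `‖x_n‖ ≤ 1`, `x_0 = x` and
`x_n = L(x_{n+1})` for all `n ∈ ℤ`.  Consequently, the image under the evaluation map
`E₀ : (x_n) ↦ x₀` of the unit ball of the space `S_L` of inverse sequences (the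
sequences with `‖x_n‖ ≤ 1` for all `n`) equals `⋂_{n ≥ 0} L^n(ball M)`. -/
theorem stmt4 {Mstar : Type*}
    [NormedAddCommGroup Mstar] [NormedSpace ℂ Mstar] [CompleteSpace Mstar]
    (L : (Mstar →L[ℂ] ℂ) →L[ℂ] (Mstar →L[ℂ] ℂ))
    (hLnormal : ∃ Lp : Mstar →L[ℂ] Mstar,
      ∀ (x : Mstar →L[ℂ] ℂ) (ρ : Mstar), L x ρ = x (Lp ρ))
    (hLnorm : ‖L‖ ≤ 1) :
    (∀ x ∈ ⋂ n : ℕ, (L ^ n) '' Metric.closedBall 0 1,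
      ∃ xs : ℤ → (Mstar →L[ℂ] ℂ),
        (∀ n : ℤ, ‖xs n‖ ≤ 1) ∧ xs 0 = x ∧ ∀ n : ℤ, xs n = L (xs (n + 1))) ∧
    ((fun xs : ℤ → (Mstar →L[ℂ] ℂ) => xs 0) ''
        {xs | (∀ n : ℤ, xs n = L (xs (n + 1))) ∧ ∀ n : ℤ, ‖xs n‖ ≤ 1}
      = ⋂ n : ℕ, (L ^ n) '' Metric.closedBall 0 1) :=
  stmt4_general L hLnormal hLnorm
end

section
/- Let M⋆ be a complex Banach space with continuous dual M, and let L : M → M be a normal linear map with ‖L‖ ≤ 1. Then the triple (S_L, σ, E₀) is a nondegenerate reversible lift of L with the asymptotic norm property; that is: σ is a surjective linear isometry of S_L; ‖E₀‖ ≤ 1 and E₀ ∘ σ = L ∘ E₀; if x ∈ S_L satisfies E₀(σ^{-n}(x)) = 0 for all integers n ≥ 0 then x = 0; and for every ρ ∈ M⋆, ‖ρ ∘ E₀‖ = lim_{k→∞} ‖ρ ∘ L^k‖. -/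
/-!
Apart from the asymptotic norm property everything is bookkeeping with the shift. The norms
`‖ρ ∘ L ^ k‖` decrease to their infimum `a`, and an inverse sequence in the unit ball has
`|x₀ ρ| = |(L ^ k x_k) ρ| ≤ ‖ρ ∘ L ^ k‖`, so the supremum is at most `a`. Conversely, Hahn–Banach
gives `m_k` in the unit ball with `|(L ^ k m_k) ρ| = ‖ρ ∘ L ^ k‖ ≥ a`, and `n ↦ L ^ (k - n) m_k`
satisfies the recursion up to index `k`. As `L` is weak*-continuous, these constraints are closed
in the product of weak*-compact unit balls (Banach–Alaoglu, Tychonoff), so by the finite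
intersection property some inverse sequence attains `a`.
-/

/-- The space `S_L` of inverse sequences of a map `L : M → M`: norm-bounded bilateral
sequences `(x_n)_{n ∈ ℤ}` with `x_n = L (x_{n+1})` for all `n`.  (It is a normed space
under the supremum norm `‖(x_n)‖ = ⨆ n, ‖x n‖`.) -/
def invSeqSet {M : Type*} [Norm M] (L : M → M) : Set (ℤ → M) :=
  {x | BddAbove (Set.range fun n => ‖x n‖) ∧ ∀ n : ℤ, x n = L (x (n + 1))}

/-- The shift `σ((x_n)_{n ∈ ℤ}) = (x_{n-1})_{n ∈ ℤ}` on bilateral sequences. -/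
def shiftSeq {M : Type*} (x : ℤ → M) : ℤ → M := fun n => x (n - 1)

open Filter Topology

section InverseSequence

variable {M : Type*}

theorem eq_iterate_apply_of_forall_eq_apply_succ (L : M → M) {x : ℤ → M}
    (hx : ∀ n, x n = L (x (n + 1))) (k : ℕ) (n : ℤ) : x n = L^[k] (x (n + k)) := by
  induction k with
  | zero => simp
  | succ k ih =>
    rw [ih, hx, Function.iterate_succ_apply]
    push_cast
    ring_nf

theorem eq_zero_of_forall_natCast_eq_zero [Zero M] {L : M → M} (hL : L 0 = 0) {x : ℤ → M}
    (hx : ∀ n, x n = L (x (n + 1))) (h0 : ∀ n : ℕ, x n = 0) : x = 0 := by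
  funext n
  obtain ⟨k, rfl | rfl⟩ := Int.eq_nat_or_neg n
  · exact h0 k
  · rw [eq_iterate_apply_of_forall_eq_apply_succ L hx k, neg_add_cancel, Pi.zero_apply]
    exact Function.iterate_fixed hL k ▸ congrArg _ (h0 0)

variable [Norm M] {L : M → M} {x : ℤ → M}

theorem shiftSeq_mem_invSeqSet (hx : x ∈ invSeqSet L) : shiftSeq x ∈ invSeqSet L := by
  refine ⟨hx.1.mono ?_, fun n => ?_⟩
  · rintro _ ⟨n, rfl⟩
    exact ⟨n - 1, rfl⟩
  · simpa [shiftSeq] using hx.2 (n - 1)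

theorem exists_mem_invSeqSet_shiftSeq_eq (hx : x ∈ invSeqSet L) :
    ∃ y ∈ invSeqSet L, shiftSeq y = x := by
  refine ⟨fun n => x (n + 1), ⟨hx.1.mono ?_, fun n => hx.2 (n + 1)⟩, ?_⟩
  · rintro _ ⟨n, rfl⟩
    exact ⟨n + 1, rfl⟩
  · funext n
    simp [shiftSeq]

theorem iSup_norm_shiftSeq (x : ℤ → M) : ⨆ n, ‖shiftSeq x n‖ = ⨆ n, ‖x n‖ :=
  (Equiv.subRight (1 : ℤ)).iSup_comp (g := fun n => ‖x n‖)

theorem norm_zero_le_iSup_of_mem_invSeqSet (hx : x ∈ invSeqSet L) : ‖x 0‖ ≤ ⨆ n, ‖x n‖ :=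
  le_ciSup hx.1 0

theorem shiftSeq_zero_of_mem_invSeqSet (hx : x ∈ invSeqSet L) : shiftSeq x 0 = L (x 0) := by
  simpa [shiftSeq] using hx.2 (-1)

end InverseSequence

section Contraction

variable {𝕜 E F : Type*} [NontriviallyNormedField 𝕜] [SeminormedAddCommGroup E]
  [SeminormedAddCommGroup F] [NormedSpace 𝕜 E] [NormedSpace 𝕜 F] {L : E →L[𝕜] E}

theorem norm_pow_apply_le (hL : ‖L‖ ≤ 1) (k : ℕ) (y : E) : ‖(L ^ k) y‖ ≤ ‖y‖ := by
  induction k with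
  | zero => simp
  | succ k ih =>
    rw [pow_succ', ContinuousLinearMap.mul_def, ContinuousLinearMap.comp_apply]
    exact L.le_of_opNorm_le hL _ |>.trans_eq (one_mul _) |>.trans ih

theorem antitone_norm_comp_pow (T : E →L[𝕜] F) (hL : ‖L‖ ≤ 1) :
    Antitone fun k : ℕ => ‖T.comp (L ^ k)‖ := by
  refine antitone_nat_of_succ_le fun k => ?_
  rw [pow_succ, ContinuousLinearMap.mul_def, ← ContinuousLinearMap.comp_assoc]
  exact (ContinuousLinearMap.opNorm_comp_le _ _).trans (mul_le_of_le_one_right (norm_nonneg _) hL)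

theorem norm_apply_le_norm_comp_pow_of_forall_eq_apply_succ (T : E →L[𝕜] F) {x : ℤ → E}
    (hx : ∀ n, x n = L (x (n + 1))) (k : ℕ) (hk : ‖x k‖ ≤ 1) : ‖T (x 0)‖ ≤ ‖T.comp (L ^ k)‖ :=
  calc ‖T (x 0)‖ = ‖T.comp (L ^ k) (x k)‖ := by
        rw [eq_iterate_apply_of_forall_eq_apply_succ L hx k 0, zero_add,
          ContinuousLinearMap.comp_apply, ← FunLike.coe_pow_eq_iterate]
    _ ≤ ‖T.comp (L ^ k)‖ :=
      (T.comp (L ^ k)).le_of_opNorm_le_of_le le_rfl hk |>.trans_eq (mul_one _)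

end Contraction

section NormalMap

variable {𝕜 E : Type*} [RCLike 𝕜] [NormedAddCommGroup E] [NormedSpace 𝕜 E]
  {L : StrongDual 𝕜 E →L[𝕜] StrongDual 𝕜 E} {Lp : E →L[𝕜] E}

theorem pow_apply_apply_eq_apply_pow_apply (hL : ∀ x ρ, L x ρ = x (Lp ρ)) (k : ℕ)
    (x : StrongDual 𝕜 E) (ρ : E) : (L ^ k) x ρ = x ((Lp ^ k) ρ) := by
  induction k generalizing x with
  | zero => rfl
  | succ k ih =>
    rw [pow_succ, pow_succ', ContinuousLinearMap.mul_def, ContinuousLinearMap.comp_apply, ih, hL]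
    rfl

theorem continuous_toWeakDual_apply_toStrongDual (hL : ∀ x ρ, L x ρ = x (Lp ρ)) :
    Continuous fun φ : WeakDual 𝕜 E => StrongDual.toWeakDual (L (WeakDual.toStrongDual φ)) :=
  WeakDual.continuous_of_continuous_eval fun ρ =>
    (WeakDual.eval_continuous (Lp ρ)).congr fun φ => (hL (WeakDual.toStrongDual φ) ρ).symm

/-- `ρ ∘ L ^ k` is evaluation at `(Lp ^ k) ρ`, whose norm Hahn–Banach attains on the unit ball. -/
theorem exists_norm_le_one_norm_apply_comp_pow_le (hL : ∀ x ρ, L x ρ = x (Lp ρ)) (ρ : E)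
    (k : ℕ) : ∃ m : StrongDual 𝕜 E, ‖m‖ ≤ 1 ∧
      ‖(ContinuousLinearMap.apply 𝕜 𝕜 ρ).comp (L ^ k)‖ ≤ ‖(L ^ k) m ρ‖ := by
  obtain ⟨m, hm1, hm⟩ := exists_dual_vector'' 𝕜 ((Lp ^ k) ρ)
  refine ⟨m, hm1, ContinuousLinearMap.opNorm_le_bound _ (norm_nonneg _) fun x => ?_⟩
  simp only [ContinuousLinearMap.comp_apply, ContinuousLinearMap.apply_apply,
    pow_apply_apply_eq_apply_pow_apply hL, hm, RCLike.norm_ofReal, abs_norm]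
  exact (x.le_opNorm _).trans_eq (mul_comm _ _)

theorem exists_forall_eq_apply_succ_norm_le_one_le_norm_apply (hL : ∀ x ρ, L x ρ = x (Lp ρ))
    (hL1 : ‖L‖ ≤ 1) (ρ : E) {a : ℝ}
    (ha : ∀ k : ℕ, ∃ m : StrongDual 𝕜 E, ‖m‖ ≤ 1 ∧ a ≤ ‖(L ^ k) m ρ‖) :
    ∃ x : ℤ → StrongDual 𝕜 E, (∀ n, x n = L (x (n + 1))) ∧ (∀ n, ‖x n‖ ≤ 1) ∧ a ≤ ‖x 0 ρ‖ := by
  let LW (φ : WeakDual 𝕜 E) : WeakDual 𝕜 E := StrongDual.toWeakDual (L (WeakDual.toStrongDual φ))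
  let ball : Set (ℤ → WeakDual 𝕜 E) :=
    Set.univ.pi fun _ => WeakDual.toStrongDual ⁻¹' Metric.closedBall 0 1
  let t (k : ℕ) : Set (ℤ → WeakDual 𝕜 E) :=
    ball ∩ {z | ∀ n : ℤ, n < k → z n = LW (z (n + 1))} ∩ {z | a ≤ ‖z 0 ρ‖}
  have hball : IsCompact ball := isCompact_univ_pi fun _ => WeakDual.isCompact_closedBall 0 1
  have htd (k : ℕ) : t (k + 1) ⊆ t k := fun z ⟨⟨hz1, hz⟩, hz0⟩ =>
    ⟨⟨hz1, fun n hn => hz n (by omega)⟩, hz0⟩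
  have htcl (k : ℕ) : IsClosed (t k) := by
    refine (hball.isClosed.inter ?_).inter ?_
    · simp only [Set.ofPred_forall]
      exact isClosed_iInter fun n => isClosed_iInter fun _ => isClosed_eq (continuous_apply n)
        ((continuous_toWeakDual_apply_toStrongDual hL).comp (continuous_apply (n + 1)))
    · exact isClosed_le continuous_const
        ((WeakDual.eval_continuous ρ).comp (continuous_apply 0)).norm
  have htn (k : ℕ) : (t k).Nonempty := by
    obtain ⟨m, hm1, hm⟩ := ha k
    refine ⟨fun n => StrongDual.toWeakDual ((L ^ (k - n).toNat) m),
      ⟨fun n _ => ?_, fun n hn => ?_⟩, ?_⟩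
    · simpa using (norm_pow_apply_le hL1 _ m).trans hm1
    · dsimp only
      rw [show (k - n).toNat = (k - (n + 1)).toNat + 1 by omega, pow_succ']
      rfl
    · simpa using hm
  obtain ⟨z, hz⟩ := IsCompact.nonempty_iInter_of_sequence_nonempty_isCompact_isClosed t htd htn
    (hball.of_isClosed_subset (htcl 0) fun _ hz => hz.1.1) htcl
  rw [Set.mem_iInter] at hz
  exact ⟨fun n => WeakDual.toStrongDual (z n), fun n => (hz (n.toNat + 1)).1.2 n (by omega),
    fun n => by simpa using (hz 0).1.1 n trivial, (hz 0).2⟩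

theorem tendsto_norm_apply_comp_pow (hL : ∀ x ρ, L x ρ = x (Lp ρ)) (hL1 : ‖L‖ ≤ 1) (ρ : E) :
    Tendsto (fun k : ℕ => ‖(ContinuousLinearMap.apply 𝕜 𝕜 ρ).comp (L ^ k)‖) atTop
      (𝓝 (sSup ((fun x : ℤ → StrongDual 𝕜 E => ‖x 0 ρ‖) ''
        {x | (∀ n, x n = L (x (n + 1))) ∧ ∀ n, ‖x n‖ ≤ 1}))) := by
  set T := ContinuousLinearMap.apply 𝕜 𝕜 ρ
  set S := (fun x : ℤ → StrongDual 𝕜 E => ‖x 0 ρ‖) ''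
    {x | (∀ n, x n = L (x (n + 1))) ∧ ∀ n, ‖x n‖ ≤ 1}
  have hbdd : BddBelow (Set.range fun k : ℕ => ‖T.comp (L ^ k)‖) :=
    ⟨0, by rintro _ ⟨k, rfl⟩; positivity⟩
  have hle {x : ℤ → StrongDual 𝕜 E} (hx : ∀ n, x n = L (x (n + 1))) (hx1 : ∀ n, ‖x n‖ ≤ 1) :
      ‖x 0 ρ‖ ≤ ⨅ k : ℕ, ‖T.comp (L ^ k)‖ :=
    le_ciInf fun k => norm_apply_le_norm_comp_pow_of_forall_eq_apply_succ T hx k (hx1 k)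
  obtain ⟨x, hx, hx1, hge⟩ := exists_forall_eq_apply_succ_norm_le_one_le_norm_apply hL hL1 ρ
    fun k => (exists_norm_le_one_norm_apply_comp_pow_le hL ρ k).imp
      fun _ hm => ⟨hm.1, (ciInf_le hbdd k).trans hm.2⟩
  have hmax : IsGreatest S (⨅ k : ℕ, ‖T.comp (L ^ k)‖) :=
    ⟨⟨x, ⟨hx, hx1⟩, (hle hx hx1).antisymm hge⟩, by rintro _ ⟨y, ⟨hy, hy1⟩, rfl⟩; exact hle hy hy1⟩
  rw [hmax.csSup_eq]
  exact tendsto_atTop_ciInf (antitone_norm_comp_pow T hL1) hbdd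

end NormalMap

theorem stmt5_general {Mstar : Type*}
    [NormedAddCommGroup Mstar] [NormedSpace ℂ Mstar]
    (L : (Mstar →L[ℂ] ℂ) →L[ℂ] (Mstar →L[ℂ] ℂ))
    (hLnormal : ∃ Lp : Mstar →L[ℂ] Mstar,
      ∀ (x : Mstar →L[ℂ] ℂ) (ρ : Mstar), L x ρ = x (Lp ρ))
    (hLnorm : ‖L‖ ≤ 1) :
    -- σ is linear …
    (∀ x y : ℤ → (Mstar →L[ℂ] ℂ), shiftSeq (x + y) = shiftSeq x + shiftSeq y) ∧
    (∀ (c : ℂ) (x : ℤ → (Mstar →L[ℂ] ℂ)), shiftSeq (c • x) = c • shiftSeq x) ∧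
    -- … mapping S_L onto S_L …
    (∀ x ∈ invSeqSet L, shiftSeq x ∈ invSeqSet L) ∧
    (∀ y ∈ invSeqSet L, ∃ x ∈ invSeqSet L, shiftSeq x = y) ∧
    -- … isometrically for the supremum norm:
    (∀ x ∈ invSeqSet L, (⨆ n : ℤ, ‖shiftSeq x n‖) = ⨆ n : ℤ, ‖x n‖) ∧
    -- ‖E₀‖ ≤ 1:
    (∀ x ∈ invSeqSet L, ‖x 0‖ ≤ ⨆ n : ℤ, ‖x n‖) ∧
    -- E₀ ∘ σ = L ∘ E₀:
    (∀ x ∈ invSeqSet L, shiftSeq x 0 = L (x 0)) ∧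
    -- nondegeneracy (note E₀(σ^{-n}(x)) = x n):
    (∀ x ∈ invSeqSet L, (∀ n : ℕ, x (n : ℤ) = 0) → x = 0) ∧
    -- the asymptotic norm property ‖ρ ∘ E₀‖ = lim_k ‖ρ ∘ L^k‖:
    (∀ ρ : Mstar,
      Filter.Tendsto
        (fun k : ℕ => ‖(ContinuousLinearMap.apply ℂ ℂ ρ).comp (L ^ k)‖)
        Filter.atTop
        (nhds (sSup ((fun x : ℤ → (Mstar →L[ℂ] ℂ) => ‖x 0 ρ‖) ''
          {x | (∀ n : ℤ, x n = L (x (n + 1))) ∧ ∀ n : ℤ, ‖x n‖ ≤ 1})))) := by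
  obtain ⟨Lp, hLp⟩ := hLnormal
  exact ⟨fun _ _ => rfl, fun _ _ => rfl, fun _ => shiftSeq_mem_invSeqSet,
    fun _ => exists_mem_invSeqSet_shiftSeq_eq, fun x _ => iSup_norm_shiftSeq x,
    fun _ => norm_zero_le_iSup_of_mem_invSeqSet, fun _ => shiftSeq_zero_of_mem_invSeqSet,
    fun _ hx => eq_zero_of_forall_natCast_eq_zero (map_zero L) hx.2,
    tendsto_norm_apply_comp_pow hLp hLnorm⟩

/-- Let `M` be the continuous dual of a complex Banach space `M⋆` and
`L : M → M` a normal linear map with `‖L‖ ≤ 1`.  Then `(S_L, σ, E₀)` — where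
`σ` is the shift and `E₀((x_n)) = x₀` — is a nondegenerate reversible lift of `L` with
the asymptotic norm property.  Explicitly: `σ` is a linear map of `S_L` onto itself
preserving the supremum norm (a surjective linear isometry); `E₀` is contractive,
i.e. `‖x₀‖ ≤ ⨆ n, ‖x n‖` (so `‖E₀‖ ≤ 1`); `E₀ ∘ σ = L ∘ E₀`; if `E₀(σ^{-n} x) = x n`
vanishes for all integers `n ≥ 0` then `x = 0`; and for every `ρ ∈ M⋆`,
`‖ρ ∘ L^k‖ → ‖ρ ∘ E₀‖` (the operator norm of `ρ ∘ E₀` being the supremum of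
`‖(x 0) ρ‖` over the unit ball of `S_L`). -/
theorem stmt5 {Mstar : Type*}
    [NormedAddCommGroup Mstar] [NormedSpace ℂ Mstar] [CompleteSpace Mstar]
    (L : (Mstar →L[ℂ] ℂ) →L[ℂ] (Mstar →L[ℂ] ℂ))
    (hLnormal : ∃ Lp : Mstar →L[ℂ] Mstar,
      ∀ (x : Mstar →L[ℂ] ℂ) (ρ : Mstar), L x ρ = x (Lp ρ))
    (hLnorm : ‖L‖ ≤ 1) :
    -- σ is linear …
    (∀ x y : ℤ → (Mstar →L[ℂ] ℂ), shiftSeq (x + y) = shiftSeq x + shiftSeq y) ∧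
    (∀ (c : ℂ) (x : ℤ → (Mstar →L[ℂ] ℂ)), shiftSeq (c • x) = c • shiftSeq x) ∧
    -- … mapping S_L onto S_L …
    (∀ x ∈ invSeqSet L, shiftSeq x ∈ invSeqSet L) ∧
    (∀ y ∈ invSeqSet L, ∃ x ∈ invSeqSet L, shiftSeq x = y) ∧
    -- … isometrically for the supremum norm:
    (∀ x ∈ invSeqSet L, (⨆ n : ℤ, ‖shiftSeq x n‖) = ⨆ n : ℤ, ‖x n‖) ∧
    -- ‖E₀‖ ≤ 1:
    (∀ x ∈ invSeqSet L, ‖x 0‖ ≤ ⨆ n : ℤ, ‖x n‖) ∧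
    -- E₀ ∘ σ = L ∘ E₀:
    (∀ x ∈ invSeqSet L, shiftSeq x 0 = L (x 0)) ∧
    -- nondegeneracy (note E₀(σ^{-n}(x)) = x n):
    (∀ x ∈ invSeqSet L, (∀ n : ℕ, x (n : ℤ) = 0) → x = 0) ∧
    -- the asymptotic norm property ‖ρ ∘ E₀‖ = lim_k ‖ρ ∘ L^k‖:
    (∀ ρ : Mstar,
      Filter.Tendsto
        (fun k : ℕ => ‖(ContinuousLinearMap.apply ℂ ℂ ρ).comp (L ^ k)‖)
        Filter.atTop
        (nhds (sSup ((fun x : ℤ → (Mstar →L[ℂ] ℂ) => ‖x 0 ρ‖) ''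
          {x | (∀ n : ℤ, x n = L (x (n + 1))) ∧ ∀ n : ℤ, ‖x n‖ ≤ 1})))) :=
  stmt5_general L hLnormal hLnorm
end

section
/- Let M⋆ and N⋆ be complex Banach spaces with continuous duals M and N, and let L : M → M be a normal linear map with ‖L‖ ≤ 1. Let (N, α, E) be a reversible lift of L such that E is normal with ‖E‖ ≤ 1, α is a surjective linear isometry with α and α⁻¹ normal, the lift is nondegenerate, and ‖ρ ∘ E‖ = lim_{n→∞} ‖ρ ∘ L^n‖ for every ρ ∈ M⋆. Then the map θ : N → S_L defined by θ(y) = (E(α^{-n}(y)))_{n∈ℤ} is a well-defined surjective linear isometry of N onto S_L satisfying θ ∘ α = σ ∘ θ and E₀ ∘ θ = E; moreover, θ is the unique linear map from N to S_L satisfying these two intertwining identities. -/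
/-- The comparison map `θ(y) = (E(α^{-n}(y)))_{n ∈ ℤ}` from `N` into bilateral
sequences. -/
def liftTheta {M N : Type*} [NormedAddCommGroup N] [NormedSpace ℂ N]
    (E : N → M) (α : N ≃ₗᵢ[ℂ] N) : N → ℤ → M :=
  fun y n => E ((α ^ (-n)) y)


/-!
Weak*-continuity gives preduals: `L = Lp*`, `E = Ep*`, `α⁻¹ = b*`, and `E ∘ α = L ∘ E` becomes
`b (Ep (Lp τ)) = Ep τ`. Hence `θ(y)ₙ(τ) = y (bⁿ (Ep τ))` for `n ≥ 0`, and the vectors `bⁿ (Ep τ)`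
form an increasing union of subspaces of `N⋆`, dense by nondegeneracy. The asymptotic condition
says `‖Lpᵐ τ‖ → ‖Ep τ‖`, so an inverse sequence `x` bounded by `C` satisfies
`‖xₙ τ‖ = ‖xₙ₊ₘ (Lpᵐ τ)‖ ≤ C ‖Lpᵐ τ‖ → C ‖Ep τ‖ = C ‖bⁿ (Ep τ)‖`.
For `x = θ(y)` and by density this gives `‖y‖ ≤ sup ‖θ(y)ₙ‖`; for a general `x` it makes
`bⁿ (Ep τ) ↦ xₙ τ` a well-defined functional of norm `≤ C` on that union, and its Hahn–Banach
extension `y` has `θ(y) = x`. Uniqueness: any `θ'` intertwining `α` with the shift has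
`θ'(y)ₙ = θ'(α⁻ⁿ y)₀`.
-/

open Filter Topology

section Duality

variable {𝕜 X Y : Type*} [RCLike 𝕜] [NormedAddCommGroup X] [NormedSpace 𝕜 X]
  [NormedAddCommGroup Y] [NormedSpace 𝕜 Y]

theorem Submodule.dense_of_forall_dual_eq_zero (p : Submodule 𝕜 X)
    (h : ∀ g : X →L[𝕜] 𝕜, (∀ s ∈ p, g s = 0) → g = 0) : Dense (p : Set X) := by
  set q := p.topologicalClosure
  have : IsClosed (q : Set X) := p.isClosed_topologicalClosure
  rw [Submodule.dense_iff_topologicalClosure_eq_top, Submodule.eq_top_iff']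
  by_contra! ⟨x, hx⟩
  obtain ⟨f, hf⟩ := SeparatingDual.exists_ne_zero (R := 𝕜)
    (mt (Submodule.Quotient.mk_eq_zero q).1 hx)
  have hfq : f.comp q.mkQL = 0 :=
    h _ fun s hs => by simp [(Submodule.Quotient.mk_eq_zero q).2 (p.le_topologicalClosure hs)]
  exact hf (by simpa using congr($hfq x))

theorem iterate_apply_eq_apply_pow {F : (X →L[𝕜] 𝕜) → X →L[𝕜] 𝕜} {b : X →L[𝕜] X}
    (hF : ∀ y ρ, F y ρ = y (b ρ)) (n : ℕ) (y : X →L[𝕜] 𝕜) (ρ : X) :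
    F^[n] y ρ = y ((b ^ n) ρ) := by
  induction n generalizing y with
  | zero => rfl
  | succ n ih => rw [Function.iterate_succ_apply, ih, hF, pow_succ']; rfl

theorem norm_apply_comp_eq_of_apply_eq {E : (Y →L[𝕜] 𝕜) →L[𝕜] X →L[𝕜] 𝕜} {Ep : X →L[𝕜] Y}
    (hE : ∀ y ρ, E y ρ = y (Ep ρ)) (ρ : X) :
    ‖(ContinuousLinearMap.apply 𝕜 𝕜 ρ).comp E‖ = ‖Ep ρ‖ := by
  have : (ContinuousLinearMap.apply 𝕜 𝕜 ρ).comp E = NormedSpace.inclusionInDoubleDual 𝕜 Y (Ep ρ) :=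
    ContinuousLinearMap.ext fun y => hE y ρ
  rw [this]
  exact (NormedSpace.inclusionInDoubleDualLi 𝕜).norm_map (Ep ρ)

theorem norm_apply_eq_of_linearIsometryEquiv {T : (X →L[𝕜] 𝕜) ≃ₗᵢ[𝕜] Y →L[𝕜] 𝕜}
    {b : Y →L[𝕜] X} (hT : ∀ y ρ, T y ρ = y (b ρ)) (ρ : Y) : ‖b ρ‖ = ‖ρ‖ := by
  refine le_antisymm (NormedSpace.norm_le_dual_bound 𝕜 _ (norm_nonneg ρ) fun f => ?_) ?_
  · calc ‖f (b ρ)‖ = ‖T f ρ‖ := by rw [hT]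
      _ ≤ ‖T f‖ * ‖ρ‖ := (T f).le_opNorm ρ
      _ = ‖ρ‖ * ‖f‖ := by rw [T.norm_map, mul_comm]
  · obtain ⟨g, hg, hgρ⟩ := exists_dual_vector'' 𝕜 ρ
    calc ‖ρ‖ = ‖T.symm g (b ρ)‖ := by
          rw [← hT, T.apply_symm_apply, hgρ, RCLike.norm_ofReal, abs_norm]
      _ ≤ ‖T.symm g‖ * ‖b ρ‖ := (T.symm g).le_opNorm _
      _ ≤ ‖b ρ‖ := by rw [T.symm.norm_map]; exact mul_le_of_le_one_left (norm_nonneg _) hg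

end Duality

section InverseSequence

variable {M : Type*} {L : M → M}

theorem eq_iterate_of_eq_apply_succ {x : ℤ → M} (hx : ∀ n, x n = L (x (n + 1))) (n : ℤ)
    (m : ℕ) : x n = L^[m] (x (n + m)) := by
  induction m with
  | zero => simp
  | succ m ih =>
    rw [ih, Function.iterate_succ_apply, hx (n + m)]
    push_cast
    ring_nf

theorem eq_of_eq_apply_succ_of_forall_natCast {x x' : ℤ → M} (hx : ∀ n, x n = L (x (n + 1)))
    (hx' : ∀ n, x' n = L (x' (n + 1))) (h : ∀ n : ℕ, x n = x' n) : x = x' := by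
  funext n
  obtain ⟨m, hm⟩ : ∃ m : ℕ, 0 ≤ n + m := ⟨n.natAbs, by omega⟩
  lift n + m to ℕ using hm with k hk
  rw [eq_iterate_of_eq_apply_succ hx n m, eq_iterate_of_eq_apply_succ hx' n m, ← hk, h]

end InverseSequence

section DirectedUnion

variable {𝕜 X Y : Type*} [RCLike 𝕜] [AddCommGroup X] [Module 𝕜 X]
  [NormedAddCommGroup Y] [NormedSpace 𝕜 Y] {P : X →ₗ[𝕜] X} {φ : ℕ → X →ₗ[𝕜] Y}
  {ψ : ℕ → X →ₗ[𝕜] 𝕜}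

theorem apply_add_iterate_of_apply_succ {Z : Type*} {f : ℕ → X → Z}
    (hf : ∀ n τ, f (n + 1) (P τ) = f n τ) (n m : ℕ) (τ : X) : f (n + m) (P^[m] τ) = f n τ := by
  induction m with
  | zero => rfl
  | succ m ih => rw [Function.iterate_succ_apply', ← add_assoc, hf, ih]

theorem mem_iSup_range_iff (hφ : ∀ n τ, φ (n + 1) (P τ) = φ n τ) {s : Y} :
    s ∈ ⨆ n, LinearMap.range (φ n) ↔ ∃ n τ, φ n τ = s := by
  have hmono : Monotone fun n => LinearMap.range (φ n) :=
    monotone_nat_of_le_succ fun n => by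
      rintro _ ⟨τ, rfl⟩
      exact ⟨P τ, hφ n τ⟩
  simp [Submodule.mem_iSup_of_directed _ hmono.directed_le]

variable (hφ : ∀ n τ, φ (n + 1) (P τ) = φ n τ) (hψ : ∀ n τ, ψ (n + 1) (P τ) = ψ n τ)
  {C : ℝ} (hC : ∀ n τ, ‖ψ n τ‖ ≤ C * ‖φ n τ‖)
include hφ hψ hC

theorem apply_eq_of_apply_eq_of_compatible {n n' : ℕ} {τ τ' : X} (h : φ n τ = φ n' τ') :
    ψ n τ = ψ n' τ' := by
  -- move both representatives to level `n + n'`, where `φ` controls `ψ`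
  have hφ' := apply_add_iterate_of_apply_succ (f := fun n => φ n) hφ
  have hψ' := apply_add_iterate_of_apply_succ (f := fun n => ψ n) hψ
  rw [← hφ' n n' τ, ← hφ' n' n τ', add_comm n'] at h
  rw [← hψ' n n' τ, ← hψ' n' n τ', add_comm n', ← sub_eq_zero, ← map_sub, ← norm_le_zero_iff]
  simpa [h] using hC (n + n') (P^[n'] τ - P^[n] τ')

theorem exists_dual_apply_eq_of_compatible : ∃ y : Y →L[𝕜] 𝕜, ∀ n τ, y (φ n τ) = ψ n τ := by
  set U := ⨆ n, LinearMap.range (φ n)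
  have hmem (s : U) : ∃ n τ, φ n τ = s := (mem_iSup_range_iff hφ).1 s.2
  choose level pre hpre using hmem
  have hwd (s : U) {n τ} (h : φ n τ = s) : ψ (level s) (pre s) = ψ n τ :=
    apply_eq_of_apply_eq_of_compatible hφ hψ hC ((hpre s).trans h.symm)
  have hφ' := apply_add_iterate_of_apply_succ (f := fun n => φ n) hφ
  have hψ' := apply_add_iterate_of_apply_succ (f := fun n => ψ n) hψ
  let f : U →ₗ[𝕜] 𝕜 :=
    { toFun s := ψ (level s) (pre s)
      map_add' s t := by
        rw [hwd (s + t) (n := level s + level t) (τ := P^[level t] (pre s) + P^[level s] (pre t))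
          (by rw [map_add, hφ', add_comm (level s), hφ', hpre, hpre, Submodule.coe_add]),
          map_add, hψ', add_comm (level s), hψ']
      map_smul' c s := hwd (c • s) (τ := c • pre s) (by simp [hpre]) |>.trans (map_smul _ _ _) }
  have hf (s : U) : ‖f s‖ ≤ C * ‖s‖ := by
    simpa [f, hpre] using hC (level s) (pre s)
  obtain ⟨y, hy, -⟩ := exists_extension_norm_eq U (f.mkContinuous C hf)
  exact ⟨y, fun n τ => (hy ⟨φ n τ, (mem_iSup_range_iff hφ).2 ⟨n, τ, rfl⟩⟩).trans (hwd _ rfl)⟩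

end DirectedUnion

section LiftTheta

variable {M N : Type*} [NormedAddCommGroup N] [NormedSpace ℂ N] (α : N ≃ₗᵢ[ℂ] N)

theorem apply_eq_apply_zpow_neg_zero {θ : N → ℤ → M} (hθ : ∀ y, θ (α y) = shiftSeq (θ y))
    (y : N) (n : ℤ) : θ y n = θ ((α ^ (-n)) y) 0 := by
  induction n using Int.induction_on generalizing y with
  | zero => simp
  | succ k ih =>
    have h := congrFun (hθ (α.symm y)) (k + 1)
    rw [α.apply_symm_apply] at h
    rw [h, shiftSeq, add_sub_cancel_right, ih, neg_add, ← sub_eq_add_neg, zpow_sub_one,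
      LinearIsometryEquiv.coe_mul, Function.comp_apply, LinearIsometryEquiv.coe_inv]
  | pred k ih =>
    have h := congrFun (hθ y) (-k)
    rw [shiftSeq] at h
    rw [← h, ih, neg_sub', sub_neg_eq_add, zpow_add_one, LinearIsometryEquiv.coe_mul,
      Function.comp_apply]

variable {E : N → M}

theorem liftTheta_apply_zero (y : N) : liftTheta E α y 0 = E y := by
  simp [liftTheta]

theorem liftTheta_apply_linearIsometryEquiv (y : N) :
    liftTheta E α (α y) = shiftSeq (liftTheta E α y) := by
  funext n
  simp only [liftTheta, shiftSeq]
  rw [← Function.comp_apply (f := ⇑(α ^ (-n))),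
    ← LinearIsometryEquiv.coe_mul, ← zpow_add_one]
  ring_nf

theorem liftTheta_eq_apply_succ {L : M → M} (hEq : ∀ y, E (α y) = L (E y)) (y : N) (n : ℤ) :
    liftTheta E α y n = L (liftTheta E α y (n + 1)) := by
  simp only [liftTheta]
  rw [← hEq, ← Function.comp_apply (f := α),
    ← LinearIsometryEquiv.coe_mul, ← zpow_one_add]
  ring_nf

end LiftTheta

section LinearLiftTheta

variable {M N : Type*} [NormedAddCommGroup M] [NormedSpace ℂ M] [NormedAddCommGroup N]
  [NormedSpace ℂ N] (E : N →L[ℂ] M) (α : N ≃ₗᵢ[ℂ] N)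

theorem liftTheta_add (y z : N) : liftTheta E α (y + z) = liftTheta E α y + liftTheta E α z := by
  funext n
  simp [liftTheta]

theorem liftTheta_smul (c : ℂ) (y : N) : liftTheta E α (c • y) = c • liftTheta E α y := by
  funext n
  simp [liftTheta]

variable {E} (hE : ‖E‖ ≤ 1)
include hE

theorem norm_liftTheta_le (y : N) (n : ℤ) : ‖liftTheta E α y n‖ ≤ ‖y‖ :=
  calc ‖E ((α ^ (-n)) y)‖ ≤ ‖E‖ * ‖(α ^ (-n)) y‖ := E.le_opNorm _
    _ ≤ ‖y‖ := by rw [LinearIsometryEquiv.norm_map]; exact mul_le_of_le_one_left (norm_nonneg _) hE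

theorem liftTheta_mem_invSeqSet {L : M → M} (hEq : ∀ y, E (α y) = L (E y)) (y : N) :
    liftTheta E α y ∈ invSeqSet L :=
  ⟨⟨‖y‖, by rintro _ ⟨n, rfl⟩; exact norm_liftTheta_le α hE y n⟩, liftTheta_eq_apply_succ α hEq y⟩

end LinearLiftTheta

section ReversibleLift

variable {X Y : Type*} [NormedAddCommGroup X] [NormedSpace ℂ X]
  [NormedAddCommGroup Y] [NormedSpace ℂ Y]
  {L : (X →L[ℂ] ℂ) →L[ℂ] X →L[ℂ] ℂ} {Lp : X →L[ℂ] X}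
  {E : (Y →L[ℂ] ℂ) →L[ℂ] X →L[ℂ] ℂ} {Ep : X →L[ℂ] Y}
  {α : (Y →L[ℂ] ℂ) ≃ₗᵢ[ℂ] Y →L[ℂ] ℂ} {b : Y →L[ℂ] Y}
  (hLp : ∀ x ρ, L x ρ = x (Lp ρ)) (hEp : ∀ y ρ, E y ρ = y (Ep ρ))
  (hb : ∀ y ρ, α.symm y ρ = y (b ρ)) (hEq : ∀ y, E (α y) = L (E y))

set_option synthInstance.maxHeartbeats 100000 in
include hLp hEp in
theorem tendsto_norm_pow_apply
    (hAsym : ∀ ρ, Tendsto (fun n : ℕ => ‖(ContinuousLinearMap.apply ℂ ℂ ρ).comp (L ^ n)‖) atTop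
      (𝓝 ‖(ContinuousLinearMap.apply ℂ ℂ ρ).comp E‖)) (ρ : X) :
    Tendsto (fun n : ℕ => ‖(Lp ^ n) ρ‖) atTop (𝓝 ‖Ep ρ‖) := by
  have hLn (n : ℕ) (x : X →L[ℂ] ℂ) (ρ : X) : (L ^ n) x ρ = x ((Lp ^ n) ρ) := by
    rw [FunLike.coe_pow_eq_iterate, iterate_apply_eq_apply_pow hLp]
  rw [← norm_apply_comp_eq_of_apply_eq hEp]
  exact (hAsym ρ).congr fun n => norm_apply_comp_eq_of_apply_eq (hLn n) ρ

include hLp hEp hb hEq in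
theorem apply_apply_apply_eq_of_predual (τ : X) : b (Ep (Lp τ)) = Ep τ := by
  refine (SeparatingDual.eq_iff_forall_dual_eq (R := ℂ)).2 fun g => ?_
  rw [← hb, ← hEp, ← hLp, ← hEq, α.apply_symm_apply, hEp]

include hLp hEp hb hEq in
theorem pow_succ_apply_apply_of_predual (n : ℕ) (τ : X) :
    (b ^ (n + 1)) (Ep (Lp τ)) = (b ^ n) (Ep τ) := by
  rw [pow_succ]
  exact congrArg (b ^ n) (apply_apply_apply_eq_of_predual hLp hEp hb hEq τ)

include hEp hb in
theorem liftTheta_natCast_apply (y : Y →L[ℂ] ℂ) (n : ℕ) (ρ : X) :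
    liftTheta E α y n ρ = y ((b ^ n) (Ep ρ)) := by
  induction n generalizing y with
  | zero => rw [Nat.cast_zero, liftTheta_apply_zero, hEp, pow_zero]; rfl
  | succ n ih =>
    rw [← α.apply_symm_apply y, liftTheta_apply_linearIsometryEquiv, shiftSeq, Nat.cast_succ,
      add_sub_cancel_right, ih, hb, α.apply_symm_apply, pow_succ']
    rfl

theorem norm_pow_apply_of_forall_norm_apply (hbnorm : ∀ v, ‖b v‖ = ‖v‖) (n : ℕ) (v : Y) :
    ‖(b ^ n) v‖ = ‖v‖ := by
  rw [FunLike.coe_pow_eq_iterate]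
  induction n with
  | zero => rfl
  | succ n ih => rw [Function.iterate_succ_apply', hbnorm, ih]

include hLp in
theorem norm_apply_le_of_eq_apply_succ {τ : X} {ℓ : ℝ}
    (hlim : Tendsto (fun m : ℕ => ‖(Lp ^ m) τ‖) atTop (𝓝 ℓ)) {x : ℤ → X →L[ℂ] ℂ}
    (hx : ∀ n, x n = L (x (n + 1))) {C : ℝ} (hC : ∀ n, ‖x n‖ ≤ C) (n : ℤ) :
    ‖x n τ‖ ≤ C * ℓ := by
  refine ge_of_tendsto' (hlim.const_mul C) fun m => ?_
  calc ‖x n τ‖ = ‖x (n + m) ((Lp ^ m) τ)‖ := by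
        rw [eq_iterate_of_eq_apply_succ hx n m, iterate_apply_eq_apply_pow hLp]
    _ ≤ ‖x (n + m)‖ * ‖(Lp ^ m) τ‖ := (x (n + m)).le_opNorm _
    _ ≤ C * ‖(Lp ^ m) τ‖ := by gcongr; exact hC _

variable (hlim : ∀ τ, Tendsto (fun m : ℕ => ‖(Lp ^ m) τ‖) atTop (𝓝 ‖Ep τ‖))
  (hbnorm : ∀ v, ‖b v‖ = ‖v‖)

include hLp hlim hbnorm in
theorem norm_apply_le_mul_norm_pow_apply {x : ℤ → X →L[ℂ] ℂ} (hx : ∀ n, x n = L (x (n + 1)))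
    {C : ℝ} (hC : ∀ n, ‖x n‖ ≤ C) (n : ℕ) (τ : X) : ‖x n τ‖ ≤ C * ‖(b ^ n) (Ep τ)‖ := by
  rw [norm_pow_apply_of_forall_norm_apply hbnorm]
  exact norm_apply_le_of_eq_apply_succ hLp (hlim τ) hx hC n

variable (hnondeg : ∀ y : Y →L[ℂ] ℂ, (∀ n : ℕ, E ((α ^ (-(n : ℤ))) y) = 0) → y = 0)

include hEp hb hnondeg in
theorem dense_iSup_range_pow_comp :
    Dense (((⨆ n, LinearMap.range ((b ^ n).comp Ep : X →ₗ[ℂ] Y)) : Submodule ℂ Y) : Set Y) := by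
  refine Submodule.dense_of_forall_dual_eq_zero _ fun g hg => hnondeg g fun n => ?_
  ext ρ
  change liftTheta E α g n ρ = 0
  rw [liftTheta_natCast_apply hEp hb]
  exact hg _ (Submodule.mem_iSup_of_mem n ⟨ρ, rfl⟩)

include hLp hEp hb hEq hlim hbnorm hnondeg in
theorem norm_le_of_forall_norm_liftTheta_le (y : Y →L[ℂ] ℂ) {C : ℝ}
    (hC : ∀ n, ‖liftTheta E α y n‖ ≤ C) : ‖y‖ ≤ C := by
  refine y.opNorm_le_bound ((norm_nonneg _).trans (hC 0)) fun s => ?_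
  refine (dense_iSup_range_pow_comp hEp hb hnondeg).induction (P := fun s => ‖y s‖ ≤ C * ‖s‖)
    (fun s hs => ?_) (isClosed_le (by fun_prop) (by fun_prop)) s
  obtain ⟨n, τ, rfl⟩ := (mem_iSup_range_iff (P := Lp.toLinearMap)
    (pow_succ_apply_apply_of_predual hLp hEp hb hEq)).1 hs
  simpa only [ContinuousLinearMap.coe_coe, ContinuousLinearMap.comp_apply,
    liftTheta_natCast_apply hEp hb] using
    norm_apply_le_mul_norm_pow_apply hLp hlim hbnorm (liftTheta_eq_apply_succ α hEq y) hC n τ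

include hLp hEp hb hEq hlim hbnorm in
theorem exists_liftTheta_eq {x : ℤ → X →L[ℂ] ℂ} (hx : x ∈ invSeqSet L) :
    ∃ y, liftTheta E α y = x := by
  obtain ⟨⟨C, hC⟩, hrec⟩ := hx
  have hC' (n : ℤ) : ‖x n‖ ≤ C := hC ⟨n, rfl⟩
  obtain ⟨y, hy⟩ := exists_dual_apply_eq_of_compatible (P := Lp.toLinearMap)
    (φ := fun n => ((b ^ n).comp Ep : X →ₗ[ℂ] Y)) (ψ := fun n => (x n : X →ₗ[ℂ] ℂ))
    (pow_succ_apply_apply_of_predual hLp hEp hb hEq)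
    (fun n τ => by simp [hrec n, hLp])
    (norm_apply_le_mul_norm_pow_apply hLp hlim hbnorm hrec hC')
  refine ⟨y, eq_of_eq_apply_succ_of_forall_natCast (liftTheta_eq_apply_succ α hEq y) hrec
    fun n => ContinuousLinearMap.ext fun τ => ?_⟩
  exact (liftTheta_natCast_apply hEp hb y n τ).trans (hy n τ)

end ReversibleLift

theorem stmt6_general {Mstar Nstar : Type*}
    [NormedAddCommGroup Mstar] [NormedSpace ℂ Mstar]
    [NormedAddCommGroup Nstar] [NormedSpace ℂ Nstar]
    (L : (Mstar →L[ℂ] ℂ) →L[ℂ] (Mstar →L[ℂ] ℂ))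
    (hLnormal : ∃ Lp : Mstar →L[ℂ] Mstar,
      ∀ (x : Mstar →L[ℂ] ℂ) (ρ : Mstar), L x ρ = x (Lp ρ))
    (E : (Nstar →L[ℂ] ℂ) →L[ℂ] (Mstar →L[ℂ] ℂ))
    (hEnormal : ∃ Ep : Mstar →L[ℂ] Nstar,
      ∀ (y : Nstar →L[ℂ] ℂ) (ρ : Mstar), E y ρ = y (Ep ρ))
    (hEnorm : ‖E‖ ≤ 1)
    (α : (Nstar →L[ℂ] ℂ) ≃ₗᵢ[ℂ] (Nstar →L[ℂ] ℂ))
    (hαinvnormal : ∃ b : Nstar →L[ℂ] Nstar,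
      ∀ (y : Nstar →L[ℂ] ℂ) (ρ : Nstar), α.symm y ρ = y (b ρ))
    (hEq : ∀ y : Nstar →L[ℂ] ℂ, E (α y) = L (E y))
    (hnondeg : ∀ y : Nstar →L[ℂ] ℂ, (∀ n : ℕ, E ((α ^ (-(n : ℤ))) y) = 0) → y = 0)
    (hAsym : ∀ ρ : Mstar,
      Filter.Tendsto
        (fun n : ℕ => ‖(ContinuousLinearMap.apply ℂ ℂ ρ).comp (L ^ n)‖)
        Filter.atTop
        (nhds ‖(ContinuousLinearMap.apply ℂ ℂ ρ).comp E‖)) :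
    -- θ is well defined: it takes values in S_L
    (∀ y : Nstar →L[ℂ] ℂ, liftTheta (⇑E) α y ∈ invSeqSet L) ∧
    -- θ is linear
    (∀ y z : Nstar →L[ℂ] ℂ,
      liftTheta (⇑E) α (y + z) = liftTheta (⇑E) α y + liftTheta (⇑E) α z) ∧
    (∀ (c : ℂ) (y : Nstar →L[ℂ] ℂ),
      liftTheta (⇑E) α (c • y) = c • liftTheta (⇑E) α y) ∧
    -- θ is isometric for the supremum norm on S_L
    (∀ y : Nstar →L[ℂ] ℂ, (⨆ n : ℤ, ‖liftTheta (⇑E) α y n‖) = ‖y‖) ∧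
    -- θ maps N onto S_L
    (∀ x ∈ invSeqSet L, ∃ y : Nstar →L[ℂ] ℂ, liftTheta (⇑E) α y = x) ∧
    -- θ ∘ α = σ ∘ θ and E₀ ∘ θ = E
    (∀ y : Nstar →L[ℂ] ℂ, liftTheta (⇑E) α (α y) = shiftSeq (liftTheta (⇑E) α y)) ∧
    (∀ y : Nstar →L[ℂ] ℂ, liftTheta (⇑E) α y 0 = E y) ∧
    -- uniqueness: θ is the only linear map with the two intertwining properties
    (∀ θ' : (Nstar →L[ℂ] ℂ) → ℤ → (Mstar →L[ℂ] ℂ),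
      (∀ y z, θ' (y + z) = θ' y + θ' z) →
      (∀ (c : ℂ) y, θ' (c • y) = c • θ' y) →
      (∀ y, θ' (α y) = shiftSeq (θ' y)) →
      (∀ y, θ' y 0 = E y) →
      θ' = liftTheta (⇑E) α) := by
  obtain ⟨Lp, hLp⟩ := hLnormal
  obtain ⟨Ep, hEp⟩ := hEnormal
  obtain ⟨b, hb⟩ := hαinvnormal
  have hlim := tendsto_norm_pow_apply hLp hEp hAsym
  have hbnorm := norm_apply_eq_of_linearIsometryEquiv hb
  refine ⟨liftTheta_mem_invSeqSet α hEnorm hEq, liftTheta_add E α, liftTheta_smul E α,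
    fun y => ?_, fun x hx => exists_liftTheta_eq hLp hEp hb hEq hlim hbnorm hx,
    liftTheta_apply_linearIsometryEquiv α, liftTheta_apply_zero α,
    fun θ' _ _ hshift hzero => ?_⟩
  · exact le_antisymm (ciSup_le (norm_liftTheta_le α hEnorm y))
      (norm_le_of_forall_norm_liftTheta_le hLp hEp hb hEq hlim hbnorm hnondeg y
        fun n => le_ciSup (liftTheta_mem_invSeqSet α hEnorm hEq y).1 n)
  · funext y n
    rw [apply_eq_apply_zpow_neg_zero α hshift, hzero]
    rfl

/-- Let `M`, `N` be the duals of complex Banach spaces `M⋆`, `N⋆`,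
`L : M → M` normal with `‖L‖ ≤ 1`, and `(N, α, E)` a reversible lift of `L` with `E`
normal, `‖E‖ ≤ 1`, `α` a surjective linear isometry with `α` and `α⁻¹` normal, the lift
nondegenerate, and `‖ρ ∘ E‖ = lim_n ‖ρ ∘ L^n‖` for every `ρ ∈ M⋆`.  Then
`θ(y) = (E(α^{-n}(y)))_{n ∈ ℤ}` is a well-defined surjective linear isometry from `N`
onto `S_L` satisfying `θ ∘ α = σ ∘ θ` and `E₀ ∘ θ = E`, and `θ` is the unique linear
map from `N` to `S_L` with these two intertwining properties. -/
theorem stmt6 {Mstar Nstar : Type*}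
    [NormedAddCommGroup Mstar] [NormedSpace ℂ Mstar] [CompleteSpace Mstar]
    [NormedAddCommGroup Nstar] [NormedSpace ℂ Nstar] [CompleteSpace Nstar]
    (L : (Mstar →L[ℂ] ℂ) →L[ℂ] (Mstar →L[ℂ] ℂ))
    (hLnormal : ∃ Lp : Mstar →L[ℂ] Mstar,
      ∀ (x : Mstar →L[ℂ] ℂ) (ρ : Mstar), L x ρ = x (Lp ρ))
    (hLnorm : ‖L‖ ≤ 1)
    (E : (Nstar →L[ℂ] ℂ) →L[ℂ] (Mstar →L[ℂ] ℂ))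
    (hEnormal : ∃ Ep : Mstar →L[ℂ] Nstar,
      ∀ (y : Nstar →L[ℂ] ℂ) (ρ : Mstar), E y ρ = y (Ep ρ))
    (hEnorm : ‖E‖ ≤ 1)
    (α : (Nstar →L[ℂ] ℂ) ≃ₗᵢ[ℂ] (Nstar →L[ℂ] ℂ))
    (hαnormal : ∃ a : Nstar →L[ℂ] Nstar,
      ∀ (y : Nstar →L[ℂ] ℂ) (ρ : Nstar), α y ρ = y (a ρ))
    (hαinvnormal : ∃ b : Nstar →L[ℂ] Nstar,
      ∀ (y : Nstar →L[ℂ] ℂ) (ρ : Nstar), α.symm y ρ = y (b ρ))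
    (hEq : ∀ y : Nstar →L[ℂ] ℂ, E (α y) = L (E y))
    (hnondeg : ∀ y : Nstar →L[ℂ] ℂ, (∀ n : ℕ, E ((α ^ (-(n : ℤ))) y) = 0) → y = 0)
    (hAsym : ∀ ρ : Mstar,
      Filter.Tendsto
        (fun n : ℕ => ‖(ContinuousLinearMap.apply ℂ ℂ ρ).comp (L ^ n)‖)
        Filter.atTop
        (nhds ‖(ContinuousLinearMap.apply ℂ ℂ ρ).comp E‖)) :
    -- θ is well defined: it takes values in S_L
    (∀ y : Nstar →L[ℂ] ℂ, liftTheta (⇑E) α y ∈ invSeqSet L) ∧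
    -- θ is linear
    (∀ y z : Nstar →L[ℂ] ℂ,
      liftTheta (⇑E) α (y + z) = liftTheta (⇑E) α y + liftTheta (⇑E) α z) ∧
    (∀ (c : ℂ) (y : Nstar →L[ℂ] ℂ),
      liftTheta (⇑E) α (c • y) = c • liftTheta (⇑E) α y) ∧
    -- θ is isometric for the supremum norm on S_L
    (∀ y : Nstar →L[ℂ] ℂ, (⨆ n : ℤ, ‖liftTheta (⇑E) α y n‖) = ‖y‖) ∧
    -- θ maps N onto S_L
    (∀ x ∈ invSeqSet L, ∃ y : Nstar →L[ℂ] ℂ, liftTheta (⇑E) α y = x) ∧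
    -- θ ∘ α = σ ∘ θ and E₀ ∘ θ = E
    (∀ y : Nstar →L[ℂ] ℂ, liftTheta (⇑E) α (α y) = shiftSeq (liftTheta (⇑E) α y)) ∧
    (∀ y : Nstar →L[ℂ] ℂ, liftTheta (⇑E) α y 0 = E y) ∧
    -- uniqueness: θ is the only linear map with the two intertwining properties
    (∀ θ' : (Nstar →L[ℂ] ℂ) → ℤ → (Mstar →L[ℂ] ℂ),
      (∀ y z, θ' (y + z) = θ' y + θ' z) →
      (∀ (c : ℂ) y, θ' (c • y) = c • θ' y) →
      (∀ y, θ' (α y) = shiftSeq (θ' y)) →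
      (∀ y, θ' y 0 = E y) →
      θ' = liftTheta (⇑E) α) :=
  stmt6_general L hLnormal E hEnormal hEnorm α hαinvnormal hEq hnondeg hAsym
end

section
/- Let M⋆ be a complex Banach space with continuous dual M, and let L : M → M be a normal linear map with ‖L‖ ≤ 1. Then the following are equivalent: (i) every inverse sequence for L is constant, i.e., every norm-bounded bilateral sequence (x_n)_{n∈ℤ} in M with x_n = L(x_{n+1}) for all n satisfies x_n = x_0 for all n ∈ ℤ; (ii) every x ∈ ∩_{n≥0} L^n(ball M) satisfies L(x) = x; (iii) L is slowly oscillating, i.e., lim_{n→∞} ‖ρ ∘ L^{n+1} − ρ ∘ L^n‖ = 0 for every ρ ∈ M⋆. -/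
/-!
(iii) ⇒ (ii): if `x = Lⁿ y` with `‖y‖ ≤ 1`, then `ρ (L x) - ρ x = (ρ ∘ Lⁿ⁺¹ - ρ ∘ Lⁿ) y` is bounded
by the `n`-th oscillation. (ii) ⇒ (i): a bounded inverse sequence, scaled into the unit ball,
lies in `⋂ Lⁿ (ball M)`, so it consists of fixed points and is constant.

The converses rest on Banach–Alaoglu: for `‖w k‖ ≤ 1`, the weak* limits along a free ultrafilter
of `k ↦ L^(k - n) (w k)` form an inverse sequence in the unit ball, since `L` is weak*-continuous.
For (i) ⇒ (ii) choose `Lᵏ (w k) = x`; the resulting sequence passes through `x` and `L x`.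
For (ii) ⇒ (iii) the oscillations decrease because `‖L‖ ≤ 1`; if they stayed above `δ > 0`,
witnesses `w k` of this would have a limit `z₀` of `Lᵏ (w k)` that is fixed by `L`, forcing
`(ρ ∘ Lᵏ⁺¹ - ρ ∘ Lᵏ) (w k) → ρ (L z₀) - ρ z₀ = 0`.
-/

open Filter Topology Metric

theorem StrongDual.exists_forall_tendsto_apply_of_norm_le {𝕜 E ι : Type*}
    [NontriviallyNormedField 𝕜] [ProperSpace 𝕜] [SeminormedAddCommGroup E] [NormedSpace 𝕜 E]
    (U : Ultrafilter ι) {f : ι → StrongDual 𝕜 E} {r : ℝ} (hf : ∀ i, ‖f i‖ ≤ r) :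
    ∃ x : StrongDual 𝕜 E, ‖x‖ ≤ r ∧ ∀ ρ, Tendsto (fun i => f i ρ) U (𝓝 (x ρ)) := by
  have hU : ↑(U.map (StrongDual.toWeakDual ∘ f)) ≤
      𝓟 (WeakDual.toStrongDual ⁻¹' closedBall (0 : StrongDual 𝕜 E) r) :=
    le_principal_iff.2 <| Ultrafilter.mem_map.2 <| univ_mem' fun i => by simpa using hf i
  obtain ⟨x, hx, hUx⟩ := (WeakDual.isCompact_closedBall 0 r).ultrafilter_le_nhds _ hU
  refine ⟨WeakDual.toStrongDual x, by simpa using hx, fun ρ => ?_⟩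
  exact ((WeakDual.eval_continuous ρ).tendsto x).comp hUx

section InverseSequence

variable {𝕜 F G : Type*} [NontriviallyNormedField 𝕜] [NormedAddCommGroup F] [NormedSpace 𝕜 F]
  [NormedAddCommGroup G] [NormedSpace 𝕜 G] {L : F →L[𝕜] F}

theorem ContinuousLinearMap.norm_pow_apply_le (hL : ‖L‖ ≤ 1) (n : ℕ) (x : F) :
    ‖(L ^ n) x‖ ≤ ‖x‖ := by
  induction n with
  | zero => simp
  | succ n ih =>
    rw [pow_succ', mul_apply_eq_comp]
    exact (L.le_of_opNorm_le hL _).trans (by simpa using ih)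

def IsInverseSeq (L : F →L[𝕜] F) (xs : ℤ → F) : Prop :=
  ∀ n, xs n = L (xs (n + 1))

namespace IsInverseSeq

variable {xs : ℤ → F}

theorem eq_pow_apply (h : IsInverseSeq L xs) (m : ℤ) (k : ℕ) : xs m = (L ^ k) (xs (m + k)) := by
  induction k with
  | zero => simp
  | succ k ih =>
    rw [ih, h (m + k), pow_succ, mul_apply_eq_comp, Nat.cast_succ, add_assoc]

theorem mem_iInter_image_closedBall (h : IsInverseSeq L xs) (hxs : ∀ n, ‖xs n‖ ≤ 1) (m : ℤ) :
    xs m ∈ ⋂ k : ℕ, (L ^ k) '' closedBall 0 1 :=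
  Set.mem_iInter.2 fun k =>
    ⟨xs (m + k), mem_closedBall_zero_iff.2 (hxs _), (h.eq_pow_apply m k).symm⟩

theorem smul (h : IsInverseSeq L xs) (c : 𝕜) : IsInverseSeq L (c • xs) := fun n => by
  simp [h n]

theorem eq_apply_zero_of_forall_map_eq_self (h : IsInverseSeq L xs)
    (hfix : ∀ n, L (xs n) = xs n) (n : ℤ) : xs n = xs 0 := by
  have hper : Function.Periodic xs 1 := fun m => by rw [← hfix (m + 1), ← h m]
  simpa using hper.int_mul_eq n

theorem eq_apply_zero_of_bddAbove (hD : ∀ x ∈ ⋂ k : ℕ, (L ^ k) '' closedBall 0 1, L x = x)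
    (h : IsInverseSeq L xs) (hb : BddAbove (Set.range fun n => ‖xs n‖)) (n : ℤ) :
    xs n = xs 0 := by
  obtain ⟨B, hB⟩ := hb
  have hxsB : ∀ m, ‖xs m‖ ≤ B := fun m => hB ⟨m, rfl⟩
  have hB0 : 0 < B + 1 := by linarith [(norm_nonneg _).trans (hxsB 0)]
  obtain ⟨c, hc0, hcB⟩ := NormedField.exists_norm_lt 𝕜 (inv_pos.2 hB0)
  have hcxs : ∀ m, ‖(c • xs) m‖ ≤ 1 := fun m => by
    rw [Pi.smul_apply, norm_smul]
    calc ‖c‖ * ‖xs m‖ ≤ (B + 1)⁻¹ * (B + 1) := by gcongr; linarith [hxsB m]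
      _ = 1 := inv_mul_cancel₀ hB0.ne'
  refine h.eq_apply_zero_of_forall_map_eq_self (fun m => ?_) n
  have := hD _ ((h.smul c).mem_iInter_image_closedBall hcxs m)
  rw [Pi.smul_apply, map_smul] at this
  exact smul_right_injective F (norm_pos_iff.1 hc0) this

end IsInverseSeq

theorem antitone_norm_comp_pow_succ_sub (φ : F →L[𝕜] G) (hL : ‖L‖ ≤ 1) :
    Antitone fun n : ℕ => ‖φ.comp (L ^ (n + 1)) - φ.comp (L ^ n)‖ := by
  refine antitone_nat_of_succ_le fun n => ?_
  have hcomp : φ.comp (L ^ (n + 1 + 1)) - φ.comp (L ^ (n + 1)) =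
      (φ.comp (L ^ (n + 1)) - φ.comp (L ^ n)).comp L := by
    simp only [ContinuousLinearMap.sub_comp, ContinuousLinearMap.comp_assoc, pow_succ L (n + 1),
      pow_succ L n, ContinuousLinearMap.mul_def]
  rw [hcomp]
  exact (ContinuousLinearMap.opNorm_comp_le _ _).trans (mul_le_of_le_one_right (norm_nonneg _) hL)

theorem map_eq_of_tendsto_norm_comp_pow_succ_sub (φ : F →L[𝕜] G)
    (hφ : Tendsto (fun n : ℕ => ‖φ.comp (L ^ (n + 1)) - φ.comp (L ^ n)‖) atTop (𝓝 0))
    {x : F} (hx : x ∈ ⋂ k : ℕ, (L ^ k) '' closedBall 0 1) : φ (L x) = φ x := by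
  have hle : ∀ n : ℕ, ‖φ (L x) - φ x‖ ≤ ‖φ.comp (L ^ (n + 1)) - φ.comp (L ^ n)‖ := fun n => by
    obtain ⟨y, hy, rfl⟩ := Set.mem_iInter.1 hx n
    have hdiff : φ (L ((L ^ n) y)) - φ ((L ^ n) y) = (φ.comp (L ^ (n + 1)) - φ.comp (L ^ n)) y := by
      simp [pow_succ', mul_apply_eq_comp]
    rw [hdiff]
    exact (ContinuousLinearMap.le_opNorm _ _).trans
      (mul_le_of_le_one_right (norm_nonneg _) (mem_closedBall_zero_iff.1 hy))
  exact sub_eq_zero.1 (norm_le_zero_iff.1 (ge_of_tendsto' hφ hle))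

end InverseSequence

section WeakStar

variable {𝕜 E : Type*} [RCLike 𝕜] [NormedAddCommGroup E]
  [NormedSpace 𝕜 E] {L : StrongDual 𝕜 E →L[𝕜] StrongDual 𝕜 E} {Lp : E →L[𝕜] E}

theorem exists_isInverseSeq_tendsto_pow_apply (hLp : ∀ x ρ, L x ρ = x (Lp ρ)) (hL : ‖L‖ ≤ 1)
    (U : Ultrafilter ℕ) (hU : (U : Filter ℕ) ≤ atTop) {w : ℕ → StrongDual 𝕜 E}
    (hw : ∀ k, ‖w k‖ ≤ 1) :
    ∃ z : ℤ → StrongDual 𝕜 E, IsInverseSeq L z ∧ (∀ n, ‖z n‖ ≤ 1) ∧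
      ∀ ρ, Tendsto (fun k => (L ^ k) (w k) ρ) U (𝓝 (z 0 ρ)) := by
  -- the truncation in `toNat` only affects finitely many `k`
  have hlim : ∀ n : ℤ, ∃ x : StrongDual 𝕜 E, ‖x‖ ≤ 1 ∧
      ∀ ρ, Tendsto (fun k : ℕ => (L ^ ((k : ℤ) - n).toNat) (w k) ρ) U (𝓝 (x ρ)) :=
    fun n => StrongDual.exists_forall_tendsto_apply_of_norm_le U
      fun k => (L.norm_pow_apply_le hL _ _).trans (hw k)
  choose z hz_norm hz using hlim
  refine ⟨z, fun n => ?_, hz_norm, by simpa using hz 0⟩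
  ext ρ
  rw [hLp]
  refine tendsto_nhds_unique (hz n ρ) ((hz (n + 1) (Lp ρ)).congr' ?_)
  filter_upwards [hU (eventually_ge_atTop (n + 1).toNat)] with k hk
  have hsucc : ((k : ℤ) - n).toNat = ((k : ℤ) - (n + 1)).toNat + 1 := by omega
  rw [← hLp, hsucc, pow_succ', mul_apply_eq_comp]

theorem map_eq_self_of_forall_isInverseSeq (hLp : ∀ x ρ, L x ρ = x (Lp ρ)) (hL : ‖L‖ ≤ 1)
    (h : ∀ xs : ℤ → StrongDual 𝕜 E, BddAbove (Set.range fun n => ‖xs n‖) →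
      IsInverseSeq L xs → ∀ n, xs n = xs 0)
    {x : StrongDual 𝕜 E} (hx : x ∈ ⋂ k : ℕ, (L ^ k) '' closedBall 0 1) : L x = x := by
  have hpre : ∀ k : ℕ, ∃ y : StrongDual 𝕜 E, ‖y‖ ≤ 1 ∧ (L ^ k) y = x := fun k => by
    obtain ⟨y, hy, hyx⟩ := Set.mem_iInter.1 hx k
    exact ⟨y, mem_closedBall_zero_iff.1 hy, hyx⟩
  choose y hy_norm hy using hpre
  obtain ⟨z, hz, hz_norm, hz_lim⟩ :=
    exists_isInverseSeq_tendsto_pow_apply hLp hL _ Nat.hyperfilter_le_atTop hy_norm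
  have hz0 : z 0 = x := by
    ext ρ
    exact tendsto_nhds_unique (hz_lim ρ) (by simpa only [hy] using tendsto_const_nhds)
  have hzb : BddAbove (Set.range fun n => ‖z n‖) := ⟨1, by rintro _ ⟨n, rfl⟩; exact hz_norm n⟩
  rw [← hz0, ← (by simpa using hz (-1) : z (-1) = L (z 0))]
  exact h z hzb hz (-1)

theorem exists_norm_comp_pow_succ_sub_lt (hLp : ∀ x ρ, L x ρ = x (Lp ρ)) (hL : ‖L‖ ≤ 1)
    (h : ∀ x ∈ ⋂ k : ℕ, (L ^ k) '' closedBall 0 1, L x = x) (ρ : E) {δ : ℝ} (hδ : 0 < δ) :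
    ∃ n : ℕ, ‖(ContinuousLinearMap.apply 𝕜 𝕜 ρ).comp (L ^ (n + 1)) -
      (ContinuousLinearMap.apply 𝕜 𝕜 ρ).comp (L ^ n)‖ < δ := by
  by_contra! hge
  have hwit : ∀ n : ℕ, ∃ w : StrongDual 𝕜 E, ‖w‖ < 1 ∧
      δ / 2 < ‖(L ^ (n + 1)) w ρ - (L ^ n) w ρ‖ := fun n => by
    obtain ⟨w, hw_norm, hw⟩ := ContinuousLinearMap.exists_lt_apply_of_lt_opNorm
      ((ContinuousLinearMap.apply 𝕜 𝕜 ρ).comp (L ^ (n + 1)) -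
        (ContinuousLinearMap.apply 𝕜 𝕜 ρ).comp (L ^ n)) ((half_lt_self hδ).trans_le (hge n))
    exact ⟨w, hw_norm, hw⟩
  choose w hw_norm hw using hwit
  obtain ⟨z, hz, hz_norm, hz_lim⟩ := exists_isInverseSeq_tendsto_pow_apply hLp hL _
    Nat.hyperfilter_le_atTop fun k => (hw_norm k).le
  have hfix : L (z 0) = z 0 := h _ (hz.mem_iInter_image_closedBall hz_norm 0)
  have hosc : Tendsto (fun k => (L ^ (k + 1)) (w k) ρ - (L ^ k) (w k) ρ) (hyperfilter ℕ)
      (𝓝 0) := by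
    have hfixρ : z 0 (Lp ρ) = z 0 ρ := by rw [← hLp, hfix]
    rw [← sub_eq_zero.2 hfixρ]
    refine ((hz_lim (Lp ρ)).sub (hz_lim ρ)).congr fun k => ?_
    rw [pow_succ', mul_apply_eq_comp, hLp]
  have := ge_of_tendsto' hosc.norm fun k => (hw k).le
  linarith [this.trans_eq norm_zero]

theorem tendsto_norm_comp_pow_succ_sub (hLp : ∀ x ρ, L x ρ = x (Lp ρ)) (hL : ‖L‖ ≤ 1)
    (h : ∀ x ∈ ⋂ k : ℕ, (L ^ k) '' closedBall 0 1, L x = x) (ρ : E) :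
    Tendsto (fun n : ℕ => ‖(ContinuousLinearMap.apply 𝕜 𝕜 ρ).comp (L ^ (n + 1)) -
      (ContinuousLinearMap.apply 𝕜 𝕜 ρ).comp (L ^ n)‖) atTop (𝓝 0) := by
  refine tendsto_order.2
    ⟨fun b hb => .of_forall fun n => hb.trans_le (ContinuousLinearMap.opNorm_nonneg _),
      fun δ hδ => ?_⟩
  obtain ⟨N, hN⟩ := exists_norm_comp_pow_succ_sub_lt hLp hL h ρ hδ
  filter_upwards [eventually_ge_atTop N] with n hn
  exact (antitone_norm_comp_pow_succ_sub _ hL hn).trans_lt hN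

end WeakStar

theorem stmt7_general {Mstar : Type*}
    [NormedAddCommGroup Mstar] [NormedSpace ℂ Mstar]
    (L : (Mstar →L[ℂ] ℂ) →L[ℂ] (Mstar →L[ℂ] ℂ))
    (hLnormal : ∃ Lp : Mstar →L[ℂ] Mstar,
      ∀ (x : Mstar →L[ℂ] ℂ) (ρ : Mstar), L x ρ = x (Lp ρ))
    (hLnorm : ‖L‖ ≤ 1) :
    ((∀ xs : ℤ → (Mstar →L[ℂ] ℂ),
        BddAbove (Set.range fun n => ‖xs n‖) →
        (∀ n : ℤ, xs n = L (xs (n + 1))) →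
        ∀ n : ℤ, xs n = xs 0)
      ↔ (∀ x ∈ ⋂ n : ℕ, (L ^ n) '' Metric.closedBall 0 1, L x = x)) ∧
    ((∀ x ∈ ⋂ n : ℕ, (L ^ n) '' Metric.closedBall 0 1, L x = x)
      ↔ (∀ ρ : Mstar,
          Filter.Tendsto
            (fun n : ℕ =>
              ‖(ContinuousLinearMap.apply ℂ ℂ ρ).comp (L ^ (n + 1)) -
                (ContinuousLinearMap.apply ℂ ℂ ρ).comp (L ^ n)‖)
            Filter.atTop (nhds 0))) := by
  obtain ⟨Lp, hLp⟩ := hLnormal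
  refine ⟨⟨fun h _ => map_eq_self_of_forall_isInverseSeq hLp hLnorm h,
    fun h xs hb hxs => IsInverseSeq.eq_apply_zero_of_bddAbove h hxs hb⟩,
    ⟨tendsto_norm_comp_pow_succ_sub hLp hLnorm,
    fun h x hx =>
      ContinuousLinearMap.ext fun ρ => map_eq_of_tendsto_norm_comp_pow_succ_sub _ (h ρ) hx⟩⟩

/-- Let `M` be the continuous dual of a complex Banach space `M⋆` and
`L : M → M` a normal linear map with `‖L‖ ≤ 1`.  The following are equivalent:
(i) every inverse sequence for `L` is constant;
(ii) every `x ∈ ⋂_{n ≥ 0} L^n(ball M)` satisfies `L x = x`;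
(iii) `L` is slowly oscillating: `‖ρ ∘ L^{n+1} − ρ ∘ L^n‖ → 0` for every `ρ ∈ M⋆`. -/
theorem stmt7 {Mstar : Type*}
    [NormedAddCommGroup Mstar] [NormedSpace ℂ Mstar] [CompleteSpace Mstar]
    (L : (Mstar →L[ℂ] ℂ) →L[ℂ] (Mstar →L[ℂ] ℂ))
    (hLnormal : ∃ Lp : Mstar →L[ℂ] Mstar,
      ∀ (x : Mstar →L[ℂ] ℂ) (ρ : Mstar), L x ρ = x (Lp ρ))
    (hLnorm : ‖L‖ ≤ 1) :
    ((∀ xs : ℤ → (Mstar →L[ℂ] ℂ),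
        BddAbove (Set.range fun n => ‖xs n‖) →
        (∀ n : ℤ, xs n = L (xs (n + 1))) →
        ∀ n : ℤ, xs n = xs 0)
      ↔ (∀ x ∈ ⋂ n : ℕ, (L ^ n) '' Metric.closedBall 0 1, L x = x)) ∧
    ((∀ x ∈ ⋂ n : ℕ, (L ^ n) '' Metric.closedBall 0 1, L x = x)
      ↔ (∀ ρ : Mstar,
          Filter.Tendsto
            (fun n : ℕ =>
              ‖(ContinuousLinearMap.apply ℂ ℂ ρ).comp (L ^ (n + 1)) -
                (ContinuousLinearMap.apply ℂ ℂ ρ).comp (L ^ n)‖)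
            Filter.atTop (nhds 0))) :=
  stmt7_general L hLnormal hLnorm
end

section
/- Let M⋆ be a complex Banach space with continuous dual M, let α : M → M be a normal linear isometry (not necessarily surjective), and let M_∞ = ∩_{n≥0} α^n(M). Then for every ρ ∈ M⋆, the sequence ‖ρ ∘ α^{n+1} − ρ ∘ α^n‖ is nonincreasing and converges, as n → ∞, to ‖(ρ ∘ α − ρ)↾_{M_∞}‖, the norm of the restriction of ρ ∘ α − ρ to M_∞. In particular, lim_{n→∞} ‖ρ ∘ α^{n+1} − ρ ∘ α^n‖ = 0 for every ρ ∈ M⋆ if and only if α(x) = x for every x ∈ M_∞. -/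
/-!
Normality of `α` means `α = aᵗ` for some `a : M⋆ → M⋆`, a contraction because `α` is isometric.
Then `ρ ∘ α^n` is evaluation at `a^n ρ`, so the sequence in question is `‖a^n μ‖` with
`μ = a ρ - ρ`; it is nonincreasing and tends to its infimum `L`. Every `x` in the unit ball of
`M_∞` is `α^n y` with `‖y‖ = ‖x‖`, whence `‖x μ‖ = ‖y (a^n μ)‖ ≤ ‖a^n μ‖`. Conversely, by
Banach–Alaoglu the weak*-compact sets `α^n(ball) ∩ {x | L ≤ ‖x μ‖}` decrease and are nonempty
(they contain `α^n g_n` for a norming functional `g_n` of `a^n μ`), so some `x` in the unit ball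
of `M_∞` has `‖x μ‖ ≥ L`.
-/

open ContinuousLinearMap Filter Metric StrongDual WeakDual

section Contraction

variable {𝕜 F : Type*} [RCLike 𝕜] [NormedAddCommGroup F] [NormedSpace 𝕜 F] {f : F →L[𝕜] F}

theorem norm_pow_apply_of_norm_map (hf : ∀ x, ‖f x‖ = ‖x‖) (n : ℕ) (x : F) :
    ‖(f ^ n) x‖ = ‖x‖ := by
  induction n with
  | zero => rfl
  | succ n ih => rw [pow_succ', mul_apply_eq_comp, hf, ih]

theorem antitone_norm_pow_apply (hf : ∀ x, ‖f x‖ ≤ ‖x‖) (x : F) :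
    Antitone fun n : ℕ => ‖(f ^ n) x‖ :=
  antitone_nat_of_succ_le fun n => by
    rw [pow_succ', mul_apply_eq_comp]
    exact hf _

theorem tendsto_norm_pow_apply_iInf (hf : ∀ x, ‖f x‖ ≤ ‖x‖) (x : F) :
    Tendsto (fun n : ℕ => ‖(f ^ n) x‖) atTop (nhds (⨅ n : ℕ, ‖(f ^ n) x‖)) :=
  tendsto_atTop_ciInf (antitone_norm_pow_apply hf x) ⟨0, by rintro _ ⟨n, rfl⟩; positivity⟩

end Contraction

section Transpose

variable {𝕜 E : Type*} [RCLike 𝕜] [NormedAddCommGroup E] [NormedSpace 𝕜 E]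
  {α : StrongDual 𝕜 E →L[𝕜] StrongDual 𝕜 E} {a : E →L[𝕜] E}

theorem pow_apply_apply_of_transpose (hα : ∀ x ρ, α x ρ = x (a ρ)) (n : ℕ)
    (x : StrongDual 𝕜 E) (ρ : E) : (α ^ n) x ρ = x ((a ^ n) ρ) := by
  induction n generalizing x with
  | zero => rfl
  | succ n ih => rw [pow_succ, mul_apply_eq_comp, ih, hα, pow_succ', mul_apply_eq_comp]

theorem norm_apply_le_of_transpose (hα : ∀ x ρ, α x ρ = x (a ρ))
    (hαle : ∀ x, ‖α x‖ ≤ ‖x‖) (ρ : E) : ‖a ρ‖ ≤ ‖ρ‖ :=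
  NormedSpace.norm_le_dual_bound 𝕜 _ (norm_nonneg ρ) fun x =>
    calc ‖x (a ρ)‖ = ‖α x ρ‖ := by rw [hα]
      _ ≤ ‖α x‖ * ‖ρ‖ := le_opNorm _ _
      _ ≤ ‖ρ‖ * ‖x‖ := by rw [mul_comm]; gcongr; exact hαle x

theorem apply_comp_pow_of_transpose (hα : ∀ x ρ, α x ρ = x (a ρ)) (n : ℕ) (ρ : E) :
    (apply 𝕜 𝕜 ρ).comp (α ^ n) = apply 𝕜 𝕜 ((a ^ n) ρ) := by
  ext x
  exact pow_apply_apply_of_transpose hα n x ρ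

theorem norm_apply_comp_pow_succ_sub_of_transpose (hα : ∀ x ρ, α x ρ = x (a ρ)) (n : ℕ)
    (ρ : E) :
    ‖(apply 𝕜 𝕜 ρ).comp (α ^ (n + 1)) - (apply 𝕜 𝕜 ρ).comp (α ^ n)‖ =
      ‖(a ^ n) (a ρ - ρ)‖ := by
  calc _ = ‖NormedSpace.inclusionInDoubleDualLi 𝕜 ((a ^ (n + 1)) ρ - (a ^ n) ρ)‖ := by
        rw [apply_comp_pow_of_transpose hα, apply_comp_pow_of_transpose hα,
          LinearIsometry.map_sub]
        rfl
    _ = _ := by rw [LinearIsometry.norm_map, pow_succ, mul_apply_eq_comp, map_sub]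

theorem apply_comp_sub_apply_of_transpose (hα : ∀ x ρ, α x ρ = x (a ρ)) (ρ : E)
    (x : StrongDual 𝕜 E) : ((apply 𝕜 𝕜 ρ).comp α - apply 𝕜 𝕜 ρ) x = x (a ρ - ρ) := by
  simp [hα]

theorem continuous_weakDual_transpose (hα : ∀ x ρ, α x ρ = x (a ρ)) :
    Continuous fun z : WeakDual 𝕜 E => toWeakDual (α (toStrongDual z)) :=
  continuous_of_continuous_eval fun ρ => by
    simpa only [toWeakDual_apply, hα, toStrongDual_apply] using eval_continuous (a ρ)

theorem isCompact_preimage_image_closedBall_of_transpose (hα : ∀ x ρ, α x ρ = x (a ρ))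
    (r : ℝ) :
    IsCompact (toStrongDual ⁻¹' (α '' closedBall (0 : StrongDual 𝕜 E) r)) := by
  have h : toStrongDual ⁻¹' (α '' closedBall 0 r) =
      (fun z : WeakDual 𝕜 E => toWeakDual (α (toStrongDual z))) ''
        (toStrongDual ⁻¹' closedBall 0 r) := by
    ext z
    constructor
    · rintro ⟨x, hx, hxz⟩
      exact ⟨toWeakDual x, by simpa using hx, by simp [hxz]⟩
    · rintro ⟨w, hw, rfl⟩
      exact ⟨toStrongDual w, hw, by simp⟩
  rw [h]
  exact (WeakDual.isCompact_closedBall 0 r).image (continuous_weakDual_transpose hα)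

theorem norm_apply_le_mul_norm_pow_apply_of_mem_range (hα : ∀ x ρ, α x ρ = x (a ρ))
    (hαiso : ∀ x, ‖α x‖ = ‖x‖) {n : ℕ} {x : StrongDual 𝕜 E} (hx : x ∈ Set.range (α ^ n))
    (μ : E) : ‖x μ‖ ≤ ‖x‖ * ‖(a ^ n) μ‖ := by
  obtain ⟨y, rfl⟩ := hx
  rw [pow_apply_apply_of_transpose hα, norm_pow_apply_of_norm_map hαiso]
  exact le_opNorm y _

theorem norm_apply_le_mul_iInf_of_mem_iInter_range (hα : ∀ x ρ, α x ρ = x (a ρ))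
    (hαiso : ∀ x, ‖α x‖ = ‖x‖) {x : StrongDual 𝕜 E} (hx : x ∈ ⋂ n : ℕ, Set.range (α ^ n))
    (μ : E) : ‖x μ‖ ≤ ‖x‖ * ⨅ n : ℕ, ‖(a ^ n) μ‖ := by
  rw [Real.mul_iInf_of_nonneg (norm_nonneg x)]
  exact le_ciInf fun n =>
    norm_apply_le_mul_norm_pow_apply_of_mem_range hα hαiso (Set.mem_iInter.1 hx n) μ

theorem exists_mem_iInter_range_iInf_le_norm_apply (hα : ∀ x ρ, α x ρ = x (a ρ))
    (hαle : ∀ x, ‖α x‖ ≤ ‖x‖) (μ : E) :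
    ∃ x ∈ (⋂ n : ℕ, Set.range (α ^ n)) ∩ closedBall 0 1, ⨅ n : ℕ, ‖(a ^ n) μ‖ ≤ ‖x μ‖ := by
  set L := ⨅ n : ℕ, ‖(a ^ n) μ‖
  set t : ℕ → Set (WeakDual 𝕜 E) := fun n =>
    toStrongDual ⁻¹' (⇑(α ^ n) '' closedBall 0 1) ∩ {z | L ≤ ‖z μ‖}
  have hclosed : IsClosed {z : WeakDual 𝕜 E | L ≤ ‖z μ‖} :=
    isClosed_le continuous_const (eval_continuous μ).norm
  have hcompact : ∀ n,
      IsCompact (toStrongDual ⁻¹' (⇑(α ^ n) '' closedBall (0 : StrongDual 𝕜 E) 1)) := fun n =>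
    isCompact_preimage_image_closedBall_of_transpose (pow_apply_apply_of_transpose hα n) 1
  have hanti : ∀ n, t (n + 1) ⊆ t n := by
    intro n
    refine Set.inter_subset_inter_left _ (Set.preimage_mono ?_)
    rintro _ ⟨y, hy, rfl⟩
    rw [mem_closedBall_zero_iff] at hy
    exact ⟨α y, mem_closedBall_zero_iff.2 ((hαle y).trans hy), by rw [pow_succ, mul_apply_eq_comp]⟩
  have hne : ∀ n, (t n).Nonempty := by
    intro n
    obtain ⟨g, hg, hgμ⟩ := exists_dual_vector'' 𝕜 ((a ^ n) μ)
    refine ⟨toWeakDual ((α ^ n) g), ⟨g, by simpa using hg, rfl⟩, ?_⟩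
    calc L ≤ ‖(a ^ n) μ‖ := ciInf_le ⟨0, by rintro _ ⟨m, rfl⟩; positivity⟩ n
      _ = ‖toWeakDual ((α ^ n) g) μ‖ := by
        rw [toWeakDual_apply, pow_apply_apply_of_transpose hα, hgμ, RCLike.norm_ofReal, abs_norm]
  obtain ⟨z, hz⟩ := IsCompact.nonempty_iInter_of_sequence_nonempty_isCompact_isClosed t hanti
    hne ((hcompact 0).inter_right hclosed) fun n => (hcompact n).isClosed.inter hclosed
  have hzt : ∀ n, z ∈ t n := Set.mem_iInter.1 hz
  obtain ⟨⟨x, hx, hxz⟩, hLz⟩ := hzt 0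
  refine ⟨toStrongDual z, ⟨Set.mem_iInter.2 fun n => ?_, ?_⟩, hLz⟩
  · obtain ⟨⟨y, -, hyz⟩, -⟩ := hzt n
    exact ⟨y, hyz⟩
  · rwa [← hxz, pow_zero, one_apply_eq_self]

theorem sSup_norm_apply_iInter_range_inter_closedBall (hα : ∀ x ρ, α x ρ = x (a ρ))
    (hαiso : ∀ x, ‖α x‖ = ‖x‖) (μ : E) :
    sSup ((fun x : StrongDual 𝕜 E => ‖x μ‖) '' ((⋂ n : ℕ, Set.range (α ^ n)) ∩ closedBall 0 1)) =
      ⨅ n : ℕ, ‖(a ^ n) μ‖ := by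
  have hle : ∀ s ∈ (fun x : StrongDual 𝕜 E => ‖x μ‖) ''
      ((⋂ n : ℕ, Set.range (α ^ n)) ∩ closedBall 0 1), s ≤ ⨅ n : ℕ, ‖(a ^ n) μ‖ := by
    rintro _ ⟨x, ⟨hx, hx1⟩, rfl⟩
    exact (norm_apply_le_mul_iInf_of_mem_iInter_range hα hαiso hx μ).trans
      (mul_le_of_le_one_left (Real.iInf_nonneg fun _ => norm_nonneg _)
        (mem_closedBall_zero_iff.1 hx1))
  obtain ⟨y, hy, hLy⟩ :=
    exists_mem_iInter_range_iInf_le_norm_apply hα (fun x => (hαiso x).le) μ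
  exact le_antisymm (csSup_le ⟨_, y, hy, rfl⟩ hle) (hLy.trans (le_csSup ⟨_, hle⟩ ⟨y, hy, rfl⟩))

theorem iInf_norm_pow_apply_eq_zero_iff (hα : ∀ x ρ, α x ρ = x (a ρ))
    (hαiso : ∀ x, ‖α x‖ = ‖x‖) (μ : E) :
    ⨅ n : ℕ, ‖(a ^ n) μ‖ = 0 ↔ ∀ x ∈ ⋂ n : ℕ, Set.range (α ^ n), x μ = 0 := by
  refine ⟨fun h x hx => ?_, fun h => ?_⟩
  · simpa only [h, mul_zero, norm_le_zero_iff] using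
      norm_apply_le_mul_iInf_of_mem_iInter_range hα hαiso hx μ
  · obtain ⟨y, ⟨hy, -⟩, hLy⟩ :=
      exists_mem_iInter_range_iInf_le_norm_apply hα (fun x => (hαiso x).le) μ
    exact le_antisymm (by simpa [h y hy] using hLy) (Real.iInf_nonneg fun _ => norm_nonneg _)

end Transpose

theorem stmt9_general {Mstar : Type*}
    [NormedAddCommGroup Mstar] [NormedSpace ℂ Mstar]
    (α : (Mstar →L[ℂ] ℂ) →L[ℂ] (Mstar →L[ℂ] ℂ))
    (hαnormal : ∃ a : Mstar →L[ℂ] Mstar,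
      ∀ (x : Mstar →L[ℂ] ℂ) (ρ : Mstar), α x ρ = x (a ρ))
    (hαiso : ∀ x : Mstar →L[ℂ] ℂ, ‖α x‖ = ‖x‖) :
    (∀ ρ : Mstar,
      Antitone (fun n : ℕ =>
        ‖(ContinuousLinearMap.apply ℂ ℂ ρ).comp (α ^ (n + 1)) -
          (ContinuousLinearMap.apply ℂ ℂ ρ).comp (α ^ n)‖) ∧
      Filter.Tendsto
        (fun n : ℕ =>
          ‖(ContinuousLinearMap.apply ℂ ℂ ρ).comp (α ^ (n + 1)) -
            (ContinuousLinearMap.apply ℂ ℂ ρ).comp (α ^ n)‖)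
        Filter.atTop
        (nhds (sSup ((fun x : Mstar →L[ℂ] ℂ =>
          ‖((ContinuousLinearMap.apply ℂ ℂ ρ).comp α -
              ContinuousLinearMap.apply ℂ ℂ ρ) x‖) ''
          ((⋂ n : ℕ, Set.range ⇑(α ^ n)) ∩ Metric.closedBall 0 1))))) ∧
    ((∀ ρ : Mstar,
        Filter.Tendsto
          (fun n : ℕ =>
            ‖(ContinuousLinearMap.apply ℂ ℂ ρ).comp (α ^ (n + 1)) -
              (ContinuousLinearMap.apply ℂ ℂ ρ).comp (α ^ n)‖)
          Filter.atTop (nhds 0))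
      ↔ (∀ x ∈ ⋂ n : ℕ, Set.range ⇑(α ^ n), α x = x)) := by
  obtain ⟨a, ha⟩ := hαnormal
  have hcontr : ∀ ρ, ‖a ρ‖ ≤ ‖ρ‖ := norm_apply_le_of_transpose ha fun x => (hαiso x).le
  simp only [norm_apply_comp_pow_succ_sub_of_transpose ha, apply_comp_sub_apply_of_transpose ha,
    sSup_norm_apply_iInter_range_inter_closedBall ha hαiso]
  have hlim := fun ρ => tendsto_norm_pow_apply_iInf hcontr (a ρ - ρ)
  refine ⟨fun ρ => ⟨antitone_norm_pow_apply hcontr _, hlim ρ⟩, ?_⟩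
  calc (∀ ρ, Tendsto (fun n => ‖(a ^ n) (a ρ - ρ)‖) atTop (nhds 0))
      ↔ ∀ ρ, ⨅ n : ℕ, ‖(a ^ n) (a ρ - ρ)‖ = 0 :=
        forall_congr' fun ρ => ⟨tendsto_nhds_unique (hlim ρ), fun h => h ▸ hlim ρ⟩
    _ ↔ ∀ ρ, ∀ x ∈ ⋂ n : ℕ, Set.range (α ^ n), x (a ρ - ρ) = 0 :=
        forall_congr' fun ρ => iInf_norm_pow_apply_eq_zero_iff ha hαiso _
    _ ↔ ∀ x ∈ ⋂ n : ℕ, Set.range (α ^ n), α x = x := by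
        simp only [map_sub, ← ha, sub_eq_zero]
        exact ⟨fun h x hx => ext fun ρ => h ρ x hx, fun h ρ x hx => by rw [h x hx]⟩

/-- Let `M` be the continuous dual of a complex Banach space `M⋆`,
`α : M → M` a normal linear isometry (not necessarily surjective), and
`M_∞ = ⋂_{n ≥ 0} α^n(M)`.  Then for every `ρ ∈ M⋆` the sequence
`‖ρ ∘ α^{n+1} − ρ ∘ α^n‖` is nonincreasing and converges to the norm of the
restriction of `ρ ∘ α − ρ` to `M_∞` (expressed as the supremum of
`‖(ρ ∘ α − ρ)(x)‖` over the unit ball of `M_∞`).  In particular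
`‖ρ ∘ α^{n+1} − ρ ∘ α^n‖ → 0` for every `ρ ∈ M⋆` iff `α(x) = x` for every
`x ∈ M_∞`. -/
theorem stmt9 {Mstar : Type*}
    [NormedAddCommGroup Mstar] [NormedSpace ℂ Mstar] [CompleteSpace Mstar]
    (α : (Mstar →L[ℂ] ℂ) →L[ℂ] (Mstar →L[ℂ] ℂ))
    (hαnormal : ∃ a : Mstar →L[ℂ] Mstar,
      ∀ (x : Mstar →L[ℂ] ℂ) (ρ : Mstar), α x ρ = x (a ρ))
    (hαiso : ∀ x : Mstar →L[ℂ] ℂ, ‖α x‖ = ‖x‖) :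
    (∀ ρ : Mstar,
      Antitone (fun n : ℕ =>
        ‖(ContinuousLinearMap.apply ℂ ℂ ρ).comp (α ^ (n + 1)) -
          (ContinuousLinearMap.apply ℂ ℂ ρ).comp (α ^ n)‖) ∧
      Filter.Tendsto
        (fun n : ℕ =>
          ‖(ContinuousLinearMap.apply ℂ ℂ ρ).comp (α ^ (n + 1)) -
            (ContinuousLinearMap.apply ℂ ℂ ρ).comp (α ^ n)‖)
        Filter.atTop
        (nhds (sSup ((fun x : Mstar →L[ℂ] ℂ =>
          ‖((ContinuousLinearMap.apply ℂ ℂ ρ).comp α -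
              ContinuousLinearMap.apply ℂ ℂ ρ) x‖) ''
          ((⋂ n : ℕ, Set.range ⇑(α ^ n)) ∩ Metric.closedBall 0 1))))) ∧
    ((∀ ρ : Mstar,
        Filter.Tendsto
          (fun n : ℕ =>
            ‖(ContinuousLinearMap.apply ℂ ℂ ρ).comp (α ^ (n + 1)) -
              (ContinuousLinearMap.apply ℂ ℂ ρ).comp (α ^ n)‖)
          Filter.atTop (nhds 0))
      ↔ (∀ x ∈ ⋂ n : ℕ, Set.range ⇑(α ^ n), α x = x)) :=
  stmt9_general α hαnormal hαiso
end

section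
/- Let V be a finite-dimensional complex normed space and let T : V → V be a power-bounded linear map, i.e., sup_{n≥1} ‖T^n‖ < ∞. Then ‖T^{n+1} − T^n‖ → 0 as n → ∞ if and only if every eigenvalue λ of T with |λ| = 1 satisfies λ = 1. -/
/-!
Power-boundedness puts every eigenvalue in the closed unit disc and excludes Jordan blocks at `1`:
if `T` fixes `w = (T - 1) v` then `T ^ n v = v + n • w`, so `w = 0`; that is,
`ker (T - 1) ∩ range (T - 1) = 0`. As `T ^ (n + 1) - T ^ n = T ^ n (T - 1)` factors through the
`T`-invariant subspace `range (T - 1)`, it suffices that the restriction `S` of `T` to it has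
spectral radius `< 1`, for then `‖S ^ n‖ → 0` by Gelfand's formula. An eigenvalue of `S` lies in
the closed disc and is not `1`, so under the hypothesis it lies in the open disc. Conversely, an
eigenvector `v` for `λ` with `‖λ‖ = 1` has `‖(T ^ (n + 1) - T ^ n) v‖ = ‖λ - 1‖ ‖v‖` for all `n`.
-/

open Filter Topology

theorem tendsto_norm_pow_atTop_nhds_zero_of_spectralRadius_lt_one {A : Type*} [NormedRing A]
    [NormedAlgebra ℂ A] [CompleteSpace A] {a : A} (ha : spectralRadius ℂ a < 1) :
    Tendsto (fun n : ℕ => ‖a ^ n‖) atTop (𝓝 0) := by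
  obtain ⟨r, hr, hr1⟩ := ENNReal.lt_iff_exists_nnreal_btwn.mp ha
  have hpow : ∀ᶠ n : ℕ in atTop, ‖a ^ n‖ ≤ (r : ℝ) ^ n := by
    filter_upwards [(spectrum.pow_nnnorm_pow_one_div_tendsto_nhds_spectralRadius a
      ).eventually_lt_const hr, eventually_gt_atTop 0] with n hn hn0
    rw [one_div, ENNReal.rpow_inv_lt_iff (by positivity), ENNReal.rpow_natCast,
      ← ENNReal.coe_pow, ENNReal.coe_lt_coe] at hn
    exact_mod_cast hn.le
  exact squeeze_zero' (.of_forall fun n => norm_nonneg _) hpow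
    (tendsto_pow_atTop_nhds_zero_of_lt_one r.coe_nonneg (by exact_mod_cast hr1))

namespace ContinuousLinearMap

theorem coe_pow_restrict_apply {R M : Type*} [Semiring R] [TopologicalSpace M]
    [AddCommMonoid M] [Module R M] {T : M →L[R] M} {p : Submodule R M} (h : ∀ x ∈ p, T x ∈ p)
    (n : ℕ) (x : p) : ((T.restrict h ^ n) x : M) = (T ^ n) x := by
  induction n with
  | zero => rfl
  | succ n ih =>
    rw [pow_succ', mul_apply_eq_comp, coe_restrict_apply, ih, pow_succ', mul_apply_eq_comp]

theorem spectralRadius_lt_one_of_forall_hasEigenvalue {E : Type*}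
    [NormedAddCommGroup E] [NormedSpace ℂ E] [FiniteDimensional ℂ E] (S : E →L[ℂ] E)
    (hS : ∀ μ, Module.End.HasEigenvalue (S : E →ₗ[ℂ] E) μ → ‖μ‖ < 1) :
    spectralRadius ℂ S < 1 := by
  have : CompleteSpace E := FiniteDimensional.complete ℂ E
  rcases (spectrum ℂ S).eq_empty_or_nonempty with hempty | hne
  · simp [spectralRadius, hempty]
  · refine spectrum.spectralRadius_lt_of_forall_lt_of_nonempty hne fun μ hμ => ?_
    rw [spectrum_eq, ← Module.End.hasEigenvalue_iff_mem_spectrum] at hμ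
    exact_mod_cast hS μ hμ

section

variable {𝕜 E : Type*} [NontriviallyNormedField 𝕜] [NormedAddCommGroup E] [NormedSpace 𝕜 E]
  {T : E →L[𝕜] E} {μ : 𝕜} {v : E} {C : ℝ}

theorem hasEigenvalue_iff_not_injective :
    Module.End.HasEigenvalue (T : E →ₗ[𝕜] E) μ ↔ ¬ Function.Injective ⇑(T - μ • 1) := by
  rw [Module.End.hasEigenvalue_iff, Module.End.eigenspace_def, Ne, LinearMap.ker_eq_bot]
  rfl

theorem pow_apply_of_apply_eq_smul (h : T v = μ • v) (n : ℕ) :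
    (T ^ n) v = μ ^ n • v := by
  induction n with
  | zero => simp
  | succ n ih => rw [pow_succ', mul_apply_eq_comp, ih, map_smul, h, smul_smul, pow_succ]

theorem norm_le_one_of_apply_eq_smul (hC : ∀ n, ‖T ^ n‖ ≤ C)
    (hv : v ≠ 0) (h : T v = μ • v) : ‖μ‖ ≤ 1 := by
  have hbound : ∀ n : ℕ, ‖μ‖ ^ n ≤ C := fun n => by
    refine le_of_mul_le_mul_right ?_ (norm_pos_iff.mpr hv)
    calc ‖μ‖ ^ n * ‖v‖ = ‖(T ^ n) v‖ := by
          rw [pow_apply_of_apply_eq_smul h, norm_smul, norm_pow]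
      _ ≤ C * ‖v‖ := (T ^ n).le_of_opNorm_le (hC n) v
  by_contra! hμ
  obtain ⟨n, hn⟩ := pow_unbounded_of_one_lt C hμ
  exact (hbound n).not_gt hn

theorem eq_one_of_tendsto_norm_pow_succ_sub_pow
    (hT : Tendsto (fun n : ℕ => ‖T ^ (n + 1) - T ^ n‖) atTop (𝓝 0))
    (hv : v ≠ 0) (h : T v = μ • v) (hμ : ‖μ‖ = 1) : μ = 1 := by
  have hle : ∀ n : ℕ, ‖μ - 1‖ ≤ ‖T ^ (n + 1) - T ^ n‖ := fun n => by
    refine le_of_mul_le_mul_right ?_ (norm_pos_iff.mpr hv)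
    calc ‖μ - 1‖ * ‖v‖ = ‖(T ^ (n + 1) - T ^ n) v‖ := by
          rw [sub_apply, pow_apply_of_apply_eq_smul h, pow_apply_of_apply_eq_smul h, ← sub_smul,
            pow_succ, ← mul_sub_one, norm_smul, norm_mul, norm_pow, hμ, one_pow, one_mul]
      _ ≤ ‖T ^ (n + 1) - T ^ n‖ * ‖v‖ := le_opNorm _ v
  exact sub_eq_zero.mp (norm_le_zero_iff.mp (ge_of_tendsto' hT hle))

end

section

variable {𝕜 E : Type*} [RCLike 𝕜] [NormedAddCommGroup E] [NormedSpace 𝕜 E]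
  {T : E →L[𝕜] E} {C : ℝ}

theorem pow_apply_eq_add_smul_sub_one_apply {v : E}
    (h : T ((T - 1) v) = (T - 1) v) (n : ℕ) : (T ^ n) v = v + (n : 𝕜) • (T - 1) v := by
  induction n with
  | zero => simp
  | succ n ih =>
    have hTv : T v = v + (T - 1) v := by simp
    rw [pow_succ', mul_apply_eq_comp, ih, map_add, map_smul, h, hTv]
    push_cast
    module

theorem disjoint_ker_range_sub_one (hC : ∀ n, ‖T ^ n‖ ≤ C) :
    Disjoint (LinearMap.ker ((T - 1 : E →L[𝕜] E) : E →ₗ[𝕜] E))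
      (LinearMap.range ((T - 1 : E →L[𝕜] E) : E →ₗ[𝕜] E)) := by
  refine Submodule.disjoint_def.mpr ?_
  rintro _ hw ⟨v, rfl⟩
  have hfix : T ((T - 1) v) = (T - 1) v := by simpa [sub_eq_zero] using hw
  have hbound : ∀ n : ℕ, n * ‖(T - 1) v‖ ≤ (C + 1) * ‖v‖ := fun n => calc
    n * ‖(T - 1) v‖ = ‖(T ^ n) v - v‖ := by
      rw [pow_apply_eq_add_smul_sub_one_apply hfix, add_sub_cancel_left, norm_smul,
        RCLike.norm_natCast]
    _ ≤ ‖(T ^ n) v‖ + ‖v‖ := norm_sub_le _ _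
    _ ≤ C * ‖v‖ + ‖v‖ := by gcongr; exact (T ^ n).le_of_opNorm_le (hC n) v
    _ = (C + 1) * ‖v‖ := by ring
  by_contra hne
  have hpos : 0 < ‖(T - 1) v‖ := norm_pos_iff.mpr hne
  obtain ⟨n, hn⟩ := exists_nat_gt ((C + 1) * ‖v‖ / ‖(T - 1) v‖)
  rw [div_lt_iff₀ hpos] at hn
  exact (hbound n).not_gt hn

end

section

variable {E : Type*} [NormedAddCommGroup E] [NormedSpace ℂ E] [FiniteDimensional ℂ E]
  {T : E →L[ℂ] E} {C : ℝ}

theorem tendsto_norm_pow_succ_sub_pow (hC : ∀ n, ‖T ^ n‖ ≤ C)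
    (h : ∀ μ : ℂ, ‖μ‖ = 1 → Module.End.HasEigenvalue (T : E →ₗ[ℂ] E) μ → μ = 1) :
    Tendsto (fun n : ℕ => ‖T ^ (n + 1) - T ^ n‖) atTop (𝓝 0) := by
  set R := LinearMap.range ((T - 1 : E →L[ℂ] E) : E →ₗ[ℂ] E)
  have hTR : ∀ x ∈ R, T x ∈ R := by
    rintro _ ⟨v, rfl⟩
    exact ⟨T v, by simp⟩
  set S := T.restrict hTR
  have hS : ∀ μ, Module.End.HasEigenvalue (S : R →ₗ[ℂ] R) μ → ‖μ‖ < 1 := by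
    intro μ hμ
    obtain ⟨w, hw⟩ := hμ.exists_hasEigenvector
    have hTw : T w = μ • (w : E) := congrArg Subtype.val hw.apply_eq_smul
    have hw0 : (w : E) ≠ 0 := by simpa using hw.2
    refine (T.norm_le_one_of_apply_eq_smul hC hw0 hTw).lt_of_ne fun hμ1 => hw0 ?_
    obtain rfl := h μ hμ1 (Module.End.hasEigenvalue_of_hasEigenvector
      ⟨Module.End.mem_eigenspace_iff.mpr hTw, hw0⟩)
    exact Submodule.disjoint_def.mp (T.disjoint_ker_range_sub_one hC) w
      (by simpa [sub_eq_zero] using hTw) w.2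
  have hS0 := tendsto_norm_pow_atTop_nhds_zero_of_spectralRadius_lt_one
    (S.spectralRadius_lt_one_of_forall_hasEigenvalue hS)
  have hle : ∀ n : ℕ, ‖T ^ (n + 1) - T ^ n‖ ≤ ‖S ^ n‖ * ‖T - 1‖ := fun n => by
    rw [pow_succ, ← mul_sub_one]
    refine opNorm_le_bound _ (by positivity) fun v => ?_
    calc ‖(T ^ n * (T - 1)) v‖ = ‖(S ^ n) ⟨(T - 1) v, v, rfl⟩‖ := by
          rw [mul_apply_eq_comp]
          exact congrArg norm (coe_pow_restrict_apply hTR n ⟨_, v, rfl⟩).symm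
      _ ≤ ‖S ^ n‖ * ‖(T - 1) v‖ := le_opNorm _ _
      _ ≤ ‖S ^ n‖ * (‖T - 1‖ * ‖v‖) := by gcongr; exact le_opNorm _ _
      _ = ‖S ^ n‖ * ‖T - 1‖ * ‖v‖ := by ring
  exact squeeze_zero (fun n => norm_nonneg _) hle (by simpa using hS0.mul_const ‖T - 1‖)

end

end ContinuousLinearMap

/-- Let `V` be a finite-dimensional complex normed space and
`T : V → V` a power-bounded linear map (`sup_{n ≥ 1} ‖T^n‖ < ∞`).  Then
`‖T^{n+1} − T^n‖ → 0` as `n → ∞` iff every eigenvalue `λ` of `T` with `|λ| = 1`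
satisfies `λ = 1` (an eigenvalue being a `λ ∈ ℂ` for which `T − λ·id` is not
injective). -/
theorem stmt10 {V : Type*} [NormedAddCommGroup V] [NormedSpace ℂ V]
    [FiniteDimensional ℂ V]
    (T : V →L[ℂ] V) (hT : ∃ C : ℝ, ∀ n : ℕ, 1 ≤ n → ‖T ^ n‖ ≤ C) :
    Filter.Tendsto (fun n : ℕ => ‖T ^ (n + 1) - T ^ n‖) Filter.atTop (nhds 0)
      ↔ ∀ lam : ℂ, ‖lam‖ = 1 →
          ¬ Function.Injective ⇑(T - lam • (1 : V →L[ℂ] V)) → lam = 1 := by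
  obtain ⟨C, hC⟩ := hT
  have hbound : ∀ n, ‖T ^ n‖ ≤ max C ‖(1 : V →L[ℂ] V)‖ := fun n => by
    rcases n with _ | n
    · simp
    · exact (hC _ n.succ_pos).trans (le_max_left _ _)
  simp only [← ContinuousLinearMap.hasEigenvalue_iff_not_injective]
  constructor
  · intro htend μ hμ hμT
    obtain ⟨v, hv⟩ := hμT.exists_hasEigenvector
    exact T.eq_one_of_tendsto_norm_pow_succ_sub_pow htend hv.2 hv.apply_eq_smul hμ
  · exact T.tendsto_norm_pow_succ_sub_pow hbound
end

section
/- Let V be a finite-dimensional complex normed space and let T : V → V be a power-bounded linear map, i.e., sup_{n≥1} ‖T^n‖ < ∞. Let N ⊆ V be the linear span of all eigenvectors of T corresponding to eigenvalues of modulus one, i.e., N = Σ_{|λ|=1} ker(T − λ·id). Then there is a strictly increasing sequence of positive integers n₁ < n₂ < ⋯ such that T^{n_k} converges in operator norm to a linear map Q satisfying Q ∘ Q = Q and range(Q) = N; moreover, Q is the unique idempotent linear map that is a cluster point of the sequence (T^n)_{n≥1}. -/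
/-!
Let `S = {x | Tⁿ x → 0}` and let `N` be the span of the unimodular eigenvectors. Generalized
eigenvectors for `|μ| < 1` lie in `S`, while power-boundedness rules out eigenvalues with
`|μ| > 1` and nontrivial Jordan blocks for `|μ| = 1`; hence `V = N ⊔ S`.
Every cluster point `B` of `(Tⁿ)` vanishes on `S` and multiplies each unimodular eigenvector by a
nonzero scalar, so any `P` with `P B = B` is the identity on `N`. For an idempotent cluster point
take `P = B`; this gives uniqueness. For existence, let `T^{kᵢ} → B` and let `Q` be a cluster point
of `T^{k_{i+1} - kᵢ}` (along gaps that grow); then `T^{k_{i+1}} = T^{k_{i+1} - kᵢ} T^{kᵢ}` gives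
`Q B = B`.
-/
open Filter Topology Bornology Set

lemma tendsto_choose_mul_pow_sub_of_norm_lt_one {𝕜 : Type*} [NormedField 𝕜] (j : ℕ) {μ : 𝕜}
    (hμ : ‖μ‖ < 1) : Tendsto (fun n => (n.choose j : 𝕜) * μ ^ (n - j)) atTop (𝓝 0) := by
  rw [← tendsto_add_atTop_iff_nat j]
  simpa using (summable_choose_mul_geometric_of_norm_lt_one j hμ).tendsto_atTop_zero

lemma StrictMono.exists_subseq_gaps_strictMono {k : ℕ → ℕ} (hk : StrictMono k) :
    ∃ ψ : ℕ → ℕ, StrictMono ψ ∧ StrictMono fun i => k (ψ (i + 1)) - k (ψ i) := by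
  -- `k (ψ (i + 1)) > 2 k (ψ i)`, so each gap exceeds `k (ψ i)` and hence the previous gap.
  set ψ : ℕ → ℕ := fun i => (fun p => 2 * k p + 1)^[i] 0
  have hψ (i : ℕ) : ψ (i + 1) = 2 * k (ψ i) + 1 := Function.iterate_succ_apply' _ _ _
  refine ⟨ψ, strictMono_nat_of_lt_succ fun i => ?_, strictMono_nat_of_lt_succ fun i => ?_⟩
  · have := hk.le_apply (x := ψ i)
    have := hψ i
    omega
  · have h1 := hψ (i + 1)
    have h2 := hk.le_apply (x := ψ (i + 1 + 1))
    have h3 := hψ i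
    have h4 := hk.le_apply (x := ψ (i + 1))
    omega

namespace LinearMap
variable {R M N : Type*} [Semiring R] [AddCommMonoid M] [AddCommMonoid N] [Module R M] [Module R N]
  {p q : Submodule R M}

lemma ext_of_sup_eq_top {f g : M →ₗ[R] N} (hpq : p ⊔ q = ⊤) (hp : ∀ x ∈ p, f x = g x)
    (hq : ∀ x ∈ q, f x = g x) : f = g :=
  eqLocus_eq_top.1 <| top_unique <| hpq ▸ sup_le hp hq

variable {f : M →ₗ[R] M}

lemma comp_self_of_sup_eq_top (hpq : p ⊔ q = ⊤) (hp : ∀ x ∈ p, f x = x)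
    (hq : ∀ x ∈ q, f x = 0) : f ∘ₗ f = f :=
  ext_of_sup_eq_top hpq (fun x hx => by simp [hp x hx]) (fun x hx => by simp [hq x hx])

lemma range_eq_of_sup_eq_top (hpq : p ⊔ q = ⊤) (hp : ∀ x ∈ p, f x = x)
    (hq : ∀ x ∈ q, f x = 0) : range f = p := by
  refine le_antisymm ?_ fun x hx => ⟨x, hp x hx⟩
  rintro _ ⟨x, rfl⟩
  obtain ⟨y, hy, z, hz, rfl⟩ := Submodule.mem_sup.1 (hpq ▸ Submodule.mem_top : x ∈ p ⊔ q)
  simpa [hp y hy, hq z hz]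

end LinearMap

namespace Module.End

section Algebra
variable {R M : Type*} [CommRing R] [AddCommGroup M] [Module R M]

lemma pow_apply_eq_sum_of_pow_sub_smul_apply_eq_zero (f : End R M) (μ : R) {k n : ℕ} {x : M}
    (hx : ((f - μ • 1) ^ k) x = 0) (hkn : k ≤ n) :
    (f ^ n) x = ∑ j ∈ Finset.range k, n.choose j • μ ^ (n - j) • ((f - μ • 1) ^ j) x := by
  have hf : f = (f - μ • 1) + algebraMap R (End R M) μ := by
    rw [Algebra.algebraMap_eq_smul_one, sub_add_cancel]
  conv_lhs => rw [hf, (Algebra.commute_algebraMap_right μ (f - μ • 1)).add_pow]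
  simp only [← map_pow, LinearMap.coe_sum, Finset.sum_apply, mul_apply, natCast_apply,
    algebraMap_end_apply, map_smul, map_nsmul]
  symm
  apply Finset.sum_subset (Finset.range_subset_range.2 (by omega))
  intro j _ hj
  rw [pow_map_zero_of_le (by simpa using hj) hx, smul_zero, smul_zero]

lemma maxGenEigenspace_le_eigenspace {f : End R M} {μ : R}
    (h : ∀ x, (f - μ • 1) x ∈ f.eigenspace μ → x ∈ f.eigenspace μ) :
    f.maxGenEigenspace μ ≤ f.eigenspace μ := by
  intro x hx
  obtain ⟨k, hk⟩ := (mem_maxGenEigenspace f μ x).1 hx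
  clear hx
  induction k generalizing x with
  | zero => simp_all
  | succ k ih =>
    rw [pow_succ, mul_apply] at hk
    exact h x (ih hk)
end Algebra

section Normed
variable {𝕜 V : Type*} [NormedField 𝕜] [NormedAddCommGroup V] [NormedSpace 𝕜 V]

def stableSubmodule (f : End 𝕜 V) : Submodule 𝕜 V where
  carrier := {x | Tendsto (fun n => (f ^ n) x) atTop (𝓝 0)}
  zero_mem' := by simp
  add_mem' {x y} hx hy := by simpa using hx.add hy
  smul_mem' c x hx := by simpa using hx.const_smul c

lemma mem_stableSubmodule {f : End 𝕜 V} {x : V} :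
    x ∈ f.stableSubmodule ↔ Tendsto (fun n => (f ^ n) x) atTop (𝓝 0) := Iff.rfl

lemma maxGenEigenspace_le_stableSubmodule (f : End 𝕜 V) {μ : 𝕜} (hμ : ‖μ‖ < 1) :
    f.maxGenEigenspace μ ≤ f.stableSubmodule := by
  intro x hx
  obtain ⟨k, hk⟩ := (mem_maxGenEigenspace f μ x).1 hx
  have hsum : Tendsto
      (fun n => ∑ j ∈ Finset.range k, n.choose j • μ ^ (n - j) • ((f - μ • 1) ^ j) x)
      atTop (𝓝 0) := by
    simpa [← Nat.cast_smul_eq_nsmul 𝕜, smul_smul] using tendsto_finsetSum (Finset.range k)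
      fun j _ => (tendsto_choose_mul_pow_sub_of_norm_lt_one j hμ).smul_const (((f - μ • 1) ^ j) x)
  refine hsum.congr' ?_
  filter_upwards [eventually_ge_atTop k] with n hn
  exact (f.pow_apply_eq_sum_of_pow_sub_smul_apply_eq_zero μ hk hn).symm

lemma eigenspace_eq_bot_of_one_lt_norm {f : End 𝕜 V}
    (hf : ∀ x, IsBounded (range fun n => (f ^ n) x)) {μ : 𝕜} (hμ : 1 < ‖μ‖) :
    f.eigenspace μ = ⊥ := by
  refine eq_bot_iff.2 fun x hx => (Submodule.mem_bot 𝕜).2 ?_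
  by_contra hx0
  obtain ⟨C, hC⟩ := isBounded_iff_forall_norm_le.1 (hf x)
  obtain ⟨n, hn⟩ := pow_unbounded_of_one_lt (C / ‖x‖) hμ
  have hxpos : 0 < ‖x‖ := norm_pos_iff.2 hx0
  have : ‖(f ^ n) x‖ ≤ C := hC _ ⟨n, rfl⟩
  rw [HasEigenvector.pow_apply ⟨hx, hx0⟩, norm_smul, norm_pow] at this
  rw [div_lt_iff₀ hxpos] at hn
  linarith

end Normed

section RCLike
variable {𝕜 V : Type*} [RCLike 𝕜] [NormedAddCommGroup V] [NormedSpace 𝕜 V]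

lemma sub_smul_apply_eq_zero_of_norm_eq_one {f : End 𝕜 V} {μ : 𝕜} (hμ : ‖μ‖ = 1) {x : V}
    (hx : IsBounded (range fun n => (f ^ n) x)) (h2 : ((f - μ • 1) ^ (2 : ℕ)) x = 0) :
    (f - μ • 1) x = 0 := by
  obtain ⟨C, hC⟩ := isBounded_iff_forall_norm_le.1 hx
  have key (n : ℕ) (hn : 2 ≤ n) : n * ‖(f - μ • 1) x‖ ≤ C + ‖x‖ := by
    have h := f.pow_apply_eq_sum_of_pow_sub_smul_apply_eq_zero μ h2 hn
    simp only [Finset.sum_range_succ, Finset.sum_range_zero] at h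
    calc (n : ℝ) * ‖(f - μ • 1) x‖ = ‖(f ^ n) x - μ ^ n • x‖ := by
          rw [h]; simp [← Nat.cast_smul_eq_nsmul 𝕜, norm_smul, hμ]
      _ ≤ ‖(f ^ n) x‖ + ‖μ ^ n • x‖ := norm_sub_le _ _
      _ ≤ C + ‖x‖ := by
          gcongr
          · exact hC _ ⟨n, rfl⟩
          · simp [norm_smul, hμ]
  refine norm_le_zero_iff.1 (ge_of_tendsto (tendsto_const_div_atTop_nhds_zero_nat (C + ‖x‖)) ?_)
  filter_upwards [eventually_ge_atTop 2] with n hn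
  rw [le_div_iff₀' (by positivity)]
  exact key n hn

end RCLike

theorem iSup_eigenspace_sup_stableSubmodule_eq_top {V : Type*} [NormedAddCommGroup V]
    [NormedSpace ℂ V] [FiniteDimensional ℂ V] {f : End ℂ V}
    (hf : ∀ x, IsBounded (range fun n => (f ^ n) x)) :
    (⨆ μ : {μ : ℂ // ‖μ‖ = 1}, f.eigenspace μ) ⊔ f.stableSubmodule = ⊤ := by
  rw [eq_top_iff, ← iSup_maxGenEigenspace_eq_top f]
  refine iSup_le fun μ => ?_
  rcases lt_trichotomy ‖μ‖ 1 with hμ | hμ | hμ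
  · exact le_sup_of_le_right (f.maxGenEigenspace_le_stableSubmodule hμ)
  · refine le_sup_of_le_left ((maxGenEigenspace_le_eigenspace fun x hx => ?_).trans
      (le_iSup (fun μ : {μ : ℂ // ‖μ‖ = 1} => f.eigenspace μ) ⟨μ, hμ⟩))
    rw [eigenspace_def, LinearMap.mem_ker] at hx ⊢
    exact sub_smul_apply_eq_zero_of_norm_eq_one hμ (hf x) (by rwa [pow_two, mul_apply])
  · have hbot := eigenspace_eq_bot_of_one_lt_norm hf hμ
    refine (maxGenEigenspace_le_eigenspace fun x hx => ?_).trans (hbot.le.trans bot_le)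
    rw [hbot, Submodule.mem_bot] at hx
    rwa [eigenspace_def]

end Module.End

section ClusterPoints
variable {𝕜 V : Type*} [RCLike 𝕜] [NormedAddCommGroup V] [NormedSpace 𝕜 V] {T B : V →L[𝕜] V}
  {s : ℕ → ℕ}

lemma apply_eq_zero_of_tendsto_pow (hs : Tendsto s atTop atTop)
    (hB : Tendsto (fun i => T ^ s i) atTop (𝓝 B)) {x : V}
    (hx : x ∈ Module.End.stableSubmodule (T : Module.End 𝕜 V)) : B x = 0 := by
  refine tendsto_nhds_unique (((continuous_eval_const x).tendsto B).comp hB) ?_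
  simpa [Function.comp_def, Module.End.mem_stableSubmodule, ← ContinuousLinearMap.toLinearMap_pow]
    using hx.comp hs

lemma exists_ne_zero_apply_eq_smul_of_tendsto_pow (hB : Tendsto (fun i => T ^ s i) atTop (𝓝 B))
    {μ : 𝕜} (hμ : ‖μ‖ = 1) {v : V} (hv : Module.End.HasEigenvector (T : Module.End 𝕜 V) μ v) :
    ∃ a : 𝕜, a ≠ 0 ∧ B v = a • v := by
  have hlim : Tendsto (fun i => μ ^ s i • v) atTop (𝓝 (B v)) := by
    refine (((continuous_eval_const v).tendsto B).comp hB).congr fun i => ?_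
    simpa [← ContinuousLinearMap.toLinearMap_pow] using hv.pow_apply (s i)
  have hspan : B v ∈ 𝕜 ∙ v :=
    (Submodule.span 𝕜 {v}).closed_of_finiteDimensional.mem_of_tendsto hlim <|
      .of_forall fun i => Submodule.smul_mem _ _ (Submodule.mem_span_singleton_self v)
  obtain ⟨a, ha⟩ := Submodule.mem_span_singleton.1 hspan
  have hnorm : ‖B v‖ = ‖v‖ := tendsto_nhds_unique hlim.norm (by simp [norm_smul, hμ])
  refine ⟨a, ?_, ha.symm⟩
  rintro rfl
  rw [← ha, zero_smul, norm_zero, eq_comm, norm_eq_zero] at hnorm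
  exact hv.2 hnorm

lemma apply_eq_self_of_mul_eq_of_tendsto_pow (hB : Tendsto (fun i => T ^ s i) atTop (𝓝 B))
    {P : V →L[𝕜] V} (hPB : P * B = B) {x : V}
    (hx : x ∈ ⨆ μ : {μ : 𝕜 // ‖μ‖ = 1}, Module.End.eigenspace (T : Module.End 𝕜 V) μ) :
    P x = x := by
  induction hx using Submodule.iSup_induction' with
  | mem μ v hv =>
    rcases eq_or_ne v 0 with rfl | hv0
    · exact map_zero P
    obtain ⟨a, ha, hBv⟩ := exists_ne_zero_apply_eq_smul_of_tendsto_pow hB μ.2 ⟨hv, hv0⟩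
    have hPBv : P (B v) = B v := congr($hPB v)
    rw [hBv, map_smul] at hPBv
    exact smul_right_injective V ha hPBv
  | zero => exact map_zero P
  | add x y _ _ hx hy => rw [map_add, hx, hy]

end ClusterPoints

theorem exists_tendsto_pow_mul_eq_of_isBounded {R : Type*} [NormedRing R] [ProperSpace R] {a : R}
    (ha : IsBounded (range (a ^ ·))) :
    ∃ q b : R, (∃ e : ℕ → ℕ, StrictMono e ∧ (∀ i, 1 ≤ e i) ∧
      Tendsto (fun i => a ^ e i) atTop (𝓝 q)) ∧
      (∃ s : ℕ → ℕ, Tendsto (fun i => a ^ s i) atTop (𝓝 b)) ∧ q * b = b := by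
  obtain ⟨b, -, k, hk, hb⟩ := tendsto_subseq_of_bounded ha fun n => mem_range_self n
  obtain ⟨ψ, hψ, he⟩ := hk.exists_subseq_gaps_strictMono
  have hkψ : StrictMono (k ∘ ψ) := hk.comp hψ
  obtain ⟨q, -, σ, hσ, hq⟩ := tendsto_subseq_of_bounded ha
    fun i => mem_range_self (k (ψ (i + 1)) - k (ψ i))
  refine ⟨q, b, ⟨_, he.comp hσ, fun i => ?_, hq⟩, ⟨k, hb⟩, ?_⟩
  · have : k (ψ (σ i)) < k (ψ (σ i + 1)) := hkψ (Nat.lt_add_one (σ i))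
    simp only [Function.comp_apply]
    omega
  · have hσ' : Tendsto σ atTop atTop := hσ.tendsto_atTop
    have h1 : Tendsto (fun i => a ^ k (ψ (σ i + 1))) atTop (𝓝 b) :=
      hb.comp ((hψ.tendsto_atTop.comp (tendsto_add_atTop_nat 1)).comp hσ')
    have h2 : Tendsto (fun i => a ^ k (ψ (σ i + 1))) atTop (𝓝 (q * b)) := by
      refine (hq.mul (hb.comp (hψ.tendsto_atTop.comp hσ'))).congr fun i => ?_
      have : k (ψ (σ i)) ≤ k (ψ (σ i + 1)) := hkψ.monotone (Nat.le_add_right (σ i) 1)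
      simp only [Function.comp_apply]
      rw [← pow_add, Nat.sub_add_cancel this]
    exact tendsto_nhds_unique h2 h1

/-- Let `V` be a finite-dimensional complex normed space and
`T : V → V` a power-bounded linear map.  Let `N ⊆ V` be the span of all eigenvectors
of `T` corresponding to eigenvalues of modulus one, i.e.
`N = Σ_{|λ|=1} ker(T − λ·id)`.  Then there is a strictly increasing sequence of
positive integers `n₁ < n₂ < ⋯` such that `T^{n_k}` converges in operator norm to an
idempotent linear map `Q` with range `N`; moreover `Q` is the unique idempotent linear
map that is a cluster point of the sequence `(T^n)_{n ≥ 1}`. -/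
theorem stmt11 {V : Type*} [NormedAddCommGroup V] [NormedSpace ℂ V]
    [FiniteDimensional ℂ V]
    (T : V →L[ℂ] V) (hT : ∃ C : ℝ, ∀ n : ℕ, 1 ≤ n → ‖T ^ n‖ ≤ C) :
    ∃ Q : V →L[ℂ] V,
      (∃ nk : ℕ → ℕ, StrictMono nk ∧ (∀ k, 1 ≤ nk k) ∧
        Filter.Tendsto (fun k : ℕ => T ^ nk k) Filter.atTop (nhds Q)) ∧
      Q.comp Q = Q ∧
      LinearMap.range (Q : V →ₗ[ℂ] V) =
        (⨆ lam : {lam : ℂ // ‖lam‖ = 1},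
          LinearMap.ker ((T - (lam : ℂ) • (1 : V →L[ℂ] V) : V →L[ℂ] V) : V →ₗ[ℂ] V)) ∧
      (∀ Q' : V →L[ℂ] V, Q'.comp Q' = Q' →
        (∃ mk : ℕ → ℕ, StrictMono mk ∧ (∀ k, 1 ≤ mk k) ∧
          Filter.Tendsto (fun k : ℕ => T ^ mk k) Filter.atTop (nhds Q')) →
        Q' = Q) := by
  obtain ⟨C, hC⟩ := hT
  have hbdd : IsBounded (range (T ^ ·)) := by
    refine isBounded_iff_forall_norm_le.2 ⟨max C 1, ?_⟩
    rintro _ ⟨_ | n, rfl⟩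
    · exact ContinuousLinearMap.norm_id_le.trans (le_max_right C 1)
    · exact (hC _ n.succ_pos).trans (le_max_left C 1)
  have horbit (x : V) : IsBounded (range fun n => ((T : Module.End ℂ V) ^ n) x) :=
    ((ContinuousLinearMap.apply ℂ V x).lipschitz.isBounded_image hbdd).subset <| by
      rintro _ ⟨n, rfl⟩
      exact ⟨T ^ n, ⟨n, rfl⟩, by simp [Module.End.pow_apply]⟩
  set N : Submodule ℂ V := ⨆ lam : {lam : ℂ // ‖lam‖ = 1},
    LinearMap.ker ((T - (lam : ℂ) • (1 : V →L[ℂ] V) : V →L[ℂ] V) : V →ₗ[ℂ] V)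
  set S := Module.End.stableSubmodule (T : Module.End ℂ V)
  have hN : N = ⨆ μ : {μ : ℂ // ‖μ‖ = 1}, Module.End.eigenspace (T : Module.End ℂ V) μ := by
    simp [N, Module.End.eigenspace_def]
  have hNS : N ⊔ S = ⊤ := hN ▸ Module.End.iSup_eigenspace_sup_stableSubmodule_eq_top horbit
  obtain ⟨Q, A, ⟨nk, hnk, hnk1, hQ⟩, ⟨s, hA⟩, hQA⟩ := exists_tendsto_pow_mul_eq_of_isBounded hbdd
  have hQN : ∀ x ∈ N, Q x = x := fun x hx =>
    apply_eq_self_of_mul_eq_of_tendsto_pow hA hQA (hN ▸ hx)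
  have hQS : ∀ x ∈ S, Q x = 0 := fun x => apply_eq_zero_of_tendsto_pow hnk.tendsto_atTop hQ
  refine ⟨Q, ⟨nk, hnk, hnk1, hQ⟩,
    ContinuousLinearMap.coe_injective (LinearMap.comp_self_of_sup_eq_top hNS hQN hQS),
    LinearMap.range_eq_of_sup_eq_top hNS hQN hQS, ?_⟩
  rintro Q' hQ' ⟨mk, hmk, -, hQ'lim⟩
  refine ContinuousLinearMap.coe_injective (LinearMap.ext_of_sup_eq_top hNS (fun x hx => ?_)
    fun x hx => ?_)
  · exact (apply_eq_self_of_mul_eq_of_tendsto_pow hQ'lim hQ' (hN ▸ hx)).trans (hQN x hx).symm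
  · exact (apply_eq_zero_of_tendsto_pow hmk.tendsto_atTop hQ'lim hx).trans (hQS x hx).symm
end

section
/- Let P = (p_{ij}) be an n × n matrix with nonnegative real entries and all row sums equal to 1, and suppose P is irreducible in the sense that for every pair of indices i, j there exists an integer m ≥ 1 with (P^m)_{ij} > 0. Then there exists an integer k with 1 ≤ k ≤ n such that the set of complex eigenvalues of P of modulus one is exactly the set {e^{2πij/k} : j = 0, 1, …, k−1} of all k-th roots of unity, and each of these eigenvalues is a simple root of the characteristic polynomial of P (algebraic multiplicity one). Moreover, if k > 1, there is a partition of the index set {1, …, n} into k nonempty sets C₀, C₁, …, C_{k−1} such that whenever p_{ij} > 0 and i ∈ C_t, then j ∈ C_{t+1 (mod k)}. -/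
/-!
If `P v = μ v` with `‖μ‖ = 1`, the maximum principle for the stochastic matrix `P` together with
irreducibility forces `‖v i‖` to be constant, and then equality in the triangle inequality forces
`v j = μ * v i` along every edge `i → j` (i.e. `0 < P i j`). So the unimodular eigenvalues are
exactly the phases `μ` by which some unimodular vector gets multiplied along every edge. These
form a subgroup of `ℂˣ`, finite because its elements are roots of the characteristic polynomial,
hence the group of `k`-th roots of unity, `k` being its order.

Two eigenvectors for the same `μ` have a ratio that is constant along edges, hence constant, so
each such eigenspace is a line; there is no Jordan block because the powers of `P` are bounded,
while along a Jordan chain of a unimodular eigenvalue they grow linearly. The cyclic classes are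
the level sets of the phase vector `w` of a primitive `k`-th root `ζ`: `w i = ζ ^ t * w i₀`
determines `t` modulo `k`.
-/

open Matrix Polynomial

section Graph

variable {ι : Type*} {A : Matrix ι ι ℝ}

theorem Matrix.IsIrreducible.mem_of_forall_pos_imp (hA : A.IsIrreducible) {S : Set ι}
    (hS : ∀ i j, 0 < A i j → i ∈ S → j ∈ S) {i : ι} (hi : i ∈ S) (j : ι) : j ∈ S := by
  let := toQuiver A
  obtain ⟨p, -⟩ := hA.connected i j
  induction p with
  | nil => exact hi
  | cons _ e ih => exact hS _ _ e.down ih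

theorem Matrix.IsIrreducible.eq_of_forall_pos_imp_eq {α : Type*} (hA : A.IsIrreducible)
    {f : ι → α} (hf : ∀ i j, 0 < A i j → f j = f i) (i j : ι) : f j = f i :=
  hA.mem_of_forall_pos_imp (S := {l | f l = f i}) (fun a b hab ha => (hf a b hab).trans ha)
    rfl j

theorem Matrix.eq_pow_mul_of_pow_apply_pos [Fintype ι] [DecidableEq ι] {M : Type*} [Monoid M]
    (hA : ∀ i j, 0 ≤ A i j) {f : ι → M} {μ : M} (hf : ∀ i j, 0 < A i j → f j = μ * f i)
    {m : ℕ} {i j : ι} (h : 0 < (A ^ m) i j) : f j = μ ^ m * f i := by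
  let := toQuiver A
  obtain ⟨p, rfl⟩ := (pow_apply_pos_iff_nonempty_path hA m i j).mp h
  clear h
  induction p with
  | nil => simp
  | cons p e ih => rw [hf _ _ e.down, ih, Quiver.Path.length_cons, pow_succ', mul_assoc]

end Graph

theorem eq_of_le_of_le_sum_mul {ι : Type*} [Fintype ι] {w x : ι → ℝ} {M : ℝ}
    (hw : ∀ l, 0 ≤ w l) (hw1 : ∑ l, w l = 1) (hx : ∀ l, x l ≤ M) (hM : M ≤ ∑ l, w l * x l)
    {l : ι} (hl : 0 < w l) : x l = M := by
  have hle : ∀ l ∈ Finset.univ, w l * x l ≤ w l * M :=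
    fun l _ => mul_le_mul_of_nonneg_left (hx l) (hw l)
  have hsum : ∑ l, w l * x l = ∑ l, w l * M := by
    refine le_antisymm (Finset.sum_le_sum hle) ?_
    rwa [← Finset.sum_mul, hw1, one_mul]
  exact mul_left_cancel₀ hl.ne' ((Finset.sum_eq_sum_iff_of_le hle).mp hsum l (Finset.mem_univ l))

theorem eq_sum_smul_of_norm_sum_smul_eq {ι F : Type*} [Fintype ι] [NormedAddCommGroup F]
    [InnerProductSpace ℝ F] {w : ι → ℝ} {v : ι → F} {M : ℝ}
    (hw : ∀ l, 0 ≤ w l) (hw1 : ∑ l, w l = 1) (hv : ∀ l, ‖v l‖ = M)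
    (hsum : ‖∑ l, w l • v l‖ = M) {l : ι} (hl : 0 < w l) : v l = ∑ l, w l • v l := by
  set c := ∑ l, w l • v l
  have hinner : inner ℝ c (v l) = M * M := by
    refine eq_of_le_of_le_sum_mul (x := fun l => inner ℝ c (v l)) hw hw1 (fun a => ?_)
      (le_of_eq ?_) hl
    · simpa only [hsum, hv] using real_inner_le_norm c (v a)
    · calc M * M = inner ℝ c c := by rw [real_inner_self_eq_norm_mul_norm, hsum]
        _ = ∑ l, w l * inner ℝ c (v l) := by simp only [c, inner_sum, real_inner_smul_right]
  have hsmul : M • c = M • v l := by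
    have := inner_eq_norm_mul_iff_real.mp (by rw [hinner, hsum, hv] :
      inner ℝ c (v l) = ‖c‖ * ‖v l‖)
    rwa [hsum, hv] at this
  rcases eq_or_ne M 0 with rfl | hM
  · rw [norm_eq_zero.mp (hv l), norm_eq_zero.mp hsum]
  · exact (smul_right_injective F hM hsmul).symm

theorem Matrix.isRoot_charpoly_iff_exists_mulVec_eq_smul {ι K : Type*} [Fintype ι] [DecidableEq ι]
    [Field K] (A : Matrix ι ι K) (μ : K) :
    A.charpoly.IsRoot μ ↔ ∃ v ≠ 0, A *ᵥ v = μ • v := by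
  rw [← charpoly_toLin', ← Module.End.hasEigenvalue_iff_isRoot_charpoly,
    Module.End.hasEigenvalue_iff, Submodule.ne_bot_iff]
  simp only [Module.End.mem_eigenspace_iff, toLin'_apply, and_comm]

theorem Subgroup.eq_rootsOfUnity_natCard (G : Subgroup ℂˣ) [Finite G] :
    G = rootsOfUnity (Nat.card G) ℂ := by
  have : NeZero (Nat.card G) := ⟨Nat.card_pos.ne'⟩
  refine Subgroup.eq_of_le_of_card_ge (fun μ hμ => ?_) (Complex.card_rootsOfUnity _).le
  rw [mem_rootsOfUnity]
  exact congrArg Subtype.val (pow_card_eq_one' (x := (⟨μ, hμ⟩ : G)))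

theorem Module.End.pow_succ_apply_of_apply_eq_smul_add {R M : Type*} [CommRing R]
    [AddCommGroup M] [Module R M] {f : Module.End R M} {μ : R} {x y : M}
    (hy : f y = μ • y) (hx : f x = μ • x + y) (m : ℕ) :
    (f ^ (m + 1)) x = μ ^ (m + 1) • x + ((m + 1) * μ ^ m) • y := by
  induction m with
  | zero => simpa using hx
  | succ m ih =>
    rw [pow_succ', Module.End.mul_apply, ih, map_add, map_smul, map_smul, hx, hy]
    push_cast
    module

theorem Module.End.apply_eq_smul_of_norm_pow_apply_le {𝕜 E : Type*} [RCLike 𝕜]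
    [NormedAddCommGroup E] [NormedSpace 𝕜 E] {f : Module.End 𝕜 E} {C : ℝ}
    (hf : ∀ m x, ‖(f ^ m) x‖ ≤ C * ‖x‖) {μ : 𝕜} (hμ : ‖μ‖ = 1) {x : E}
    (hx : ((f - μ • 1 : Module.End 𝕜 E) ^ 2) x = 0) : f x = μ • x := by
  set y := f x - μ • x
  have hy : f y = μ • y := by
    rw [pow_two, Module.End.mul_apply] at hx
    have hx : (f - μ • 1) y = 0 := hx
    simpa [sub_eq_zero] using hx
  have hgrowth : ∀ m : ℕ, (m + 1) * ‖y‖ ≤ (C + 1) * ‖x‖ := fun m => by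
    have h := Module.End.pow_succ_apply_of_apply_eq_smul_add hy (x := x) (by simp [y]) m
    calc (m + 1) * ‖y‖ = ‖(f ^ (m + 1)) x - μ ^ (m + 1) • x‖ := by
          rw [h, add_sub_cancel_left, norm_smul, norm_mul, norm_pow, hμ, one_pow, mul_one]
          norm_cast
      _ ≤ C * ‖x‖ + ‖x‖ := by
          grw [norm_sub_le, hf, norm_smul, norm_pow, hμ, one_pow, one_mul]
      _ = (C + 1) * ‖x‖ := by ring
  suffices y = 0 from (sub_eq_zero.mp this)
  by_contra hy0
  have hy0 : 0 < ‖y‖ := norm_pos_iff.mpr hy0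
  obtain ⟨m, hm⟩ := exists_nat_gt ((C + 1) * ‖x‖ / ‖y‖)
  have := hgrowth m
  rw [div_lt_iff₀ hy0] at hm
  nlinarith

theorem Module.End.maxGenEigenspace_eq_eigenspace_of_norm_pow_apply_le {𝕜 E : Type*} [RCLike 𝕜]
    [NormedAddCommGroup E] [NormedSpace 𝕜 E] {f : Module.End 𝕜 E} {C : ℝ}
    (hf : ∀ m x, ‖(f ^ m) x‖ ≤ C * ‖x‖) {μ : 𝕜} (hμ : ‖μ‖ = 1) :
    f.maxGenEigenspace μ = f.eigenspace μ := by
  refine le_antisymm (fun x hx => ?_) Module.End.eigenspace_le_maxGenEigenspace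
  obtain ⟨k, hk⟩ := (f.mem_maxGenEigenspace μ x).mp hx
  rw [Module.End.mem_eigenspace_iff]
  clear hx
  induction k generalizing x with
  | zero => simp_all
  | succ k ih =>
    rw [pow_succ, Module.End.mul_apply] at hk
    refine Module.End.apply_eq_smul_of_norm_pow_apply_le hf hμ ?_
    rw [pow_two, Module.End.mul_apply, LinearMap.sub_apply, ih _ hk]
    simp

/-- For an irreducible stochastic `P` these are exactly the unimodular eigenvalues
(`Matrix.IsIrreducible.mem_phaseShiftSubgroup_iff`); in this form they visibly form a group. -/
def Matrix.phaseShiftSubgroup {ι : Type*} (P : Matrix ι ι ℝ) : Subgroup ℂˣ where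
  carrier := {μ | ∃ w : ι → ℂ, (∀ i, ‖w i‖ = 1) ∧ ∀ i j, 0 < P i j → w j = μ * w i}
  one_mem' := ⟨1, fun _ => norm_one, fun _ _ _ => by simp⟩
  mul_mem' := by
    rintro μ ν ⟨w, hw, hμ⟩ ⟨w', hw', hν⟩
    refine ⟨w * w', fun i => by simp [hw, hw'], fun i j hij => ?_⟩
    simp only [Pi.mul_apply, Units.val_mul, hμ i j hij, hν i j hij]
    ring
  inv_mem' := by
    rintro μ ⟨w, hw, hμ⟩
    refine ⟨w⁻¹, fun i => by simp [hw], fun i j hij => ?_⟩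
    simp [hμ i j hij, mul_comm]

namespace Matrix

variable {ι : Type*} [Fintype ι] {P : Matrix ι ι ℝ}

theorem map_ofReal_mulVec_apply (P : Matrix ι ι ℝ) (v : ι → ℂ) (i : ι) :
    (P.map (fun r : ℝ => (r : ℂ)) *ᵥ v) i = ∑ l, P i l • v l := by
  simp [mulVec, dotProduct, Complex.real_smul]

theorem norm_map_ofReal_mulVec_apply_le (hP : ∀ i j, 0 ≤ P i j) (v : ι → ℂ) (i : ι) :
    ‖(P.map (fun r : ℝ => (r : ℂ)) *ᵥ v) i‖ ≤ ∑ l, P i l * ‖v l‖ := by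
  rw [map_ofReal_mulVec_apply]
  refine (norm_sum_le _ _).trans_eq (Finset.sum_congr rfl fun l _ => ?_)
  rw [norm_smul, Real.norm_of_nonneg (hP i l)]

variable [DecidableEq ι]

theorem norm_map_ofReal_mulVec_le (hP : P ∈ rowStochastic ℝ ι) (v : ι → ℂ) :
    ‖P.map (fun r : ℝ => (r : ℂ)) *ᵥ v‖ ≤ ‖v‖ := by
  refine (pi_norm_le_iff_of_nonneg (norm_nonneg v)).mpr fun i => ?_
  calc _ ≤ ∑ l, P i l * ‖v l‖ := norm_map_ofReal_mulVec_apply_le (fun _ _ => hP.1 _ _) v i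
    _ ≤ ∑ l, P i l * ‖v‖ :=
      Finset.sum_le_sum fun l _ => mul_le_mul_of_nonneg_left (norm_le_pi_norm v l) (hP.1 i l)
    _ = ‖v‖ := by rw [← Finset.sum_mul, sum_row_of_mem_rowStochastic hP, one_mul]

theorem map_ofReal_mulVec_eq_smul_of_forall_pos (hP : P ∈ rowStochastic ℝ ι) {w : ι → ℂ}
    {μ : ℂ} (hw : ∀ i j, 0 < P i j → w j = μ * w i) :
    P.map (fun r : ℝ => (r : ℂ)) *ᵥ w = μ • w := by
  ext i
  have hterm : ∀ l, P i l • w l = P i l • (μ * w i) := fun l => by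
    rcases (hP.1 i l).lt_or_eq with h | h
    · rw [hw i l h]
    · rw [← h, zero_smul, zero_smul]
  rw [map_ofReal_mulVec_apply, Finset.sum_congr rfl fun l _ => hterm l, ← Finset.sum_smul,
    sum_row_of_mem_rowStochastic hP, one_smul, Pi.smul_apply, smul_eq_mul]

theorem norm_eq_one_of_mem_phaseShiftSubgroup [Nonempty ι] (hP : P ∈ rowStochastic ℝ ι)
    {μ : ℂˣ} (hμ : μ ∈ phaseShiftSubgroup P) : ‖(μ : ℂ)‖ = 1 := by
  -- `P` contracts the sup norm, so `‖ν‖ ≤ 1`; applied to `μ⁻¹` this gives equality.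
  have hle : ∀ ν ∈ phaseShiftSubgroup P, ‖(ν : ℂ)‖ ≤ 1 := by
    rintro ν ⟨w, hw1, hw⟩
    obtain ⟨i⟩ := ‹Nonempty ι›
    calc ‖(ν : ℂ)‖ = ‖((ν : ℂ) • w) i‖ := by rw [Pi.smul_apply, norm_smul, hw1, mul_one]
      _ ≤ ‖w‖ := by
        rw [← map_ofReal_mulVec_eq_smul_of_forall_pos hP hw]
        exact (norm_le_pi_norm _ i).trans (norm_map_ofReal_mulVec_le hP w)
      _ ≤ 1 := (pi_norm_le_iff_of_nonneg zero_le_one).mpr fun i => (hw1 i).le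
  have hinv := hle _ (inv_mem hμ)
  rw [Units.val_inv_eq_inv_val, norm_inv, inv_le_one₀ (norm_pos_iff.mpr μ.ne_zero)] at hinv
  exact le_antisymm (hle μ hμ) hinv

namespace IsIrreducible

theorem norm_apply_eq_of_mulVec_eq_smul (hirr : P.IsIrreducible) (hP : P ∈ rowStochastic ℝ ι)
    {μ : ℂ} (hμ : ‖μ‖ = 1) {v : ι → ℂ} (hv : P.map (fun r : ℝ => (r : ℂ)) *ᵥ v = μ • v)
    (i : ι) : ‖v i‖ = ‖v‖ := by
  obtain ⟨i₀, -, hi₀⟩ := Finset.univ.exists_mem_eq_sup ⟨i, Finset.mem_univ i⟩ fun l => ‖v l‖₊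
  have hmax : ‖v i₀‖ = ‖v‖ := by rw [Pi.norm_def, hi₀, coe_nnnorm]
  refine hirr.mem_of_forall_pos_imp (S := {l | ‖v l‖ = ‖v‖}) (fun a b hab ha => ?_) hmax i
  refine eq_of_le_of_le_sum_mul (fun l => hP.1 a l) (sum_row_of_mem_rowStochastic hP a)
    (norm_le_pi_norm v) ?_ hab
  calc ‖v‖ = ‖(μ • v) a‖ := by rw [Pi.smul_apply, norm_smul, hμ, one_mul, ha]
    _ ≤ _ := hv ▸ norm_map_ofReal_mulVec_apply_le hP.1 v a

theorem apply_eq_mul_of_mulVec_eq_smul (hirr : P.IsIrreducible) (hP : P ∈ rowStochastic ℝ ι)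
    {μ : ℂ} (hμ : ‖μ‖ = 1) {v : ι → ℂ} (hv : P.map (fun r : ℝ => (r : ℂ)) *ᵥ v = μ • v)
    {i j : ι} (hij : 0 < P i j) : v j = μ * v i := by
  have hrow : μ * v i = ∑ l, P i l • v l := by
    rw [← map_ofReal_mulVec_apply, hv, Pi.smul_apply, smul_eq_mul]
  rw [hrow]
  refine eq_sum_smul_of_norm_sum_smul_eq (hP.1 i) (sum_row_of_mem_rowStochastic hP i)
    (hirr.norm_apply_eq_of_mulVec_eq_smul hP hμ hv) ?_ hij
  rw [← hrow, norm_mul, hμ, one_mul, hirr.norm_apply_eq_of_mulVec_eq_smul hP hμ hv i]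

theorem exists_phase_vector (hirr : P.IsIrreducible) (hP : P ∈ rowStochastic ℝ ι) {μ : ℂ}
    (hμ : ‖μ‖ = 1) (hroot : (P.map (fun r : ℝ => (r : ℂ))).charpoly.IsRoot μ) :
    ∃ w : ι → ℂ, (∀ i, ‖w i‖ = 1) ∧ ∀ i j, 0 < P i j → w j = μ * w i := by
  obtain ⟨v, hv0, hv⟩ := (isRoot_charpoly_iff_exists_mulVec_eq_smul _ μ).mp hroot
  have hnorm := hirr.norm_apply_eq_of_mulVec_eq_smul hP hμ hv
  have hv0 : ‖v‖ ≠ 0 := norm_ne_zero_iff.mpr hv0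
  refine ⟨fun i => v i / ‖v‖, fun i => ?_, fun i j hij => ?_⟩
  · rw [norm_div, hnorm, Complex.norm_real, norm_norm, div_self hv0]
  · dsimp only
    rw [hirr.apply_eq_mul_of_mulVec_eq_smul hP hμ hv hij, mul_div_assoc]

theorem mem_phaseShiftSubgroup_iff [Nonempty ι] (hirr : P.IsIrreducible)
    (hP : P ∈ rowStochastic ℝ ι) {μ : ℂˣ} :
    μ ∈ phaseShiftSubgroup P ↔
      ‖(μ : ℂ)‖ = 1 ∧ (P.map (fun r : ℝ => (r : ℂ))).charpoly.IsRoot μ := by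
  refine ⟨fun hμ => ⟨norm_eq_one_of_mem_phaseShiftSubgroup hP hμ, ?_⟩,
    fun ⟨hμ, hroot⟩ => hirr.exists_phase_vector hP hμ hroot⟩
  obtain ⟨w, hw1, hw⟩ := hμ
  obtain ⟨i⟩ := ‹Nonempty ι›
  refine (isRoot_charpoly_iff_exists_mulVec_eq_smul _ _).mpr
    ⟨w, fun h => ?_, map_ofReal_mulVec_eq_smul_of_forall_pos hP hw⟩
  simpa [h] using hw1 i

theorem finite_phaseShiftSubgroup [Nonempty ι] (hirr : P.IsIrreducible)
    (hP : P ∈ rowStochastic ℝ ι) : Finite (phaseShiftSubgroup P) := by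
  have hroots := finite_setOfPred_isRoot (P.map (fun r : ℝ => (r : ℂ))).charpoly_monic.ne_zero
  refine Set.Finite.to_subtype ((hroots.preimage Units.val_injective.injOn).subset fun μ hμ => ?_)
  exact ((hirr.mem_phaseShiftSubgroup_iff hP).mp hμ).2

theorem unimodular_isRoot_charpoly_iff [Nonempty ι] (hirr : P.IsIrreducible)
    (hP : P ∈ rowStochastic ℝ ι) {μ : ℂ} :
    (‖μ‖ = 1 ∧ (P.map (fun r : ℝ => (r : ℂ))).charpoly.IsRoot μ) ↔
      μ ^ Nat.card (phaseShiftSubgroup P) = 1 := by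
  have := hirr.finite_phaseShiftSubgroup hP
  have hG := (phaseShiftSubgroup P).eq_rootsOfUnity_natCard
  constructor
  · rintro ⟨hμ, hroot⟩
    have hmem : Units.mk0 μ (norm_ne_zero_iff.mp (hμ ▸ one_ne_zero)) ∈ phaseShiftSubgroup P :=
      (hirr.mem_phaseShiftSubgroup_iff hP).mpr ⟨hμ, hroot⟩
    rw [hG, mem_rootsOfUnity'] at hmem
    exact hmem
  · intro hμ
    have hμ0 : μ ≠ 0 := by
      rintro rfl
      exact zero_ne_one ((zero_pow Nat.card_pos.ne').symm.trans hμ)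
    have hmem : Units.mk0 μ hμ0 ∈ rootsOfUnity (Nat.card (phaseShiftSubgroup P)) ℂ :=
      (mem_rootsOfUnity' _ _).mpr hμ
    rw [← hG] at hmem
    exact (hirr.mem_phaseShiftSubgroup_iff hP).mp hmem

theorem natCard_phaseShiftSubgroup_le [Nonempty ι] (hirr : P.IsIrreducible)
    (hP : P ∈ rowStochastic ℝ ι) : Nat.card (phaseShiftSubgroup P) ≤ Fintype.card ι := by
  have := hirr.finite_phaseShiftSubgroup hP
  set k := Nat.card (phaseShiftSubgroup P)
  have hk : 0 < k := Nat.card_pos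
  have hmonic := (P.map (fun r : ℝ => (r : ℂ))).charpoly_monic
  calc k = (nthRootsFinset k (1 : ℂ)).card :=
        (Complex.isPrimitiveRoot_exp k hk.ne').card_nthRootsFinset.symm
    _ ≤ (P.map (fun r : ℝ => (r : ℂ))).charpoly.natDegree :=
        card_le_degree_of_subset_roots fun z hz => (mem_roots hmonic.ne_zero).mpr
          ((hirr.unimodular_isRoot_charpoly_iff hP).mpr ((mem_nthRootsFinset hk 1).mp hz)).2
    _ = Fintype.card ι := charpoly_natDegree_eq_dim _

theorem eigenspace_toLin'_eq_span (hirr : P.IsIrreducible) (hP : P ∈ rowStochastic ℝ ι)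
    {μ : ℂ} (hμ : ‖μ‖ = 1) {v : ι → ℂ} (hv : P.map (fun r : ℝ => (r : ℂ)) *ᵥ v = μ • v)
    (hv0 : v ≠ 0) :
    Module.End.eigenspace (toLin' (P.map (fun r : ℝ => (r : ℂ)))) μ = Submodule.span ℂ {v} := by
  have hvi : ∀ i, v i ≠ 0 := fun i h => hv0 <| norm_eq_zero.mp <|
    (hirr.norm_apply_eq_of_mulVec_eq_smul hP hμ hv i).symm.trans (norm_eq_zero.mpr h)
  have hμ0 : μ ≠ 0 := norm_ne_zero_iff.mp (hμ ▸ one_ne_zero)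
  refine le_antisymm (fun x hx => ?_) ((Submodule.span_singleton_le_iff_mem _ _).mpr
    (Module.End.mem_eigenspace_iff.mpr (by rwa [toLin'_apply])))
  rw [Module.End.mem_eigenspace_iff, toLin'_apply] at hx
  have hratio : ∀ i j, x j / v j = x i / v i := hirr.eq_of_forall_pos_imp_eq fun i j hij => by
    rw [hirr.apply_eq_mul_of_mulVec_eq_smul hP hμ hx hij,
      hirr.apply_eq_mul_of_mulVec_eq_smul hP hμ hv hij, mul_div_mul_left _ _ hμ0]
  obtain ⟨i₀⟩ : Nonempty ι := not_isEmpty_iff.mp fun _ => hv0 (Subsingleton.elim _ _)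
  refine Submodule.mem_span_singleton.mpr ⟨x i₀ / v i₀, funext fun i => ?_⟩
  rw [Pi.smul_apply, smul_eq_mul, ← hratio i₀ i, div_mul_cancel₀ _ (hvi i)]

theorem rootMultiplicity_charpoly_eq_one (hirr : P.IsIrreducible) (hP : P ∈ rowStochastic ℝ ι)
    {μ : ℂ} (hμ : ‖μ‖ = 1) (hroot : (P.map (fun r : ℝ => (r : ℂ))).charpoly.IsRoot μ) :
    (P.map (fun r : ℝ => (r : ℂ))).charpoly.rootMultiplicity μ = 1 := by
  obtain ⟨v, hv0, hv⟩ := (isRoot_charpoly_iff_exists_mulVec_eq_smul _ μ).mp hroot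
  have hbounded : ∀ m x, ‖(toLin' (P.map (fun r : ℝ => (r : ℂ))) ^ m) x‖ ≤ 1 * ‖x‖ := by
    intro m x
    have hpow : (P.map (fun r : ℝ => (r : ℂ))) ^ m = (P ^ m).map (fun r : ℝ => (r : ℂ)) :=
      (P.map_pow Complex.ofRealHom m).symm
    rw [one_mul, ← toLin'_pow, toLin'_apply, hpow]
    exact norm_map_ofReal_mulVec_le (pow_mem hP m) x
  rw [← charpoly_toLin', ← LinearMap.finrank_maxGenEigenspace_eq,
    Module.End.maxGenEigenspace_eq_eigenspace_of_norm_pow_apply_le hbounded hμ,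
    hirr.eigenspace_toLin'_eq_span hP hμ hv hv0, finrank_span_singleton hv0]

theorem exists_cyclic_classes [Nonempty ι] (hirr : P.IsIrreducible) (hP : P ∈ rowStochastic ℝ ι)
    {k : ℕ} [NeZero k] {ζ : ℂ} (hζ : IsPrimitiveRoot ζ k) {w : ι → ℂ} (hw1 : ∀ i, ‖w i‖ = 1)
    (hw : ∀ i j, 0 < P i j → w j = ζ * w i) :
    ∃ C : ι → ZMod k, Function.Surjective C ∧ ∀ i j, 0 < P i j → C j = C i + 1 := by
  obtain ⟨i₀⟩ := ‹Nonempty ι›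
  have hw₀ : w i₀ ≠ 0 := norm_ne_zero_iff.mp ((hw1 i₀).symm ▸ one_ne_zero)
  have hreach : ∀ i, ∃ m : ℕ, w i = ζ ^ m * w i₀ := fun i => by
    obtain ⟨m, -, hm⟩ := (isIrreducible_iff_exists_pow_pos hP.1).mp hirr i₀ i
    exact ⟨m, eq_pow_mul_of_pow_apply_pos hP.1 hw hm⟩
  choose m hm using hreach
  have hlabel : ∀ i (a : ℕ), w i = ζ ^ a * w i₀ → (m i : ZMod k) = a := fun i a ha => by
    rw [ZMod.natCast_eq_natCast_iff, hζ.eq_orderOf]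
    exact (hζ.isOfFinOrder (NeZero.ne k)).pow_eq_pow_iff_modEq.mp
      (mul_right_cancel₀ hw₀ ((hm i).symm.trans ha))
  refine ⟨fun i => m i, fun t => ?_, fun i j hij => ?_⟩
  · obtain ⟨j, -, hj⟩ := (Finset.sum_pos_iff_of_nonneg fun j _ => (pow_mem hP t.val).1 i₀ j).mp
      ((sum_row_of_mem_rowStochastic (pow_mem hP t.val) i₀).symm ▸ one_pos)
    exact ⟨j, (hlabel j _ (eq_pow_mul_of_pow_apply_pos hP.1 hw hj)).trans (ZMod.natCast_zmod_val t)⟩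
  · have := hlabel j (m i + 1) (by rw [hw i j hij, hm i, pow_succ']; ring)
    push_cast at this
    exact this

end IsIrreducible

end Matrix

/-- Frobenius.  Let `P` be an irreducible `n × n` stochastic matrix
(nonnegative entries, row sums one, and for all `i, j` some power `P^m`, `m ≥ 1`, has
`(P^m)_{ij} > 0`).  Then there is a `k` with `1 ≤ k ≤ n` such that the set of complex
eigenvalues of `P` of modulus one (the modulus-one roots of the characteristic
polynomial of `P` over `ℂ`) is exactly the set of `k`-th roots of unity, each being a
simple root of the characteristic polynomial (root multiplicity one).  Moreover if
`k > 1` then the index set can be partitioned into `k` nonempty classes, labelled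
cyclically by `ZMod k`, such that `p_{ij} > 0` and `i ∈ C_t` imply `j ∈ C_{t+1}`. -/
theorem stmt12 {n : ℕ} (hn : 0 < n) (P : Matrix (Fin n) (Fin n) ℝ)
    (hpos : ∀ i j, 0 ≤ P i j)
    (hrow : ∀ i, ∑ j, P i j = 1)
    (hirr : ∀ i j, ∃ m : ℕ, 1 ≤ m ∧ 0 < (P ^ m) i j) :
    ∃ k : ℕ, 1 ≤ k ∧ k ≤ n ∧
      {lam : ℂ | ‖lam‖ = 1 ∧
          (P.map (fun r : ℝ => (r : ℂ))).charpoly.IsRoot lam}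
        = {lam : ℂ | lam ^ k = 1} ∧
      (∀ lam : ℂ, lam ^ k = 1 →
        (P.map (fun r : ℝ => (r : ℂ))).charpoly.rootMultiplicity lam = 1) ∧
      (1 < k → ∃ C : Fin n → ZMod k,
        Function.Surjective C ∧
        ∀ i j, 0 < P i j → C j = C i + 1) := by
  have hP : P ∈ rowStochastic ℝ (Fin n) := mem_rowStochastic_iff_sum.mpr ⟨hpos, hrow⟩
  have hP_irr : P.IsIrreducible := (isIrreducible_iff_exists_pow_pos hpos).mpr hirr
  have : Nonempty (Fin n) := ⟨⟨0, hn⟩⟩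
  have := hP_irr.finite_phaseShiftSubgroup hP
  set k := Nat.card (phaseShiftSubgroup P)
  have : NeZero k := ⟨Nat.card_pos.ne'⟩
  have hroots (μ : ℂ) := hP_irr.unimodular_isRoot_charpoly_iff hP (μ := μ)
  refine ⟨k, Nat.card_pos, ?_, Set.ext hroots, fun μ hμ => ?_, fun _ => ?_⟩
  · simpa using hP_irr.natCard_phaseShiftSubgroup_le hP
  · exact hP_irr.rootMultiplicity_charpoly_eq_one hP ((hroots μ).mpr hμ).1 ((hroots μ).mpr hμ).2
  · have hζ := Complex.isPrimitiveRoot_exp k (NeZero.ne k)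
    obtain ⟨hζ1, hζroot⟩ := (hroots _).mpr hζ.pow_eq_one
    obtain ⟨w, hw1, hw⟩ := hP_irr.exists_phase_vector hP hζ1 hζroot
    exact hP_irr.exists_cyclic_classes hP hζ hw1 hw
end
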